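/- arXiv:2004.09993 — 5 statements merged into one kernel-verified Lean document; each statement's English description precedes it below -/
import Mathlib

section
/- Let A, B be n-by-n complex matrices and let p > 2. Then for every k = 1, 2, ..., n, the k-th root of the product of the k smallest eigenvalues of (|A|^p + |B|^p)/2 is at least the k-th root of the product of the k smallest eigenvalues of |(A+B)/2|^p plus the k-th root of the product of the k smallest eigenvalues of |(A-B)/2|^p. -/
open Matrix
open scoped ComplexOrder

/-- `|A|^p = (AᴴA)^{p/2}`, defined via the continuous functional calculus
(`x ^ (p/2)` is the real power `Real.rpow`). -/
noncomputable def Matrix.absRpow {n : ℕ} (A : Matrix (Fin n) (Fin n) ℂ) (p : ℝ) :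
    Matrix (Fin n) (Fin n) ℂ :=
  cfc (fun x : ℝ => x ^ (p / 2)) (Aᴴ * A)

lemma Matrix.absRpow_isHermitian {n : ℕ} (A : Matrix (Fin n) (Fin n) ℂ) (p : ℝ) :
    (Matrix.absRpow A p).IsHermitian :=
  cfc_predicate _ _

lemma Matrix.IsHermitian.smul_half {n : ℕ} {M : Matrix (Fin n) (Fin n) ℂ}
    (hM : M.IsHermitian) : ((2:ℂ)⁻¹ • M).IsHermitian := by
  unfold Matrix.IsHermitian
  rw [Matrix.conjTranspose_smul, hM.eq]
  norm_num

/-- The eigenvalues of a Hermitian matrix arranged in nondecreasing order: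
`eigAsc hA i` is `λ_{i+1}^↑(A)`. -/
noncomputable def eigAsc {n : ℕ} {A : Matrix (Fin n) (Fin n) ℂ} (hA : A.IsHermitian) :
    Fin n → ℝ :=
  hA.eigenvalues ∘ (Tuple.sort hA.eigenvalues)

/-- The eigenvalues of a Hermitian matrix arranged in nonincreasing order:
`eigDesc hA i` is `λ_{i+1}^↓(A)`. -/
noncomputable def eigDesc {n : ℕ} {A : Matrix (Fin n) (Fin n) ℂ} (hA : A.IsHermitian) :
    Fin n → ℝ :=
  fun i => eigAsc hA i.rev

namespace CGM

variable {n m k : ℕ}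

/-- real quadratic form -/
noncomputable def qf (M : Matrix (Fin n) (Fin n) ℂ) (u : Fin n → ℂ) : ℝ :=
  (star u ⬝ᵥ (M *ᵥ u)).re

/-- squared norm -/
noncomputable def sn (u : Fin n → ℂ) : ℝ := (star u ⬝ᵥ u).re

lemma sn_eq_sum (u : Fin n → ℂ) : sn u = ∑ i, Complex.normSq (u i) := by
  simp [sn, dotProduct, Complex.mul_conj', Pi.star_apply, Complex.normSq_apply]

lemma sn_nonneg (u : Fin n → ℂ) : 0 ≤ sn u := by
  rw [sn_eq_sum]; exact Finset.sum_nonneg fun i _ => Complex.normSq_nonneg _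

lemma sn_pos {u : Fin n → ℂ} (hu : u ≠ 0) : 0 < sn u := by
  rcases Function.ne_iff.1 hu with ⟨i, hi⟩
  rw [sn_eq_sum]
  refine Finset.sum_pos' (fun j _ => Complex.normSq_nonneg _) ⟨i, Finset.mem_univ i, ?_⟩
  simpa [Complex.normSq_pos] using hi

lemma qf_conj (M : Matrix (Fin n) (Fin n) ℂ) (V : Matrix (Fin n) (Fin m) ℂ)
    (x : Fin m → ℂ) : qf M (V *ᵥ x) = (star x ⬝ᵥ ((Vᴴ * M * V) *ᵥ x)).re := by
  simp [qf, star_mulVec, dotProduct_mulVec, vecMul_vecMul, Matrix.mul_assoc]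

lemma sn_conj (V : Matrix (Fin n) (Fin m) ℂ) (x : Fin m → ℂ) :
    sn (V *ᵥ x) = (star x ⬝ᵥ ((Vᴴ * V) *ᵥ x)).re := by
  simp [sn, star_mulVec, dotProduct_mulVec, vecMul_vecMul]

lemma sn_isometry {V : Matrix (Fin n) (Fin m) ℂ} (hV : Vᴴ * V = 1) (x : Fin m → ℂ) :
    sn (V *ᵥ x) = sn x := by
  rw [sn_conj, hV, one_mulVec, sn]

lemma mulVec_inj {V : Matrix (Fin n) (Fin m) ℂ} (hV : Vᴴ * V = 1) {x : Fin m → ℂ}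
    (hx : V *ᵥ x = 0) : x = 0 := by
  have : (Vᴴ * V) *ᵥ x = 0 := by rw [← mulVec_mulVec, hx, mulVec_zero]
  rwa [hV, one_mulVec] at this

lemma qf_diagonal (d : Fin n → ℝ) (x : Fin n → ℂ) :
    qf (diagonal fun i => (d i : ℂ)) x = ∑ i, d i * Complex.normSq (x i) := by
  simp only [qf, dotProduct, mulVec_diagonal, Pi.star_apply, Complex.re_sum]
  congr 1; ext i
  have : star (x i) * ((d i : ℂ) * x i) = (d i : ℂ) * ((x i) * star (x i)) := by ring
  rw [this, Complex.star_def, Complex.mul_conj]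
  norm_cast


-- scaling

lemma qf_smul_real (M : Matrix (Fin n) (Fin n) ℂ) (r : ℝ) (u : Fin n → ℂ) :
    qf M ((r : ℂ) • u) = r ^ 2 * qf M u := by
  simp only [qf, mulVec_smul, star_smul, smul_dotProduct, dotProduct_smul, smul_eq_mul,
    Complex.star_def, Complex.conj_ofReal]
  rw [← mul_assoc, ← Complex.ofReal_mul, Complex.re_ofReal_mul, ← sq]

lemma sn_smul_real (r : ℝ) (u : Fin n → ℂ) : sn ((r : ℂ) • u) = r ^ 2 * sn u := by
  simp only [sn, star_smul, smul_dotProduct, dotProduct_smul, smul_eq_mul,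
    Complex.star_def, Complex.conj_ofReal]
  rw [← mul_assoc, ← Complex.ofReal_mul, Complex.re_ofReal_mul, ← sq]

lemma qf_add (M N : Matrix (Fin n) (Fin n) ℂ) (u : Fin n → ℂ) :
    qf (M + N) u = qf M u + qf N u := by
  simp [qf, add_mulVec, dotProduct_add]

lemma qf_smul_matrix (M : Matrix (Fin n) (Fin n) ℂ) (r : ℝ) (u : Fin n → ℂ) :
    qf ((r : ℂ) • M) u = r * qf M u := by
  simp only [qf, smul_mulVec, dotProduct_smul, smul_eq_mul]
  rw [Complex.re_ofReal_mul]

lemma qf_nonneg_of_posSemidef {M : Matrix (Fin n) (Fin n) ℂ} (hM : M.PosSemidef)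
    (u : Fin n → ℂ) : 0 ≤ qf M u := by
  have := hM.dotProduct_mulVec_nonneg u
  rw [Complex.le_def] at this
  simpa [qf] using this.1

/-- selection matrix built from a family of vectors -/
def Wsel (w : Fin n → Fin n → ℂ) (ι : Fin m → Fin n) : Matrix (Fin n) (Fin m) ℂ :=
  Matrix.of fun r i => w (ι i) r

/-- an orthonormal family of eigenvectors -/
structure OrthoEig (M : Matrix (Fin n) (Fin n) ℂ) (w : Fin n → Fin n → ℂ)
    (b : Fin n → ℝ) : Prop where
  orth : ∀ i j, star (w i) ⬝ᵥ w j = if i = j then 1 else 0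
  eig : ∀ i, M *ᵥ w i = (b i : ℂ) • w i

lemma OrthoEig.one {w : Fin n → Fin n → ℂ}
    (horth : ∀ i j, star (w i) ⬝ᵥ w j = if i = j then 1 else 0) :
    OrthoEig (1 : Matrix (Fin n) (Fin n) ℂ) w (fun _ => 1) :=
  ⟨horth, fun i => by simp⟩

lemma Wsel_conj_mul {M : Matrix (Fin n) (Fin n) ℂ} {w : Fin n → Fin n → ℂ} {b : Fin n → ℝ}
    (h : OrthoEig M w b) {ι : Fin m → Fin n} (hι : Function.Injective ι) :
    (Wsel w ι)ᴴ * M * (Wsel w ι) = diagonal fun i => (b (ι i) : ℂ) := by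
  ext i j
  rw [Matrix.mul_assoc]
  have hcol : ∀ r, (M * Wsel w ι) r j = (b (ι j) : ℂ) * w (ι j) r := by
    intro r
    have : (M * Wsel w ι) r j = (M *ᵥ w (ι j)) r := by
      simp [Matrix.mul_apply, mulVec, Wsel, dotProduct]
    rw [this, h.eig]
    simp
  have : ((Wsel w ι)ᴴ * (M * Wsel w ι)) i j
      = (b (ι j) : ℂ) * (star (w (ι i)) ⬝ᵥ w (ι j)) := by
    rw [Matrix.mul_apply, dotProduct, Finset.mul_sum]
    refine Finset.sum_congr rfl fun r _ => ?_
    rw [conjTranspose_apply, hcol r]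
    simp only [Wsel, of_apply, Pi.star_apply]
    ring
  rw [this, h.orth]
  by_cases hij : i = j
  · simp [hij, diagonal]
  · have : ¬ (ι i = ι j) := fun hc => hij (hι hc)
    simp [this, diagonal, hij]

lemma Wsel_conj_one {w : Fin n → Fin n → ℂ}
    (horth : ∀ i j, star (w i) ⬝ᵥ w j = if i = j then 1 else 0)
    {ι : Fin m → Fin n} (hι : Function.Injective ι) :
    (Wsel w ι)ᴴ * (Wsel w ι) = 1 := by
  have := Wsel_conj_mul (OrthoEig.one horth) hι (M := (1 : Matrix (Fin n) (Fin n) ℂ))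
  rw [Matrix.mul_one] at this
  simpa using this


lemma qf_Wsel {M : Matrix (Fin n) (Fin n) ℂ} {w : Fin n → Fin n → ℂ} {b : Fin n → ℝ}
    (h : OrthoEig M w b) {ι : Fin m → Fin n} (hι : Function.Injective ι) (x : Fin m → ℂ) :
    qf M (Wsel w ι *ᵥ x) = ∑ i, b (ι i) * Complex.normSq (x i) := by
  rw [qf_conj, Wsel_conj_mul h hι, ← qf_diagonal (fun i => b (ι i)) x, qf]

lemma sn_Wsel {w : Fin n → Fin n → ℂ}
    (horth : ∀ i j, star (w i) ⬝ᵥ w j = if i = j then 1 else 0)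
    {ι : Fin m → Fin n} (hι : Function.Injective ι) (x : Fin m → ℂ) :
    sn (Wsel w ι *ᵥ x) = sn x := sn_isometry (Wsel_conj_one horth hι) x

lemma qf_Wsel_le {M : Matrix (Fin n) (Fin n) ℂ} {w : Fin n → Fin n → ℂ} {b : Fin n → ℝ}
    (h : OrthoEig M w b) {ι : Fin m → Fin n} (hι : Function.Injective ι) (x : Fin m → ℂ)
    {c : ℝ} (hc : ∀ i, b (ι i) ≤ c) :
    qf M (Wsel w ι *ᵥ x) ≤ c * sn x := by
  rw [qf_Wsel h hι, sn_eq_sum, Finset.mul_sum]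
  exact Finset.sum_le_sum fun i _ =>
    mul_le_mul_of_nonneg_right (hc i) (Complex.normSq_nonneg _)

lemma le_qf_Wsel {M : Matrix (Fin n) (Fin n) ℂ} {w : Fin n → Fin n → ℂ} {b : Fin n → ℝ}
    (h : OrthoEig M w b) {ι : Fin m → Fin n} (hι : Function.Injective ι) (x : Fin m → ℂ)
    {c : ℝ} (hc : ∀ i, c ≤ b (ι i)) :
    c * sn x ≤ qf M (Wsel w ι *ᵥ x) := by
  rw [qf_Wsel h hι, sn_eq_sum, Finset.mul_sum]
  exact Finset.sum_le_sum fun i _ =>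
    mul_le_mul_of_nonneg_right (hc i) (Complex.normSq_nonneg _)

/-- dimension counting: two injective column matrices with more than `n` total columns
have intersecting ranges. -/
lemma exists_common_vec {m₁ m₂ : ℕ} (W₁ : Matrix (Fin n) (Fin m₁) ℂ)
    (W₂ : Matrix (Fin n) (Fin m₂) ℂ) (hcard : n < m₁ + m₂)
    (h₁ : ∀ x, W₁ *ᵥ x = 0 → x = 0) (h₂ : ∀ y, W₂ *ᵥ y = 0 → y = 0) :
    ∃ x y, W₁ *ᵥ x = W₂ *ᵥ y ∧ x ≠ 0 := by
  set W := Matrix.fromCols W₁ (-W₂)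
  have hnotinj : ¬ Function.Injective W.mulVecLin := by
    intro hinj
    have := LinearMap.finrank_le_finrank_of_injective hinj
    simp only [Module.finrank_fintype_fun_eq_card, Fintype.card_sum, Fintype.card_fin] at this
    omega
  rw [injective_iff_map_eq_zero'] at hnotinj
  push_neg at hnotinj
  obtain ⟨z, hz⟩ := hnotinj
  rcases hz with ⟨hzne, hz0⟩ | ⟨hne, hz0⟩
  swap
  · exact absurd (by rw [hz0]; simp) hne
  replace hzne : W *ᵥ z = 0 := hzne
  set x := z ∘ Sum.inl with hx
  set y := z ∘ Sum.inr with hy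
  have hzelim : z = Sum.elim x y := by ext (i|i) <;> rfl
  have hW : W *ᵥ z = W₁ *ᵥ x + (-W₂) *ᵥ y := by
    rw [hzelim]
    exact Matrix.fromCols_mulVec_sumElim _ _ _ _
  have heq : W₁ *ᵥ x = W₂ *ᵥ y := by
    have : W *ᵥ z = 0 := hzne
    rw [hW] at this
    have := eq_neg_of_add_eq_zero_left this
    rw [neg_mulVec] at this
    simpa using this
  refine ⟨x, y, heq, ?_⟩
  intro hx0
  apply hz0
  have hy0 : y = 0 := h₂ y (by rw [← heq, hx0, mulVec_zero])
  rw [hzelim, hx0, hy0]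
  ext (i|i) <;> simp


/-- sorted eigenvector family -/
noncomputable def sw {M : Matrix (Fin n) (Fin n) ℂ} (hM : M.IsHermitian) :
    Fin n → Fin n → ℂ :=
  fun i => ⇑(hM.eigenvectorBasis (Tuple.sort hM.eigenvalues i))

lemma evec_orth {M : Matrix (Fin n) (Fin n) ℂ} (hM : M.IsHermitian) (s t : Fin n) :
    star ⇑(hM.eigenvectorBasis s) ⬝ᵥ ⇑(hM.eigenvectorBasis t)
      = if s = t then 1 else 0 := by
  have horth := hM.eigenvectorBasis.orthonormal
  rw [orthonormal_iff_ite] at horth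
  have := horth s t
  rw [EuclideanSpace.inner_eq_star_dotProduct] at this
  rwa [dotProduct_comm] at this
  
lemma orthoEig_sw {M : Matrix (Fin n) (Fin n) ℂ} (hM : M.IsHermitian) :
    OrthoEig M (sw hM) (eigAsc hM) := by
  constructor
  · intro i j
    rw [sw, sw, evec_orth hM]
    have : (Tuple.sort hM.eigenvalues) i = (Tuple.sort hM.eigenvalues) j ↔ i = j :=
      (Equiv.apply_eq_iff_eq _)
    simp only [this]
  · intro i
    have := hM.mulVec_eigenvectorBasis (Tuple.sort hM.eigenvalues i)
    rw [sw, eigAsc]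
    simp only [Function.comp_apply]
    rw [this]
    ext r
    simp [Complex.real_smul]

lemma eigAsc_monotone {M : Matrix (Fin n) (Fin n) ℂ} (hM : M.IsHermitian) :
    Monotone (eigAsc hM) := Tuple.monotone_sort hM.eigenvalues

/-- index maps -/
def ιlo (j k : ℕ) (hjk : j < k) : Fin (j + 1) → Fin k := fun i => ⟨i, by omega⟩
def ιhi (j n : ℕ) (hjn : j < n) : Fin (n - j) → Fin n := fun i => ⟨j + i, by omega⟩

lemma ιlo_inj {j k : ℕ} (hjk : j < k) : Function.Injective (ιlo j k hjk) := by
  intro a b hab; ext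
  simpa [ιlo, Fin.ext_iff] using hab

lemma ιhi_inj {j n : ℕ} (hjn : j < n) : Function.Injective (ιhi j n hjn) := by
  intro a b hab; ext
  simpa [ιhi, Fin.ext_iff] using hab

/-- Central comparison: if two monotone orthonormal eigensystems for matrices `M M'` are
linked through quadratic-form comparison, compare sorted eigenvalues.  Here we prove the
core special case `M' = M`: any monotone orthonormal eigensystem computes `eigAsc`. -/
lemma orthoEig_le {M : Matrix (Fin n) (Fin n) ℂ} {w w' : Fin n → Fin n → ℂ}
    {b b' : Fin n → ℝ} (h : OrthoEig M w b) (h' : OrthoEig M w' b')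
    (hb : Monotone b) (hb' : Monotone b') (j : Fin n) : b j ≤ b' j := by
  -- intersect the high space of (w,b) with the low space of (w',b')
  have hjn : (j : ℕ) < n := j.isLt
  set W₁ := Wsel w (ιhi j n hjn)
  set W₂ := Wsel w' (ιlo j n hjn)
  obtain ⟨x, y, hxy, hx0⟩ := exists_common_vec W₁ W₂ (by omega)
    (fun x hx => mulVec_inj (Wsel_conj_one h.orth (ιhi_inj hjn)) hx)
    (fun y hy => mulVec_inj (Wsel_conj_one h'.orth (ιlo_inj hjn)) hy)
  have hsn : sn x = sn (W₁ *ᵥ x) := (sn_Wsel h.orth (ιhi_inj hjn) x).symm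
  have hsnpos : 0 < sn x := sn_pos hx0
  have hlow : qf M (W₁ *ᵥ x) ≥ b j * sn x := by
    refine le_qf_Wsel h (ιhi_inj hjn) x fun i => ?_
    exact hb (by simp [ιhi, Fin.le_def])
  have hup : qf M (W₂ *ᵥ y) ≤ b' j * sn y := by
    refine qf_Wsel_le h' (ιlo_inj hjn) y fun i => ?_
    exact hb' (by simp [ιlo, Fin.le_def]; omega)
  have hsny : sn y = sn x := by
    have h1 : sn (W₂ *ᵥ y) = sn y := sn_Wsel h'.orth (ιlo_inj hjn) y
    have h2 : sn (W₁ *ᵥ x) = sn x := sn_Wsel h.orth (ιhi_inj hjn) x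
    rw [← h1, ← hxy, h2]
  have : b j * sn x ≤ b' j * sn x := by
    calc b j * sn x ≤ qf M (W₁ *ᵥ x) := hlow
    _ = qf M (W₂ *ᵥ y) := by rw [hxy]
    _ ≤ b' j * sn y := hup
    _ = b' j * sn x := by rw [hsny]
  exact le_of_mul_le_mul_right this hsnpos

/-- any monotone orthonormal eigensystem gives exactly the sorted eigenvalues -/
lemma eigAsc_eq_of_orthoEig {M : Matrix (Fin n) (Fin n) ℂ} (hM : M.IsHermitian)
    {w : Fin n → Fin n → ℂ} {b : Fin n → ℝ} (h : OrthoEig M w b) (hb : Monotone b) :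
    eigAsc hM = b := by
  funext j
  exact le_antisymm (orthoEig_le (orthoEig_sw hM) h (eigAsc_monotone hM) hb j)
    (orthoEig_le h (orthoEig_sw hM) hb (eigAsc_monotone hM) j)


/-- Cauchy interlacing, one direction: compression by an isometry raises the
`j`-th smallest eigenvalue. -/
lemma eigAsc_le_compression {M : Matrix (Fin n) (Fin n) ℂ} (hM : M.IsHermitian)
    (V : Matrix (Fin n) (Fin k) ℂ) (hV : Vᴴ * V = 1)
    (hM' : (Vᴴ * M * V).IsHermitian) (j : Fin k) (hjn : (j : ℕ) < n) :
    eigAsc hM ⟨j, hjn⟩ ≤ eigAsc hM' j := by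
  set M' := Vᴴ * M * V with hM'def
  have hjk : (j : ℕ) < k := j.isLt
  set Wlo := Wsel (sw hM') (ιlo j k hjk)
  set W₂ := Wsel (sw hM) (ιhi j n hjn)
  have hWloinj : ∀ x, Wlo *ᵥ x = 0 → x = 0 :=
    fun x hx => mulVec_inj (Wsel_conj_one (orthoEig_sw hM').orth (ιlo_inj hjk)) hx
  have hVinj : ∀ u, V *ᵥ u = 0 → u = 0 := fun u hu => mulVec_inj hV hu
  obtain ⟨x, y, hxy, hx0⟩ := exists_common_vec (V * Wlo) W₂ (by omega)
    (fun x hx => by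
      rw [← mulVec_mulVec] at hx
      exact hWloinj x (hVinj _ hx))
    (fun y hy => mulVec_inj (Wsel_conj_one (orthoEig_sw hM).orth (ιhi_inj hjn)) hy)
  set u := Wlo *ᵥ x with hu
  have hVu : V *ᵥ u = W₂ *ᵥ y := by rw [hu, mulVec_mulVec, hxy]
  have hsnu : sn u = sn x := sn_Wsel (orthoEig_sw hM').orth (ιlo_inj hjk) x
  have hsnVu : sn (V *ᵥ u) = sn u := sn_isometry hV u
  have hsny : sn y = sn x := by
    have h2 : sn (W₂ *ᵥ y) = sn y := sn_Wsel (orthoEig_sw hM).orth (ιhi_inj hjn) y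
    rw [← h2, ← hVu, hsnVu, hsnu]
  have hlow : eigAsc hM ⟨j, hjn⟩ * sn y ≤ qf M (W₂ *ᵥ y) := by
    refine le_qf_Wsel (orthoEig_sw hM) (ιhi_inj hjn) y fun i => ?_
    exact eigAsc_monotone hM (by simp [ιhi, Fin.le_def])
  have hup : qf M' u ≤ eigAsc hM' j * sn x := by
    refine qf_Wsel_le (orthoEig_sw hM') (ιlo_inj hjk) x fun i => ?_
    exact eigAsc_monotone hM' (by simp [ιlo, Fin.le_def]; omega)
  have hqf : qf M (V *ᵥ u) = qf M' u := by
    rw [hu, qf_conj, ← hM'def, qf]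
  have hsnpos : 0 < sn x := sn_pos hx0
  have : eigAsc hM ⟨j, hjn⟩ * sn x ≤ eigAsc hM' j * sn x := by
    calc eigAsc hM ⟨j, hjn⟩ * sn x = eigAsc hM ⟨j, hjn⟩ * sn y := by rw [hsny]
    _ ≤ qf M (W₂ *ᵥ y) := hlow
    _ = qf M (V *ᵥ u) := by rw [hVu]
    _ = qf M' u := hqf
    _ ≤ eigAsc hM' j * sn x := hup
  exact le_of_mul_le_mul_right this hsnpos

/-- comparison of sorted eigenvalues through pointwise quadratic-form domination -/
lemma eigAsc_qf_compare {M₁ M₂ : Matrix (Fin n) (Fin n) ℂ}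
    (hM₁ : M₁.IsHermitian) (hM₂ : M₂.IsHermitian) (φ : ℝ → ℝ) (hφ : Monotone φ)
    (H : ∀ u, sn u = 1 → φ (qf M₂ u) ≤ qf M₁ u) (j : Fin n) :
    φ (eigAsc hM₂ j) ≤ eigAsc hM₁ j := by
  have hjn : (j : ℕ) < n := j.isLt
  set W₁ := Wsel (sw hM₁) (ιlo j n hjn)
  set W₂ := Wsel (sw hM₂) (ιhi j n hjn)
  obtain ⟨x, y, hxy, hx0⟩ := exists_common_vec W₁ W₂ (by omega)
    (fun x hx => mulVec_inj (Wsel_conj_one (orthoEig_sw hM₁).orth (ιlo_inj hjn)) hx)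
    (fun y hy => mulVec_inj (Wsel_conj_one (orthoEig_sw hM₂).orth (ιhi_inj hjn)) hy)
  set u := W₁ *ᵥ x with hu
  have hsnu : sn u = sn x := sn_Wsel (orthoEig_sw hM₁).orth (ιlo_inj hjn) x
  have hsnx : 0 < sn x := sn_pos hx0
  have hsnupos : 0 < sn u := hsnu ▸ hsnx
  have hsny : sn y = sn x := by
    have h2 : sn (W₂ *ᵥ y) = sn y := sn_Wsel (orthoEig_sw hM₂).orth (ιhi_inj hjn) y
    rw [← h2, ← hxy, hsnu]
  -- normalize
  set r : ℝ := (Real.sqrt (sn u))⁻¹ with hr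
  have hrsq : r ^ 2 = (sn u)⁻¹ := by
    rw [hr, inv_pow, Real.sq_sqrt hsnupos.le]
  set v := (r : ℂ) • u with hv
  have hsnv : sn v = 1 := by
    rw [hv, sn_smul_real, hrsq, inv_mul_cancel₀ hsnupos.ne']
  have hq1 : qf M₁ v = (sn u)⁻¹ * qf M₁ u := by rw [hv, qf_smul_real, hrsq]
  have hq2 : qf M₂ v = (sn u)⁻¹ * qf M₂ u := by rw [hv, qf_smul_real, hrsq]
  have hub : qf M₁ u ≤ eigAsc hM₁ j * sn x := by
    refine qf_Wsel_le (orthoEig_sw hM₁) (ιlo_inj hjn) x fun i => ?_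
    exact eigAsc_monotone hM₁ (by simp [ιlo, Fin.le_def]; omega)
  have hlb : eigAsc hM₂ j * sn y ≤ qf M₂ u := by
    rw [hxy]
    refine le_qf_Wsel (orthoEig_sw hM₂) (ιhi_inj hjn) y fun i => ?_
    exact eigAsc_monotone hM₂ (by simp [ιhi, Fin.le_def])
  have hv1 : qf M₁ v ≤ eigAsc hM₁ j := by
    rw [hq1, hsnu]
    rw [inv_mul_le_iff₀ hsnx]
    calc qf M₁ u ≤ eigAsc hM₁ j * sn x := hub
    _ ≤ sn x * eigAsc hM₁ j := by rw [mul_comm]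
  have hv2 : eigAsc hM₂ j ≤ qf M₂ v := by
    rw [hq2, hsnu, le_inv_mul_iff₀ hsnx]
    calc sn x * eigAsc hM₂ j = eigAsc hM₂ j * sn y := by rw [mul_comm, hsny]
    _ ≤ qf M₂ u := hlb
  calc φ (eigAsc hM₂ j) ≤ φ (qf M₂ v) := hφ hv2
  _ ≤ qf M₁ v := H v hsnv
  _ ≤ eigAsc hM₁ j := hv1


lemma eigAsc_congr {M M' : Matrix (Fin n) (Fin n) ℂ} (h : M = M')
    (hM : M.IsHermitian) (hM' : M'.IsHermitian) : eigAsc hM = eigAsc hM' := by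
  subst h; rfl

lemma eigAsc_nonneg {M : Matrix (Fin n) (Fin n) ℂ} (hM : M.PosSemidef) (i : Fin n) :
    0 ≤ eigAsc hM.1 i := hM.eigenvalues_nonneg _

lemma cfc_mulVec_eigenvector {X : Matrix (Fin n) (Fin n) ℂ} (hX : X.IsHermitian)
    (f : ℝ → ℝ) (t : Fin n) :
    (cfc f X) *ᵥ ⇑(hX.eigenvectorBasis t)
      = ((f (hX.eigenvalues t) : ℝ) : ℂ) • ⇑(hX.eigenvectorBasis t) := by
  rw [hX.cfc_eq, Matrix.IsHermitian.cfc, Unitary.conjStarAlgAut_apply]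
  rw [← mulVec_mulVec, ← mulVec_mulVec, hX.star_eigenvectorUnitary_mulVec]
  have hdiag : (diagonal (RCLike.ofReal ∘ f ∘ hX.eigenvalues) : Matrix (Fin n) (Fin n) ℂ)
      *ᵥ Pi.single t 1 = Pi.single t ((f (hX.eigenvalues t) : ℂ)) := by
    rw [Matrix.diagonal_mulVec_single]
    simp
  rw [hdiag]
  have hsingle : (Pi.single t ((f (hX.eigenvalues t) : ℂ)) : Fin n → ℂ)
      = ((f (hX.eigenvalues t) : ℂ)) • (Pi.single t 1 : Fin n → ℂ) := by
    ext r
    by_cases hr : r = t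
    · subst hr; simp
    · simp [Pi.single_eq_of_ne hr]
  rw [hsingle, mulVec_smul, hX.eigenvectorUnitary_mulVec]

lemma orthoEig_cfc {X : Matrix (Fin n) (Fin n) ℂ} (hX : X.IsHermitian) (f : ℝ → ℝ) :
    OrthoEig (cfc f X) (sw hX) (fun i => f (eigAsc hX i)) := by
  refine ⟨(orthoEig_sw hX).orth, fun i => ?_⟩
  exact cfc_mulVec_eigenvector hX f (Tuple.sort hX.eigenvalues i)

lemma eigAsc_cfc {X : Matrix (Fin n) (Fin n) ℂ} (hX : X.IsHermitian) (f : ℝ → ℝ)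
    (hcfc : (cfc f X).IsHermitian) (hb : Monotone fun i => f (eigAsc hX i)) :
    eigAsc hcfc = fun i => f (eigAsc hX i) :=
  eigAsc_eq_of_orthoEig hcfc (orthoEig_cfc hX f) hb

/-- decomposition of a vector in the sorted eigenbasis, and the two quadratic forms -/
lemma qf_decomp {X : Matrix (Fin n) (Fin n) ℂ} (hX : X.IsHermitian) (f : ℝ → ℝ)
    (u : Fin n → ℂ) :
    ∃ ω : Fin n → ℝ, (∀ i, 0 ≤ ω i) ∧ (∑ i, ω i = sn u) ∧
      (qf X u = ∑ i, (eigAsc hX i) * ω i) ∧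
      (qf (cfc f X) u = ∑ i, f (eigAsc hX i) * ω i) := by
  set W := Wsel (sw hX) (id : Fin n → Fin n) with hW
  have hWone : Wᴴ * W = 1 := Wsel_conj_one (orthoEig_sw hX).orth Function.injective_id
  have hWWh : W * Wᴴ = 1 := mul_eq_one_comm.mp hWone
  set x := Wᴴ *ᵥ u with hx
  have hu : u = W *ᵥ x := by
    rw [hx, mulVec_mulVec, hWWh, one_mulVec]
  refine ⟨fun i => Complex.normSq (x i), fun i => Complex.normSq_nonneg _, ?_, ?_, ?_⟩
  · rw [hu, sn_Wsel (orthoEig_sw hX).orth Function.injective_id, sn_eq_sum]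
  · rw [hu, qf_Wsel (orthoEig_sw hX) Function.injective_id]
    simp
  · rw [hu, qf_Wsel (orthoEig_cfc hX f) Function.injective_id]
    simp

lemma jensen_rpow {X : Matrix (Fin n) (Fin n) ℂ} (hX : X.PosSemidef) {q : ℝ} (hq : 1 ≤ q)
    (u : Fin n → ℂ) (hu : sn u = 1) :
    (qf X u) ^ q ≤ qf (cfc (fun x : ℝ => x ^ q) X) u := by
  obtain ⟨ω, hω0, hωsum, hqf, hqfc⟩ := qf_decomp hX.1 (fun x : ℝ => x ^ q) u
  rw [hqf, hqfc]
  have := Real.rpow_arith_mean_le_arith_mean_rpow Finset.univ ω (fun i => eigAsc hX.1 i)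
    (fun i _ => hω0 i) (by rw [hωsum, hu]) (fun i _ => eigAsc_nonneg hX i) hq
  calc (∑ i, eigAsc hX.1 i * ω i) ^ q = (∑ i, ω i * eigAsc hX.1 i) ^ q := by
        simp_rw [mul_comm]
  _ ≤ ∑ i, ω i * (eigAsc hX.1 i) ^ q := this
  _ = ∑ i, (eigAsc hX.1 i) ^ q * ω i := by simp_rw [mul_comm]


lemma prod_eigAsc_eq_det {M : Matrix (Fin n) (Fin n) ℂ} (hM : M.IsHermitian) :
    ((∏ i, eigAsc hM i : ℝ) : ℂ) = det M := by
  have h1 : ∏ i, eigAsc hM i = ∏ i, hM.eigenvalues i := by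
    rw [eigAsc]
    exact Equiv.prod_comp (Tuple.sort hM.eigenvalues) hM.eigenvalues
  rw [h1, hM.det_eq_prod_eigenvalues]
  push_cast
  rfl

lemma prod_eigAsc_nonneg {M : Matrix (Fin n) (Fin n) ℂ} (hM : M.PosSemidef) :
    0 ≤ ∏ i, eigAsc hM.1 i :=
  Finset.prod_nonneg fun i _ => eigAsc_nonneg hM i

/-- scalar superadditivity of the geometric mean against `1` -/
lemma gm_one_add {ν : Fin k → ℝ} (hν : ∀ i, 0 ≤ ν i) (hk : 0 < k) :
    1 + (∏ i, ν i) ^ ((k : ℝ)⁻¹) ≤ (∏ i, (1 + ν i)) ^ ((k : ℝ)⁻¹) := by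
  have h1ν : ∀ i, (0:ℝ) < 1 + ν i := fun i => by have := hν i; linarith
  have hT : (0:ℝ) < ∏ i, (1 + ν i) := Finset.prod_pos fun i _ => h1ν i
  set Tp := (∏ i, (1 + ν i)) ^ ((k : ℝ)⁻¹) with hTp
  have hTppos : 0 < Tp := Real.rpow_pos_of_pos hT _
  have hwsum : ∑ _i : Fin k, (k : ℝ)⁻¹ = 1 := by
    rw [Finset.sum_const, Finset.card_univ, Fintype.card_fin, nsmul_eq_mul,
      mul_inv_cancel₀ (Nat.cast_ne_zero.mpr hk.ne' : (k:ℝ) ≠ 0)]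
  have hknn : (0:ℝ) ≤ (k : ℝ)⁻¹ := by positivity
  have ham1 := Real.geom_mean_le_arith_mean_weighted Finset.univ (fun _ => (k : ℝ)⁻¹)
    (fun i => (1 + ν i)⁻¹) (fun i _ => hknn) hwsum (fun i _ => inv_nonneg.mpr (h1ν i).le)
  have ham2 := Real.geom_mean_le_arith_mean_weighted Finset.univ (fun _ => (k : ℝ)⁻¹)
    (fun i => ν i / (1 + ν i)) (fun i _ => hknn) hwsum
    (fun i _ => div_nonneg (hν i) (h1ν i).le)
  have hG1 : ∏ i, ((1 + ν i)⁻¹) ^ ((k : ℝ)⁻¹) = Tp⁻¹ := by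
    calc ∏ i, ((1 + ν i)⁻¹) ^ ((k : ℝ)⁻¹)
        = ∏ i, ((1 + ν i) ^ ((k : ℝ)⁻¹))⁻¹ :=
          Finset.prod_congr rfl fun i _ => Real.inv_rpow (h1ν i).le _
    _ = (∏ i, (1 + ν i) ^ ((k : ℝ)⁻¹))⁻¹ := Finset.prod_inv_distrib _
    _ = Tp⁻¹ := by rw [hTp, Real.finset_prod_rpow _ _ (fun i _ => (h1ν i).le)]
  have hG2 : ∏ i, (ν i / (1 + ν i)) ^ ((k : ℝ)⁻¹) = (∏ i, ν i) ^ ((k : ℝ)⁻¹) / Tp := by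
    calc ∏ i, (ν i / (1 + ν i)) ^ ((k : ℝ)⁻¹)
        = ∏ i, (ν i ^ ((k : ℝ)⁻¹) / (1 + ν i) ^ ((k : ℝ)⁻¹)) :=
          Finset.prod_congr rfl fun i _ => Real.div_rpow (hν i) (h1ν i).le _
    _ = (∏ i, ν i ^ ((k : ℝ)⁻¹)) / (∏ i, (1 + ν i) ^ ((k : ℝ)⁻¹)) :=
          Finset.prod_div_distrib _ _
    _ = (∏ i, ν i) ^ ((k : ℝ)⁻¹) / Tp := by
          rw [hTp, Real.finset_prod_rpow _ _ (fun i _ => hν i),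
            Real.finset_prod_rpow _ _ (fun i _ => (h1ν i).le)]
  have hsum : (∑ _i : Fin k, (k:ℝ)⁻¹ * (1 + ν _i)⁻¹) + (∑ i, (k:ℝ)⁻¹ * (ν i / (1 + ν i)))
      = 1 := by
    rw [← Finset.sum_add_distrib]
    have hterm : ∀ i ∈ Finset.univ, (k:ℝ)⁻¹ * (1 + ν i)⁻¹ + (k:ℝ)⁻¹ * (ν i / (1 + ν i))
        = (k:ℝ)⁻¹ := by
      intro i _
      rw [← mul_add, inv_eq_one_div (1 + ν i), ← add_div, div_self (h1ν i).ne',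
        mul_one]
    rw [Finset.sum_congr rfl hterm, hwsum]
  have hkey : Tp⁻¹ + (∏ i, ν i) ^ ((k : ℝ)⁻¹) / Tp ≤ 1 := by
    rw [← hG1, ← hG2]
    calc _ ≤ (∑ _i : Fin k, (k:ℝ)⁻¹ * (1 + ν _i)⁻¹)
          + (∑ i, (k:ℝ)⁻¹ * (ν i / (1 + ν i))) := add_le_add ham1 ham2
    _ = 1 := hsum
  have := mul_le_mul_of_nonneg_left hkey hTppos.le
  calc 1 + (∏ i, ν i) ^ ((k : ℝ)⁻¹)
      = Tp * (Tp⁻¹ + (∏ i, ν i) ^ ((k : ℝ)⁻¹) / Tp) := by field_simp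
  _ ≤ Tp * 1 := this
  _ = Tp := mul_one Tp

open scoped MatrixOrder in
/-- Minkowski determinant inequality, nondegenerate case. -/
lemma mink_aux {P Q : Matrix (Fin k) (Fin k) ℂ} (hP : P.PosSemidef) (hQ : Q.PosSemidef)
    (hk : 0 < k) (hPne : ∏ i, eigAsc hP.1 i ≠ 0) :
    (∏ i, eigAsc hP.1 i) ^ ((k:ℝ)⁻¹) + (∏ i, eigAsc hQ.1 i) ^ ((k:ℝ)⁻¹)
      ≤ (∏ i, eigAsc (hP.1.add hQ.1) i) ^ ((k:ℝ)⁻¹) := by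
  set E := CFC.sqrt P with hEdef
  have hEE : E * E = P := CFC.sqrt_mul_sqrt_self P (Matrix.nonneg_iff_posSemidef.mpr hP)
  have hEH : E.IsHermitian := (Matrix.nonneg_iff_posSemidef.mp (CFC.sqrt_nonneg P)).1
  have hdetP : det P ≠ 0 := by
    rw [← prod_eigAsc_eq_det hP.1]
    exact_mod_cast hPne
  have hdetE : IsUnit (det E) := by
    have : det E * det E = det P := by rw [← det_mul, hEE]
    rcases eq_or_ne (det E) 0 with h | h
    · exact absurd (by rw [← this, h, zero_mul]) hdetP
    · exact h.isUnit
  have hinv1 : E * E⁻¹ = 1 := mul_nonsing_inv E hdetE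
  have hinv2 : E⁻¹ * E = 1 := nonsing_inv_mul E hdetE
  have hEinvH : (E⁻¹)ᴴ = E⁻¹ := by rw [conjTranspose_nonsing_inv, hEH.eq]
  set R := E⁻¹ * Q * E⁻¹ with hRdef
  have hR : R.PosSemidef := by
    have := hQ.conjTranspose_mul_mul_same (E⁻¹)
    rwa [hEinvH] at this
  have hERE : E * R * E = Q := by
    rw [hRdef]
    simp only [← Matrix.mul_assoc]
    rw [hinv1, Matrix.one_mul, Matrix.mul_assoc, hinv2, Matrix.mul_one]
  have hPQ : P + Q = E * (1 + R) * E := by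
    have h1 : E * (1 + R) * E = E * E + E * R * E := by noncomm_ring
    rw [h1, hEE, hERE]
  have h1RH : (1 + R).IsHermitian := isHermitian_one.add hR.1
  have eig1R : eigAsc h1RH = fun i => 1 + eigAsc hR.1 i := by
    refine eigAsc_eq_of_orthoEig h1RH ⟨(orthoEig_sw hR.1).orth, fun i => ?_⟩
      (fun i j hij => by simpa using add_le_add_left (eigAsc_monotone hR.1 hij) 1)
    rw [add_mulVec, one_mulVec, (orthoEig_sw hR.1).eig i]
    push_cast
    rw [add_smul, one_smul]
  have hν0 : ∀ i, 0 ≤ eigAsc hR.1 i := fun i => eigAsc_nonneg hR i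
  have hPdet' : det E * det E = det P := by rw [← det_mul, hEE]
  -- determinant identities, transferred to the real products
  have hdet1 : (∏ i, eigAsc (hP.1.add hQ.1) i)
      = (∏ i, eigAsc hP.1 i) * (∏ i, (1 + eigAsc hR.1 i)) := by
    have hc : ((∏ i, eigAsc (hP.1.add hQ.1) i : ℝ) : ℂ)
        = ((∏ i, eigAsc hP.1 i : ℝ) : ℂ) * ((∏ i, (1 + eigAsc hR.1 i) : ℝ) : ℂ) := by
      rw [prod_eigAsc_eq_det, prod_eigAsc_eq_det]
      have h2 : ((∏ i, (1 + eigAsc hR.1 i) : ℝ) : ℂ) = det (1 + R) := by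
        rw [← prod_eigAsc_eq_det h1RH, eig1R]
      rw [h2]
      have h3 : det (P + Q) = det E * det (1 + R) * det E := by
        rw [hPQ, det_mul, det_mul]
      rw [h3, ← hPdet']
      ring
    exact_mod_cast hc
  have hdet2 : (∏ i, eigAsc hQ.1 i)
      = (∏ i, eigAsc hP.1 i) * (∏ i, eigAsc hR.1 i) := by
    have hc : ((∏ i, eigAsc hQ.1 i : ℝ) : ℂ)
        = ((∏ i, eigAsc hP.1 i : ℝ) : ℂ) * ((∏ i, eigAsc hR.1 i : ℝ) : ℂ) := by
      rw [prod_eigAsc_eq_det, prod_eigAsc_eq_det, prod_eigAsc_eq_det]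
      have h3 : det Q = det E * det R * det E := by
        rw [← hERE, det_mul, det_mul]
      rw [h3, ← hPdet']
      ring
    exact_mod_cast hc
  -- final computation
  have hPnn : 0 ≤ ∏ i, eigAsc hP.1 i := prod_eigAsc_nonneg hP
  have hRnn : 0 ≤ ∏ i, eigAsc hR.1 i := Finset.prod_nonneg fun i _ => hν0 i
  have h1Rnn : 0 ≤ ∏ i, (1 + eigAsc hR.1 i) :=
    Finset.prod_nonneg fun i _ => by have := hν0 i; linarith
  have hgm := gm_one_add hν0 hk
  calc (∏ i, eigAsc hP.1 i) ^ ((k:ℝ)⁻¹) + (∏ i, eigAsc hQ.1 i) ^ ((k:ℝ)⁻¹)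
      = (∏ i, eigAsc hP.1 i) ^ ((k:ℝ)⁻¹)
        + ((∏ i, eigAsc hP.1 i) * ∏ i, eigAsc hR.1 i) ^ ((k:ℝ)⁻¹) := by rw [hdet2]
  _ = (∏ i, eigAsc hP.1 i) ^ ((k:ℝ)⁻¹) * (1 + (∏ i, eigAsc hR.1 i) ^ ((k:ℝ)⁻¹)) := by
        rw [Real.mul_rpow hPnn hRnn, mul_add, mul_one]
  _ ≤ (∏ i, eigAsc hP.1 i) ^ ((k:ℝ)⁻¹) * (∏ i, (1 + eigAsc hR.1 i)) ^ ((k:ℝ)⁻¹) :=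
        mul_le_mul_of_nonneg_left hgm (Real.rpow_nonneg hPnn _)
  _ = (∏ i, eigAsc (hP.1.add hQ.1) i) ^ ((k:ℝ)⁻¹) := by
        rw [← Real.mul_rpow hPnn h1Rnn, ← hdet1]

/-- Minkowski determinant inequality (in eigenvalue-product form). -/
lemma mink {P Q : Matrix (Fin k) (Fin k) ℂ} (hP : P.PosSemidef) (hQ : Q.PosSemidef)
    (hk : 0 < k) :
    (∏ i, eigAsc hP.1 i) ^ ((k:ℝ)⁻¹) + (∏ i, eigAsc hQ.1 i) ^ ((k:ℝ)⁻¹)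
      ≤ (∏ i, eigAsc (hP.1.add hQ.1) i) ^ ((k:ℝ)⁻¹) := by
  have hkinv : ((k:ℝ)⁻¹) ≠ 0 := by
    simp [Nat.cast_ne_zero.mpr hk.ne']
  by_cases hPne : ∏ i, eigAsc hP.1 i = 0
  · by_cases hQne : ∏ i, eigAsc hQ.1 i = 0
    · rw [hPne, hQne, Real.zero_rpow hkinv]
      have : (0:ℝ) ≤ ∏ i, eigAsc (hP.1.add hQ.1) i := prod_eigAsc_nonneg (hP.add hQ)
      simpa using Real.rpow_nonneg this _
    · have := mink_aux hQ hP hk hQne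
      rw [hPne, Real.zero_rpow hkinv, zero_add]
      have hcong : eigAsc (hQ.1.add hP.1) = eigAsc (hP.1.add hQ.1) :=
        eigAsc_congr (add_comm Q P) _ _
      calc (∏ i, eigAsc hQ.1 i) ^ ((k:ℝ)⁻¹)
          ≤ (∏ i, eigAsc hQ.1 i) ^ ((k:ℝ)⁻¹) + (∏ i, eigAsc hP.1 i) ^ ((k:ℝ)⁻¹) := by
            have : (0:ℝ) ≤ (∏ i, eigAsc hP.1 i) ^ ((k:ℝ)⁻¹) :=
              Real.rpow_nonneg (prod_eigAsc_nonneg hP) _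
            linarith
      _ ≤ (∏ i, eigAsc (hQ.1.add hP.1) i) ^ ((k:ℝ)⁻¹) := this
      _ = (∏ i, eigAsc (hP.1.add hQ.1) i) ^ ((k:ℝ)⁻¹) := by rw [hcong]
  · exact mink_aux hP hQ hk hPne


lemma prod_filter_eq {k : ℕ} (hkn : k ≤ n) (f : Fin n → ℝ) :
    ∏ i ∈ Finset.univ.filter (fun i : Fin n => (i : ℕ) < k), f i
      = ∏ i : Fin k, f ⟨i, lt_of_lt_of_le i.isLt hkn⟩ := by
  refine Finset.prod_bij'
    (fun (a : Fin n) (ha : a ∈ Finset.univ.filter (fun i : Fin n => (i : ℕ) < k)) =>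
      (⟨a.1, (Finset.mem_filter.mp ha).2⟩ : Fin k))
    (fun (b : Fin k) _ => (⟨b.1, lt_of_lt_of_le b.isLt hkn⟩ : Fin n))
    (fun a ha => Finset.mem_univ _)
    (fun b hb => Finset.mem_filter.mpr ⟨Finset.mem_univ _, b.isLt⟩)
    (fun a ha => rfl) (fun b hb => rfl) (fun a ha => rfl)

/-- superadditivity of the geometric mean of the `k` smallest eigenvalues -/
lemma geom_superadd {S T : Matrix (Fin n) (Fin n) ℂ} (hS : S.PosSemidef)
    (hT : T.PosSemidef) (hST : (S + T).IsHermitian) {k : ℕ} (hk : 0 < k) (hkn : k ≤ n) :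
    (∏ i ∈ Finset.univ.filter (fun i : Fin n => (i : ℕ) < k), eigAsc hS.1 i) ^ ((k:ℝ)⁻¹)
      + (∏ i ∈ Finset.univ.filter (fun i : Fin n => (i : ℕ) < k), eigAsc hT.1 i) ^ ((k:ℝ)⁻¹)
    ≤ (∏ i ∈ Finset.univ.filter (fun i : Fin n => (i : ℕ) < k), eigAsc hST i) ^ ((k:ℝ)⁻¹) := by
  set ι : Fin k → Fin n := fun i => ⟨i.1, lt_of_lt_of_le i.isLt hkn⟩ with hι
  have hιinj : Function.Injective ι := by
    intro a b hab; ext; simpa [hι, Fin.ext_iff] using hab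
  set W := Wsel (sw hST) ι with hW
  have hW1 : Wᴴ * W = 1 := Wsel_conj_one (orthoEig_sw hST).orth hιinj
  have hP : (Wᴴ * S * W).PosSemidef := hS.conjTranspose_mul_mul_same W
  have hQ : (Wᴴ * T * W).PosSemidef := hT.conjTranspose_mul_mul_same W
  have hPQdiag : Wᴴ * S * W + Wᴴ * T * W = diagonal (fun i => ((eigAsc hST (ι i) : ℝ) : ℂ)) := by
    have h1 : Wᴴ * S * W + Wᴴ * T * W = Wᴴ * (S + T) * W := by
      rw [Matrix.mul_add, Matrix.add_mul]
    rw [h1]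
    exact Wsel_conj_mul (orthoEig_sw hST) hιinj
  -- the product of the k smallest eigenvalues of S+T is the full eigen-product of P+Q
  have hprodPQ : ∏ i, eigAsc (hP.1.add hQ.1) i = ∏ i : Fin k, eigAsc hST (ι i) := by
    have hc : ((∏ i, eigAsc (hP.1.add hQ.1) i : ℝ) : ℂ)
        = ((∏ i : Fin k, eigAsc hST (ι i) : ℝ) : ℂ) := by
      rw [prod_eigAsc_eq_det, hPQdiag, det_diagonal]
      push_cast
      rfl
    exact_mod_cast hc
  have hinterS : ∏ i : Fin k, eigAsc hS.1 (ι i) ≤ ∏ i, eigAsc hP.1 i := by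
    refine Finset.prod_le_prod (fun i _ => eigAsc_nonneg hS (ι i)) fun i _ => ?_
    exact eigAsc_le_compression hS.1 W hW1 hP.1 i (lt_of_lt_of_le i.isLt hkn)
  have hinterT : ∏ i : Fin k, eigAsc hT.1 (ι i) ≤ ∏ i, eigAsc hQ.1 i := by
    refine Finset.prod_le_prod (fun i _ => eigAsc_nonneg hT (ι i)) fun i _ => ?_
    exact eigAsc_le_compression hT.1 W hW1 hQ.1 i (lt_of_lt_of_le i.isLt hkn)
  have hSnn : 0 ≤ ∏ i : Fin k, eigAsc hS.1 (ι i) :=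
    Finset.prod_nonneg fun i _ => eigAsc_nonneg hS _
  have hTnn : 0 ≤ ∏ i : Fin k, eigAsc hT.1 (ι i) :=
    Finset.prod_nonneg fun i _ => eigAsc_nonneg hT _
  rw [prod_filter_eq hkn (eigAsc hS.1), prod_filter_eq hkn (eigAsc hT.1),
    prod_filter_eq hkn (eigAsc hST)]
  calc (∏ i : Fin k, eigAsc hS.1 (ι i)) ^ ((k:ℝ)⁻¹)
        + (∏ i : Fin k, eigAsc hT.1 (ι i)) ^ ((k:ℝ)⁻¹)
      ≤ (∏ i, eigAsc hP.1 i) ^ ((k:ℝ)⁻¹) + (∏ i, eigAsc hQ.1 i) ^ ((k:ℝ)⁻¹) :=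
        add_le_add (Real.rpow_le_rpow hSnn hinterS (by positivity))
          (Real.rpow_le_rpow hTnn hinterT (by positivity))
  _ ≤ (∏ i, eigAsc (hP.1.add hQ.1) i) ^ ((k:ℝ)⁻¹) := mink hP hQ hk
  _ = (∏ i : Fin k, eigAsc hST (ι i)) ^ ((k:ℝ)⁻¹) := by rw [hprodPQ]


lemma real_add_rpow {a b q : ℝ} (ha : 0 ≤ a) (hb : 0 ≤ b) (hq : 1 ≤ q) :
    a ^ q + b ^ q ≤ (a + b) ^ q := by
  have h := NNReal.coe_le_coe.mpr (NNReal.add_rpow_le_rpow_add a.toNNReal b.toNNReal hq)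
  rwa [NNReal.coe_add, NNReal.coe_rpow, NNReal.coe_rpow, NNReal.coe_rpow, NNReal.coe_add,
    Real.coe_toNNReal a ha, Real.coe_toNNReal b hb] at h

lemma half_rpow {s t q : ℝ} (hs : 0 ≤ s) (ht : 0 ≤ t) (hq : 1 ≤ q) :
    (2⁻¹ * (s + t)) ^ q ≤ 2⁻¹ * (s ^ q + t ^ q) := by
  have h := (convexOn_rpow hq).2 (Set.mem_Ici.mpr hs) (Set.mem_Ici.mpr ht)
    (by norm_num : (0:ℝ) ≤ 2⁻¹) (by norm_num : (0:ℝ) ≤ 2⁻¹) (by norm_num)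
  simp only [smul_eq_mul] at h
  calc (2⁻¹ * (s + t)) ^ q = (2⁻¹ * s + 2⁻¹ * t) ^ q := by ring_nf
  _ ≤ 2⁻¹ * s ^ q + 2⁻¹ * t ^ q := h
  _ = 2⁻¹ * (s ^ q + t ^ q) := by ring

lemma coe_two_inv : ((2:ℂ)⁻¹) = (((2:ℝ)⁻¹ : ℝ) : ℂ) := by push_cast; ring

end CGM

open CGM

/-- **Corollary 2.2.** For every `k = 1, …, n`, the `k`-th root of the product of the `k`
smallest eigenvalues of `(|A|^p+|B|^p)/2` dominates the sum of the corresponding `k`-th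
roots for `|(A+B)/2|^p` and `|(A-B)/2|^p`. -/
theorem clarkson_geom_mean_smallest_eigenvalues {n : ℕ} (A B : Matrix (Fin n) (Fin n) ℂ)
    (p : ℝ) (hp : 2 < p) (k : ℕ) (hk1 : 1 ≤ k) (hkn : k ≤ n) :
    (∏ i ∈ Finset.univ.filter (fun i : Fin n => (i : ℕ) < k),
        eigAsc (Matrix.absRpow_isHermitian ((2:ℂ)⁻¹ • (A + B)) p) i) ^ ((k : ℝ)⁻¹)
      + (∏ i ∈ Finset.univ.filter (fun i : Fin n => (i : ℕ) < k),
        eigAsc (Matrix.absRpow_isHermitian ((2:ℂ)⁻¹ • (A - B)) p) i) ^ ((k : ℝ)⁻¹)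
    ≤ (∏ i ∈ Finset.univ.filter (fun i : Fin n => (i : ℕ) < k),
        eigAsc (((Matrix.absRpow_isHermitian A p).add
          (Matrix.absRpow_isHermitian B p)).smul_half) i) ^ ((k : ℝ)⁻¹) := by
  classical
  set q : ℝ := p / 2 with hqdef
  have hq1 : (1:ℝ) ≤ q := by rw [hqdef]; linarith
  have hq0 : (0:ℝ) ≤ q := by linarith
  set f : ℝ → ℝ := fun x => x ^ q with hfdef
  set C : Matrix (Fin n) (Fin n) ℂ := (2:ℂ)⁻¹ • (A + B) with hC
  set D : Matrix (Fin n) (Fin n) ℂ := (2:ℂ)⁻¹ • (A - B) with hD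
  have hCC : (Cᴴ * C).PosSemidef := posSemidef_conjTranspose_mul_self C
  have hDD : (Dᴴ * D).PosSemidef := posSemidef_conjTranspose_mul_self D
  have hXX : (Aᴴ * A).PosSemidef := posSemidef_conjTranspose_mul_self A
  have hYY : (Bᴴ * B).PosSemidef := posSemidef_conjTranspose_mul_self B
  have hHpsd : (Cᴴ * C + Dᴴ * D).PosSemidef := hCC.add hDD
  set M₁ : Matrix (Fin n) (Fin n) ℂ :=
    (2:ℂ)⁻¹ • (Matrix.absRpow A p + Matrix.absRpow B p) with hM₁def
  have hM₁ : M₁.IsHermitian :=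
    ((Matrix.absRpow_isHermitian A p).add (Matrix.absRpow_isHermitian B p)).smul_half
  -- parallelogram identity
  have hpar : Cᴴ * C + Dᴴ * D = (2:ℂ)⁻¹ • (Aᴴ * A + Bᴴ * B) := by
    rw [hC, hD]
    simp only [conjTranspose_smul, conjTranspose_add, conjTranspose_sub,
      Matrix.smul_mul, Matrix.mul_smul, smul_smul, Matrix.add_mul, Matrix.mul_add,
      Matrix.sub_mul, Matrix.mul_sub, star_inv₀, star_ofNat]
    module
  -- Step 1 : eigenvalues of |C|^p and |D|^p
  have hmonoC : Monotone fun i => f (eigAsc hCC.1 i) := fun i j hij =>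
    Real.rpow_le_rpow (eigAsc_nonneg hCC i) (eigAsc_monotone hCC.1 hij) hq0
  have hmonoD : Monotone fun i => f (eigAsc hDD.1 i) := fun i j hij =>
    Real.rpow_le_rpow (eigAsc_nonneg hDD i) (eigAsc_monotone hDD.1 hij) hq0
  have hstep1C : eigAsc (Matrix.absRpow_isHermitian C p) = fun i => (eigAsc hCC.1 i) ^ q := by
    have h1 : Matrix.absRpow C p = cfc f (Cᴴ * C) := rfl
    rw [eigAsc_congr h1 (Matrix.absRpow_isHermitian C p) (cfc_predicate _ _)]
    exact eigAsc_cfc hCC.1 f _ hmonoC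
  have hstep1D : eigAsc (Matrix.absRpow_isHermitian D p) = fun i => (eigAsc hDD.1 i) ^ q := by
    have h1 : Matrix.absRpow D p = cfc f (Dᴴ * D) := rfl
    rw [eigAsc_congr h1 (Matrix.absRpow_isHermitian D p) (cfc_predicate _ _)]
    exact eigAsc_cfc hDD.1 f _ hmonoD
  -- Step 2 : pointwise eigenvalue bound for the right-hand side matrix
  set φ : ℝ → ℝ := fun t => (max t 0) ^ q with hφdef
  have hφmono : Monotone φ := fun s t hst =>
    Real.rpow_le_rpow (le_max_right _ _) (max_le_max hst le_rfl) hq0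
  have hH : (Cᴴ * C + Dᴴ * D).IsHermitian := hHpsd.1
  have hstep2 : ∀ j, (eigAsc hH j) ^ q ≤ eigAsc hM₁ j := by
    intro j
    have hqf : ∀ u, sn u = 1 → φ (qf (Cᴴ * C + Dᴴ * D) u) ≤ qf M₁ u := by
      intro u hu
      have hXu : 0 ≤ qf (Aᴴ * A) u := qf_nonneg_of_posSemidef hXX u
      have hYu : 0 ≤ qf (Bᴴ * B) u := qf_nonneg_of_posSemidef hYY u
      have hqf2 : qf (Cᴴ * C + Dᴴ * D) u = 2⁻¹ * (qf (Aᴴ * A) u + qf (Bᴴ * B) u) := by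
        rw [hpar, coe_two_inv, qf_smul_matrix, qf_add]
      have hqf1 : qf M₁ u = 2⁻¹ * (qf (cfc f (Aᴴ * A)) u + qf (cfc f (Bᴴ * B)) u) := by
        rw [hM₁def, coe_two_inv, qf_smul_matrix, qf_add]
        rfl
      have hjX : (qf (Aᴴ * A) u) ^ q ≤ qf (cfc f (Aᴴ * A)) u := jensen_rpow hXX hq1 u hu
      have hjY : (qf (Bᴴ * B) u) ^ q ≤ qf (cfc f (Bᴴ * B)) u := jensen_rpow hYY hq1 u hu
      have hmax : φ (qf (Cᴴ * C + Dᴴ * D) u) = (qf (Cᴴ * C + Dᴴ * D) u) ^ q := by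
        rw [hφdef]
        have : 0 ≤ qf (Cᴴ * C + Dᴴ * D) u := by rw [hqf2]; positivity
        simp [max_eq_left this]
      rw [hmax, hqf2, hqf1]
      calc (2⁻¹ * (qf (Aᴴ * A) u + qf (Bᴴ * B) u)) ^ q
          ≤ 2⁻¹ * ((qf (Aᴴ * A) u) ^ q + (qf (Bᴴ * B) u) ^ q) := half_rpow hXu hYu hq1
      _ ≤ 2⁻¹ * (qf (cfc f (Aᴴ * A)) u + qf (cfc f (Bᴴ * B)) u) := by
          have := add_le_add hjX hjY
          linarith
    have := eigAsc_qf_compare hM₁ hH φ hφmono hqf j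
    have hmax : φ (eigAsc hH j) = (eigAsc hH j) ^ q := by
      rw [hφdef]
      simp [max_eq_left (eigAsc_nonneg hHpsd j)]
    rwa [hmax] at this
  -- Step 3 : superadditivity
  have hsuper := geom_superadd hCC hDD hH (lt_of_lt_of_le Nat.one_pos hk1) hkn
  -- assembling
  set flt := Finset.univ.filter (fun i : Fin n => (i : ℕ) < k) with hflt
  have hCnn : ∀ i ∈ flt, 0 ≤ eigAsc hCC.1 i := fun i _ => eigAsc_nonneg hCC i
  have hDnn : ∀ i ∈ flt, 0 ≤ eigAsc hDD.1 i := fun i _ => eigAsc_nonneg hDD i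
  have hHnn : ∀ i ∈ flt, 0 ≤ eigAsc hH i := fun i _ => eigAsc_nonneg hHpsd i
  set γC : ℝ := (∏ i ∈ flt, eigAsc hCC.1 i) ^ ((k:ℝ)⁻¹) with hγC
  set γD : ℝ := (∏ i ∈ flt, eigAsc hDD.1 i) ^ ((k:ℝ)⁻¹) with hγD
  set γH : ℝ := (∏ i ∈ flt, eigAsc hH i) ^ ((k:ℝ)⁻¹) with hγH
  have hγCnn : 0 ≤ γC := Real.rpow_nonneg (Finset.prod_nonneg hCnn) _
  have hγDnn : 0 ≤ γD := Real.rpow_nonneg (Finset.prod_nonneg hDnn) _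
  have hLHS1 : (∏ i ∈ flt, eigAsc (Matrix.absRpow_isHermitian C p) i) ^ ((k:ℝ)⁻¹)
      = γC ^ q := by
    rw [hstep1C, Real.finset_prod_rpow _ _ hCnn, hγC, ← Real.rpow_mul
      (Finset.prod_nonneg hCnn), ← Real.rpow_mul (Finset.prod_nonneg hCnn), mul_comm]
  have hLHS2 : (∏ i ∈ flt, eigAsc (Matrix.absRpow_isHermitian D p) i) ^ ((k:ℝ)⁻¹)
      = γD ^ q := by
    rw [hstep1D, Real.finset_prod_rpow _ _ hDnn, hγD, ← Real.rpow_mul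
      (Finset.prod_nonneg hDnn), ← Real.rpow_mul (Finset.prod_nonneg hDnn), mul_comm]
  have hRHSge : γH ^ q ≤ (∏ i ∈ flt, eigAsc hM₁ i) ^ ((k:ℝ)⁻¹) := by
    have hprodle : ∏ i ∈ flt, (eigAsc hH i) ^ q ≤ ∏ i ∈ flt, eigAsc hM₁ i :=
      Finset.prod_le_prod (fun i _ => Real.rpow_nonneg (eigAsc_nonneg hHpsd i) _)
        (fun i _ => hstep2 i)
    calc γH ^ q = (∏ i ∈ flt, (eigAsc hH i) ^ q) ^ ((k:ℝ)⁻¹) := by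
          rw [Real.finset_prod_rpow _ _ hHnn, hγH, ← Real.rpow_mul
            (Finset.prod_nonneg hHnn), ← Real.rpow_mul (Finset.prod_nonneg hHnn), mul_comm]
    _ ≤ (∏ i ∈ flt, eigAsc hM₁ i) ^ ((k:ℝ)⁻¹) :=
          Real.rpow_le_rpow (Finset.prod_nonneg fun i _ =>
            Real.rpow_nonneg (eigAsc_nonneg hHpsd i) _) hprodle (by positivity)
  calc (∏ i ∈ flt, eigAsc (Matrix.absRpow_isHermitian C p) i) ^ ((k:ℝ)⁻¹)
        + (∏ i ∈ flt, eigAsc (Matrix.absRpow_isHermitian D p) i) ^ ((k:ℝ)⁻¹)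
      = γC ^ q + γD ^ q := by rw [hLHS1, hLHS2]
  _ ≤ (γC + γD) ^ q := real_add_rpow hγCnn hγDnn hq1
  _ ≤ γH ^ q := Real.rpow_le_rpow (add_nonneg hγCnn hγDnn) hsuper hq0
  _ ≤ (∏ i ∈ flt, eigAsc hM₁ i) ^ ((k:ℝ)⁻¹) := hRHSge
end

section
/- Let A, B be n-by-n complex matrices and let 0 < q < 2. Then for all j, k ∈ {0, ..., n-1} with j + k + 1 ≤ n, one has λ_{j+k+1}^↓((|A|^q + |B|^q)/2) ≤ λ_{j+1}^↓(|(A+B)/2|^q) + λ_{k+1}^↓(|(A-B)/2|^q). -/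
open Matrix
open scoped ComplexOrder

/-! ### Auxiliary lemmas -/

section Helpers

variable {n : ℕ}

lemma quadform_eq_sum (T : EuclideanSpace ℂ (Fin n) →ₗ[ℂ] EuclideanSpace ℂ (Fin n))
    (b : OrthonormalBasis (Fin n) ℂ (EuclideanSpace ℂ (Fin n))) (μ : Fin n → ℝ)
    (hb : ∀ i, T (b i) = (μ i : ℂ) • b i) (x : EuclideanSpace ℂ (Fin n)) :
    (inner ℂ x (T x) : ℂ) = ((∑ i, μ i * ‖(inner ℂ (b i) x : ℂ)‖ ^ 2 : ℝ) : ℂ) := by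
  have hTx : T x = ∑ i, ((inner ℂ (b i) x : ℂ) * (μ i : ℂ)) • b i := by
    conv_lhs => rw [← b.sum_repr' x]
    rw [map_sum]
    refine Finset.sum_congr rfl fun i _ => ?_
    rw [_root_.map_smul, hb i, smul_smul]
  rw [hTx, inner_sum]
  push_cast
  refine Finset.sum_congr rfl fun i _ => ?_
  rw [inner_smul_right, ← inner_conj_symm x (b i)]
  rw [mul_comm (inner ℂ (b i) x : ℂ) ((μ i : ℝ) : ℂ), mul_assoc, Complex.mul_conj']

lemma sum_normsq_inner (b : OrthonormalBasis (Fin n) ℂ (EuclideanSpace ℂ (Fin n)))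
    (x : EuclideanSpace ℂ (Fin n)) :
    ∑ i, ‖(inner ℂ (b i) x : ℂ)‖ ^ 2 = ‖x‖ ^ 2 := by
  have h := b.sum_inner_mul_inner x x
  have h2 : ∀ i : Fin n, (inner ℂ x (b i) : ℂ) * inner ℂ (b i) x
      = ((‖(inner ℂ (b i) x : ℂ)‖ : ℂ)) ^ 2 := by
    intro i
    rw [← inner_conj_symm x (b i), mul_comm, Complex.mul_conj']
  rw [Finset.sum_congr rfl (fun i _ => h2 i), inner_self_eq_norm_sq_to_K] at h
  exact Complex.ofReal_injective (by push_cast; exact h)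

lemma inner_eq_zero_of_mem_span {v : Fin n → EuclideanSpace ℂ (Fin n)} (hv : Orthonormal ℂ v)
    {P : Fin n → Prop} {x : EuclideanSpace ℂ (Fin n)}
    (hx : x ∈ Submodule.span ℂ (v '' {i | P i})) {i₀ : Fin n} (hi₀ : ¬ P i₀) :
    (inner ℂ (v i₀) x : ℂ) = 0 := by
  have hle : Submodule.span ℂ (v '' {i | P i}) ≤ LinearMap.ker (innerSL ℂ (v i₀) : EuclideanSpace ℂ (Fin n) →ₗ[ℂ] ℂ) := by
    refine Submodule.span_le.mpr ?_
    rintro y ⟨i, hi, rfl⟩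
    simp only [SetLike.mem_coe, LinearMap.mem_ker, ContinuousLinearMap.coe_coe, innerSL_apply_apply]
    exact hv.2 (fun h => hi₀ (h ▸ hi))
  simpa using hle hx

lemma quadform_le_of_mem_span (T : EuclideanSpace ℂ (Fin n) →ₗ[ℂ] EuclideanSpace ℂ (Fin n))
    (b : OrthonormalBasis (Fin n) ℂ (EuclideanSpace ℂ (Fin n))) (μ : Fin n → ℝ)
    (hb : ∀ i, T (b i) = (μ i : ℂ) • b i) {P : Fin n → Prop} {x : EuclideanSpace ℂ (Fin n)}
    (hx : x ∈ Submodule.span ℂ ((⇑b) '' {i | P i})) {c : ℝ} (hc : ∀ i, P i → μ i ≤ c) :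
    (inner ℂ x (T x) : ℂ).re ≤ c * ‖x‖ ^ 2 := by
  classical
  rw [quadform_eq_sum T b μ hb x, Complex.ofReal_re]
  calc ∑ i, μ i * ‖(inner ℂ (b i) x : ℂ)‖ ^ 2
      ≤ ∑ i, c * ‖(inner ℂ (b i) x : ℂ)‖ ^ 2 := by
        refine Finset.sum_le_sum fun i _ => ?_
        by_cases hP : P i
        · exact mul_le_mul_of_nonneg_right (hc i hP) (by positivity)
        · rw [inner_eq_zero_of_mem_span b.orthonormal hx hP]; simp
    _ = c * ‖x‖ ^ 2 := by rw [← Finset.mul_sum, sum_normsq_inner]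

lemma le_quadform_of_mem_span (T : EuclideanSpace ℂ (Fin n) →ₗ[ℂ] EuclideanSpace ℂ (Fin n))
    (b : OrthonormalBasis (Fin n) ℂ (EuclideanSpace ℂ (Fin n))) (μ : Fin n → ℝ)
    (hb : ∀ i, T (b i) = (μ i : ℂ) • b i) {P : Fin n → Prop} {x : EuclideanSpace ℂ (Fin n)}
    (hx : x ∈ Submodule.span ℂ ((⇑b) '' {i | P i})) {c : ℝ} (hc : ∀ i, P i → c ≤ μ i) :
    c * ‖x‖ ^ 2 ≤ (inner ℂ x (T x) : ℂ).re := by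
  classical
  rw [quadform_eq_sum T b μ hb x, Complex.ofReal_re]
  calc c * ‖x‖ ^ 2 = ∑ i, c * ‖(inner ℂ (b i) x : ℂ)‖ ^ 2 := by
        rw [← Finset.mul_sum, sum_normsq_inner]
    _ ≤ ∑ i, μ i * ‖(inner ℂ (b i) x : ℂ)‖ ^ 2 := by
        refine Finset.sum_le_sum fun i _ => ?_
        by_cases hP : P i
        · exact mul_le_mul_of_nonneg_right (hc i hP) (by positivity)
        · rw [inner_eq_zero_of_mem_span b.orthonormal hx hP]; simp

variable {H : Matrix (Fin n) (Fin n) ℂ}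

noncomputable def sortPerm (hH : H.IsHermitian) : Equiv.Perm (Fin n) :=
  Fin.revPerm.trans (Tuple.sort hH.eigenvalues)

noncomputable def sortedBasis (hH : H.IsHermitian) :
    OrthonormalBasis (Fin n) ℂ (EuclideanSpace ℂ (Fin n)) :=
  hH.eigenvectorBasis.reindex (sortPerm hH).symm

lemma sortedBasis_apply (hH : H.IsHermitian) (i : Fin n) :
    sortedBasis hH i = hH.eigenvectorBasis (sortPerm hH i) := by
  simp [sortedBasis, OrthonormalBasis.reindex_apply]

lemma eigDesc_eq_eigenvalues (hH : H.IsHermitian) (i : Fin n) :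
    eigDesc hH i = hH.eigenvalues (sortPerm hH i) := rfl

lemma eigDesc_antitone (hH : H.IsHermitian) : Antitone (eigDesc hH) := by
  intro i j hij
  exact Tuple.monotone_sort hH.eigenvalues (Fin.rev_le_rev.mpr hij)

lemma toEuclideanLin_eigenvectorBasis (hH : H.IsHermitian) (j : Fin n) :
    Matrix.toEuclideanLin H (hH.eigenvectorBasis j)
      = ((hH.eigenvalues j : ℝ) : ℂ) • hH.eigenvectorBasis j := by
  have h := hH.mulVec_eigenvectorBasis j
  apply (WithLp.equiv 2 _).injective
  ext i
  have := congrFun h i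
  simpa [Matrix.toEuclideanLin_apply, Complex.real_smul] using this

lemma cfc_mulVec (hH : H.IsHermitian) (f : ℝ → ℝ) (j : Fin n) :
    (cfc f H) *ᵥ ⇑(hH.eigenvectorBasis j)
      = f (hH.eigenvalues j) • ⇑(hH.eigenvectorBasis j) := by
  rw [hH.cfc_eq, Matrix.IsHermitian.cfc, Unitary.conjStarAlgAut_apply, ← Matrix.mulVec_mulVec, ← Matrix.mulVec_mulVec,
    hH.star_eigenvectorUnitary_mulVec, Matrix.diagonal_mulVec_single]
  have : (Pi.single j ((RCLike.ofReal ∘ f ∘ hH.eigenvalues) j * 1) : Fin n → ℂ)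
      = (f (hH.eigenvalues j) : ℂ) • (Pi.single j 1 : Fin n → ℂ) := by
    ext i
    by_cases hij : i = j
    · subst hij; simp
    · simp [Pi.single_eq_of_ne hij]
  rw [this, Matrix.mulVec_smul, hH.eigenvectorUnitary_mulVec,
    RCLike.real_smul_eq_coe_smul (K := ℂ)]
  rfl

lemma toEuclideanLin_cfc (hH : H.IsHermitian) (f : ℝ → ℝ) (j : Fin n) :
    Matrix.toEuclideanLin (cfc f H) (hH.eigenvectorBasis j)
      = ((f (hH.eigenvalues j) : ℝ) : ℂ) • hH.eigenvectorBasis j := by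
  have h := cfc_mulVec hH f j
  apply (WithLp.equiv 2 _).injective
  ext i
  have := congrFun h i
  simpa [Matrix.toEuclideanLin_apply, Complex.real_smul] using this

lemma toEuclideanLin_sortedBasis (hH : H.IsHermitian) (i : Fin n) :
    Matrix.toEuclideanLin H (sortedBasis hH i) = ((eigDesc hH i : ℝ) : ℂ) • sortedBasis hH i := by
  rw [sortedBasis_apply, eigDesc_eq_eigenvalues]
  exact toEuclideanLin_eigenvectorBasis hH _

lemma toEuclideanLin_cfc_sortedBasis (hH : H.IsHermitian) (f : ℝ → ℝ) (i : Fin n) :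
    Matrix.toEuclideanLin (cfc f H) (sortedBasis hH i)
      = ((f (eigDesc hH i) : ℝ) : ℂ) • sortedBasis hH i := by
  rw [sortedBasis_apply, eigDesc_eq_eigenvalues]
  exact toEuclideanLin_cfc hH f _

open Module

lemma finrank_span_orthonormal {v : Fin n → EuclideanSpace ℂ (Fin n)} (hv : Orthonormal ℂ v)
    (P : Fin n → Prop) [DecidablePred P] :
    Module.finrank ℂ (Submodule.span ℂ (v '' {i | P i})) = Fintype.card {i // P i} := by
  have hli : LinearIndependent ℂ (fun i : {i // P i} => v i) :=
    (hv.comp _ Subtype.val_injective).linearIndependent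
  have himg : v '' {i | P i} = Set.range (fun i : {i // P i} => v i) := by
    rw [Set.image_eq_range]
    rfl
  rw [himg, finrank_span_eq_card hli]

lemma card_tail (j : ℕ) : Fintype.card {i : Fin n // j ≤ (i : ℕ)} = n - j := by
  have e : {i : Fin n // j ≤ (i : ℕ)} ≃ Fin (n - j) :=
    { toFun := fun i => ⟨(i : Fin n).val - j, by have := (i : Fin n).isLt; omega⟩
      invFun := fun k => ⟨⟨k.val + j, by have := k.isLt; omega⟩, by simp⟩
      left_inv := by
        rintro ⟨⟨i, hi⟩, h⟩
        ext
        simp at h ⊢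
        omega
      right_inv := by
        rintro ⟨k, hk⟩
        ext
        simp }
  rw [Fintype.card_congr e, Fintype.card_fin]

lemma card_head {m : ℕ} (hm : m < n) : Fintype.card {i : Fin n // (i : ℕ) ≤ m} = m + 1 := by
  have e : {i : Fin n // (i : ℕ) ≤ m} ≃ Fin (m + 1) :=
    { toFun := fun i => ⟨(i : Fin n).val, by have := i.2; omega⟩
      invFun := fun k => ⟨⟨k.val, by have := k.isLt; omega⟩, by have := k.isLt; simp; omega⟩
      left_inv := by rintro ⟨⟨i, hi⟩, h⟩; rfl
      right_inv := by rintro ⟨k, hk⟩; rfl }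
  rw [Fintype.card_congr e, Fintype.card_fin]

lemma finrank_inf_ge (S T : Submodule ℂ (EuclideanSpace ℂ (Fin n))) :
    finrank ℂ S + finrank ℂ T
      ≤ n + finrank ℂ (S ⊓ T : Submodule ℂ (EuclideanSpace ℂ (Fin n))) := by
  have h1 := Submodule.finrank_sup_add_finrank_inf_eq S T
  have h2 := Submodule.finrank_le (S ⊔ T)
  rw [finrank_euclideanSpace_fin] at h2
  omega

lemma exists_unit_mem_three (S T U : Submodule ℂ (EuclideanSpace ℂ (Fin n)))
    (h : 2 * n + 1 ≤ finrank ℂ S + finrank ℂ T + finrank ℂ U) :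
    ∃ x : EuclideanSpace ℂ (Fin n), ‖x‖ = 1 ∧ x ∈ S ∧ x ∈ T ∧ x ∈ U := by
  have h1 := finrank_inf_ge S T
  have h2 := finrank_inf_ge (S ⊓ T) U
  have h3 : 0 < finrank ℂ (S ⊓ T ⊓ U : Submodule ℂ (EuclideanSpace ℂ (Fin n))) := by omega
  obtain ⟨x, hx0⟩ := Module.finrank_pos_iff_exists_ne_zero.mp h3
  refine ⟨(‖(x : EuclideanSpace ℂ (Fin n))‖⁻¹ : ℂ) • (x : EuclideanSpace ℂ (Fin n)),
    ?_, ?_, ?_, ?_⟩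
  · have hxne : ‖(x : EuclideanSpace ℂ (Fin n))‖ ≠ 0 := by
      simp only [norm_ne_zero_iff]
      exact fun h => hx0 (Subtype.ext h)
    rw [norm_smul]
    simp [hxne]
  · exact Submodule.smul_mem _ _ (x.2.1.1)
  · exact Submodule.smul_mem _ _ (x.2.1.2)
  · exact Submodule.smul_mem _ _ (x.2.2)

lemma real_rpow_add_le {c d s : ℝ} (hc : 0 ≤ c) (hd : 0 ≤ d) (hs0 : 0 ≤ s) (hs1 : s ≤ 1) :
    (c + d) ^ s ≤ c ^ s + d ^ s := by
  have := NNReal.rpow_add_le_add_rpow ⟨c, hc⟩ ⟨d, hd⟩ hs0 hs1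
  exact_mod_cast this

/-- Jensen's inequality for quadratic forms: for a PSD-spectrum Hermitian `H` and a unit
vector `x`, `⟨x, H^s x⟩ ≤ ⟨x, H x⟩^s`. -/
lemma quadform_cfc_rpow_le (hH : H.IsHermitian) (hpos : ∀ i, 0 ≤ hH.eigenvalues i)
    {s : ℝ} (hs0 : 0 < s) (hs1 : s < 1) {x : EuclideanSpace ℂ (Fin n)} (hx : ‖x‖ = 1) :
    (inner ℂ x (Matrix.toEuclideanLin (cfc (fun t : ℝ => t ^ s) H) x) : ℂ).re
      ≤ ((inner ℂ x (Matrix.toEuclideanLin H x) : ℂ).re) ^ s := by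
  set b := hH.eigenvectorBasis with hbdef
  rw [quadform_eq_sum _ b (fun i => (hH.eigenvalues i) ^ s) (toEuclideanLin_cfc hH _) x]
  rw [quadform_eq_sum _ b hH.eigenvalues (toEuclideanLin_eigenvectorBasis hH) x]
  rw [Complex.ofReal_re, Complex.ofReal_re]
  have hsum : ∑ i, ‖(inner ℂ (b i) x : ℂ)‖ ^ 2 = 1 := by
    rw [sum_normsq_inner, hx]; norm_num
  have hcc := Real.concaveOn_rpow hs0.le hs1.le
  have hj := hcc.le_map_sum (t := Finset.univ)
    (w := fun i => ‖(inner ℂ (b i) x : ℂ)‖ ^ 2) (p := hH.eigenvalues)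
    (fun i _ => by positivity) hsum (fun i _ => hpos i)
  simpa [smul_eq_mul, mul_comm] using hj

/-- The `s`-th power of the `m`-th descending eigenvalue is at most the `m`-th descending
eigenvalue of `cfc (· ^ s)`. -/
lemma rpow_eigDesc_le (hH : H.IsHermitian) (hpos : ∀ i, 0 ≤ hH.eigenvalues i)
    {s : ℝ} (hs0 : 0 < s) (hF : (cfc (fun t : ℝ => t ^ s) H).IsHermitian) (m : Fin n) :
    (eigDesc hH m) ^ s ≤ eigDesc hF m := by
  classical
  have hposD : ∀ i, 0 ≤ eigDesc hH i := fun i => hpos _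
  obtain ⟨x, hx1, hxT, hxS, -⟩ := exists_unit_mem_three
    (Submodule.span ℂ ((⇑(sortedBasis hH)) '' {i : Fin n | (i : ℕ) ≤ (m : ℕ)}))
    (Submodule.span ℂ ((⇑(sortedBasis hF)) '' {i : Fin n | (m : ℕ) ≤ (i : ℕ)})) ⊤ (by
      rw [finrank_span_orthonormal (sortedBasis hH).orthonormal,
        finrank_span_orthonormal (sortedBasis hF).orthonormal, card_head m.isLt, card_tail,
        finrank_top, finrank_euclideanSpace_fin]
      have := m.isLt
      omega)
  have low : (eigDesc hH m) ^ s * ‖x‖ ^ 2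
      ≤ (inner ℂ x (Matrix.toEuclideanLin (cfc (fun t : ℝ => t ^ s) H) x) : ℂ).re :=
    le_quadform_of_mem_span _ (sortedBasis hH) (fun i => (eigDesc hH i) ^ s)
      (fun i => toEuclideanLin_cfc_sortedBasis hH _ i) hxT
      (fun i hi => Real.rpow_le_rpow (hposD m)
        (eigDesc_antitone hH (show i ≤ m from Fin.le_def.mpr hi)) hs0.le)
  have high : (inner ℂ x (Matrix.toEuclideanLin (cfc (fun t : ℝ => t ^ s) H) x) : ℂ).re
      ≤ eigDesc hF m * ‖x‖ ^ 2 :=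
    quadform_le_of_mem_span _ (sortedBasis hF) (eigDesc hF)
      (fun i => toEuclideanLin_sortedBasis hF i) hxS
      (fun i hi => eigDesc_antitone hF (show m ≤ i from Fin.le_def.mpr hi))
  rw [hx1] at low high
  simpa using le_trans (by simpa using low) (by simpa using high)

lemma toEuclideanLin_mul (X Y : Matrix (Fin n) (Fin n) ℂ) :
    Matrix.toEuclideanLin (X * Y)
      = (Matrix.toEuclideanLin X).comp (Matrix.toEuclideanLin Y) := by
  apply LinearMap.ext
  intro v
  apply (WithLp.equiv 2 _).injective
  ext i
  simp [Matrix.toEuclideanLin_apply, ← Matrix.mulVec_mulVec]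

lemma inner_conjTranspose_mul_self (X : Matrix (Fin n) (Fin n) ℂ)
    (y : EuclideanSpace ℂ (Fin n)) :
    (inner ℂ y (Matrix.toEuclideanLin (Xᴴ * X) y) : ℂ)
      = ((‖Matrix.toEuclideanLin X y‖ ^ 2 : ℝ) : ℂ) := by
  rw [toEuclideanLin_mul, LinearMap.comp_apply,
    Matrix.toEuclideanLin_conjTranspose_eq_adjoint, LinearMap.adjoint_inner_right,
    inner_self_eq_norm_sq_to_K]
  norm_cast

end Helpers

set_option maxHeartbeats 2000000 in
/-- **Corollary 2.4.** For `0 < q < 2` and `j + k + 1 ≤ n`,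
`λ_{j+k+1}^↓((|A|^q+|B|^q)/2) ≤ λ_{j+1}^↓(|(A+B)/2|^q) + λ_{k+1}^↓(|(A-B)/2|^q)`. -/
theorem clarkson_weyl_eigenvalue_estimate_q_lt_two {n : ℕ} (A B : Matrix (Fin n) (Fin n) ℂ)
    (q : ℝ) (hq0 : 0 < q) (hq2 : q < 2) (j k : ℕ) (hjk : j + k + 1 ≤ n) :
    eigDesc (((Matrix.absRpow_isHermitian A q).add
        (Matrix.absRpow_isHermitian B q)).smul_half) ⟨j + k, by omega⟩
    ≤ eigDesc (Matrix.absRpow_isHermitian ((2:ℂ)⁻¹ • (A + B)) q) ⟨j, by omega⟩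
      + eigDesc (Matrix.absRpow_isHermitian ((2:ℂ)⁻¹ • (A - B)) q) ⟨k, by omega⟩ := by
  classical
  have hs0 : 0 < q / 2 := by linarith
  have hs1 : q / 2 < 1 := by linarith
  have hM := ((Matrix.absRpow_isHermitian A q).add (Matrix.absRpow_isHermitian B q)).smul_half
  have hCC := (Matrix.posSemidef_conjTranspose_mul_self ((2:ℂ)⁻¹ • (A + B))).isHermitian
  have hDD := (Matrix.posSemidef_conjTranspose_mul_self ((2:ℂ)⁻¹ • (A - B))).isHermitian
  have hAA := (Matrix.posSemidef_conjTranspose_mul_self A).isHermitian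
  have hBB := (Matrix.posSemidef_conjTranspose_mul_self B).isHermitian
  obtain ⟨x, hx1, hxT, hxC, hxD⟩ := exists_unit_mem_three
    (Submodule.span ℂ ((⇑(sortedBasis hM)) '' {i : Fin n | (i : ℕ) ≤ j + k}))
    (Submodule.span ℂ ((⇑(sortedBasis hCC)) '' {i : Fin n | j ≤ (i : ℕ)}))
    (Submodule.span ℂ ((⇑(sortedBasis hDD)) '' {i : Fin n | k ≤ (i : ℕ)})) (by
      rw [finrank_span_orthonormal (sortedBasis hM).orthonormal,
        finrank_span_orthonormal (sortedBasis hCC).orthonormal,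
        finrank_span_orthonormal (sortedBasis hDD).orthonormal,
        card_head (show j + k < n by omega), card_tail, card_tail]
      omega)
  -- Step 1: min-max lower bound on the subspace `T`
  have step1 : eigDesc hM ⟨j + k, by omega⟩
      ≤ (inner ℂ x (Matrix.toEuclideanLin
          ((2:ℂ)⁻¹ • (Matrix.absRpow A q + Matrix.absRpow B q)) x) : ℂ).re := by
    have h := le_quadform_of_mem_span (Matrix.toEuclideanLin _) (sortedBasis hM) (eigDesc hM)
      (fun i => toEuclideanLin_sortedBasis hM i) hxT
      (c := eigDesc hM ⟨j + k, by omega⟩) (fun i hi => eigDesc_antitone hM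
        (show i ≤ (⟨j + k, by omega⟩ : Fin n) from Fin.le_def.mpr hi))
    rw [hx1] at h
    simpa using h
  -- Step 2: split the quadratic form of the average
  have hMx : (inner ℂ x (Matrix.toEuclideanLin
        ((2:ℂ)⁻¹ • (Matrix.absRpow A q + Matrix.absRpow B q)) x) : ℂ).re
      = 2⁻¹ * ((inner ℂ x (Matrix.toEuclideanLin (Matrix.absRpow A q) x) : ℂ).re
          + (inner ℂ x (Matrix.toEuclideanLin (Matrix.absRpow B q) x) : ℂ).re) := by
    rw [_root_.map_smul, _root_.map_add, LinearMap.smul_apply, LinearMap.add_apply,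
      inner_smul_right, inner_add_right]
    rw [show ((2:ℂ)⁻¹) = ((2⁻¹ : ℝ) : ℂ) by norm_num, Complex.re_ofReal_mul, Complex.add_re]
  -- Step 3: Jensen's inequality
  have habsA : Matrix.absRpow A q = cfc (fun t : ℝ => t ^ (q / 2)) (Aᴴ * A) := rfl
  have habsB : Matrix.absRpow B q = cfc (fun t : ℝ => t ^ (q / 2)) (Bᴴ * B) := rfl
  have jensenA : (inner ℂ x (Matrix.toEuclideanLin (Matrix.absRpow A q) x) : ℂ).re
      ≤ ((inner ℂ x (Matrix.toEuclideanLin (Aᴴ * A) x) : ℂ).re) ^ (q / 2) := by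
    rw [habsA]
    exact quadform_cfc_rpow_le hAA
      (fun i => (Matrix.posSemidef_conjTranspose_mul_self A).eigenvalues_nonneg i) hs0 hs1 hx1
  have jensenB : (inner ℂ x (Matrix.toEuclideanLin (Matrix.absRpow B q) x) : ℂ).re
      ≤ ((inner ℂ x (Matrix.toEuclideanLin (Bᴴ * B) x) : ℂ).re) ^ (q / 2) := by
    rw [habsB]
    exact quadform_cfc_rpow_le hBB
      (fun i => (Matrix.posSemidef_conjTranspose_mul_self B).eigenvalues_nonneg i) hs0 hs1 hx1
  -- quadratic forms as squared norms
  have haval : (inner ℂ x (Matrix.toEuclideanLin (Aᴴ * A) x) : ℂ).re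
      = ‖Matrix.toEuclideanLin A x‖ ^ 2 := by
    rw [inner_conjTranspose_mul_self, Complex.ofReal_re]
  have hbval : (inner ℂ x (Matrix.toEuclideanLin (Bᴴ * B) x) : ℂ).re
      = ‖Matrix.toEuclideanLin B x‖ ^ 2 := by
    rw [inner_conjTranspose_mul_self, Complex.ofReal_re]
  have hcval : (inner ℂ x (Matrix.toEuclideanLin ((((2:ℂ)⁻¹ • (A + B)))ᴴ
        * ((2:ℂ)⁻¹ • (A + B))) x) : ℂ).re
      = ‖Matrix.toEuclideanLin ((2:ℂ)⁻¹ • (A + B)) x‖ ^ 2 := by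
    rw [inner_conjTranspose_mul_self, Complex.ofReal_re]
  have hdval : (inner ℂ x (Matrix.toEuclideanLin ((((2:ℂ)⁻¹ • (A - B)))ᴴ
        * ((2:ℂ)⁻¹ • (A - B))) x) : ℂ).re
      = ‖Matrix.toEuclideanLin ((2:ℂ)⁻¹ • (A - B)) x‖ ^ 2 := by
    rw [inner_conjTranspose_mul_self, Complex.ofReal_re]
  -- parallelogram law
  have hCDA : (2:ℂ)⁻¹ • (A + B) + (2:ℂ)⁻¹ • (A - B) = A := by module
  have hCDB : (2:ℂ)⁻¹ • (A + B) - (2:ℂ)⁻¹ • (A - B) = B := by module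
  have hxA : Matrix.toEuclideanLin A x
      = Matrix.toEuclideanLin ((2:ℂ)⁻¹ • (A + B)) x
        + Matrix.toEuclideanLin ((2:ℂ)⁻¹ • (A - B)) x := by
    rw [← LinearMap.add_apply, ← _root_.map_add, hCDA]
  have hxB : Matrix.toEuclideanLin B x
      = Matrix.toEuclideanLin ((2:ℂ)⁻¹ • (A + B)) x
        - Matrix.toEuclideanLin ((2:ℂ)⁻¹ • (A - B)) x := by
    rw [← LinearMap.sub_apply, ← _root_.map_sub, hCDB]
  set u := Matrix.toEuclideanLin ((2:ℂ)⁻¹ • (A + B)) x with hu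
  set w := Matrix.toEuclideanLin ((2:ℂ)⁻¹ • (A - B)) x with hw
  have hpar : ‖u + w‖ ^ 2 + ‖u - w‖ ^ 2 = 2 * (‖u‖ ^ 2 + ‖w‖ ^ 2) := by
    simpa [sq] using parallelogram_law_with_norm ℂ u w
  -- tail bounds on the subspaces `S_C`, `S_D`
  have hc_le : (inner ℂ x (Matrix.toEuclideanLin ((((2:ℂ)⁻¹ • (A + B)))ᴴ
        * ((2:ℂ)⁻¹ • (A + B))) x) : ℂ).re ≤ eigDesc hCC ⟨j, by omega⟩ := by
    have h := quadform_le_of_mem_span (Matrix.toEuclideanLin _) (sortedBasis hCC) (eigDesc hCC)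
      (fun i => toEuclideanLin_sortedBasis hCC i) hxC
      (c := eigDesc hCC ⟨j, by omega⟩) (fun i hi => eigDesc_antitone hCC
        (show (⟨j, by omega⟩ : Fin n) ≤ i from Fin.le_def.mpr hi))
    rw [hx1] at h
    simpa using h
  have hd_le : (inner ℂ x (Matrix.toEuclideanLin ((((2:ℂ)⁻¹ • (A - B)))ᴴ
        * ((2:ℂ)⁻¹ • (A - B))) x) : ℂ).re ≤ eigDesc hDD ⟨k, by omega⟩ := by
    have h := quadform_le_of_mem_span (Matrix.toEuclideanLin _) (sortedBasis hDD) (eigDesc hDD)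
      (fun i => toEuclideanLin_sortedBasis hDD i) hxD
      (c := eigDesc hDD ⟨k, by omega⟩) (fun i hi => eigDesc_antitone hDD
        (show (⟨k, by omega⟩ : Fin n) ≤ i from Fin.le_def.mpr hi))
    rw [hx1] at h
    simpa using h
  rw [hcval] at hc_le
  rw [hdval] at hd_le
  -- eigenvalues of the cfc matrices
  have hCfinal : (eigDesc hCC ⟨j, by omega⟩) ^ (q / 2)
      ≤ eigDesc (Matrix.absRpow_isHermitian ((2:ℂ)⁻¹ • (A + B)) q) ⟨j, by omega⟩ :=
    rpow_eigDesc_le hCC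
      (fun i => (Matrix.posSemidef_conjTranspose_mul_self _).eigenvalues_nonneg i) hs0
      (Matrix.absRpow_isHermitian ((2:ℂ)⁻¹ • (A + B)) q) _
  have hDfinal : (eigDesc hDD ⟨k, by omega⟩) ^ (q / 2)
      ≤ eigDesc (Matrix.absRpow_isHermitian ((2:ℂ)⁻¹ • (A - B)) q) ⟨k, by omega⟩ :=
    rpow_eigDesc_le hDD
      (fun i => (Matrix.posSemidef_conjTranspose_mul_self _).eigenvalues_nonneg i) hs0
      (Matrix.absRpow_isHermitian ((2:ℂ)⁻¹ • (A - B)) q) _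
  -- scalar chain
  have hu0 : (0:ℝ) ≤ ‖u‖ ^ 2 := pow_nonneg (norm_nonneg _) 2
  have hw0 : (0:ℝ) ≤ ‖w‖ ^ 2 := pow_nonneg (norm_nonneg _) 2
  have hcc := Real.concaveOn_rpow hs0.le hs1.le
  have hconc := hcc.2
    (Set.mem_Ici.mpr (pow_nonneg (norm_nonneg (Matrix.toEuclideanLin A x)) 2))
    (Set.mem_Ici.mpr (pow_nonneg (norm_nonneg (Matrix.toEuclideanLin B x)) 2))
    (by norm_num : (0:ℝ) ≤ 2⁻¹) (by norm_num : (0:ℝ) ≤ 2⁻¹) (by norm_num)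
  have hmid : (2:ℝ)⁻¹ • (‖Matrix.toEuclideanLin A x‖ ^ 2)
      + (2:ℝ)⁻¹ • (‖Matrix.toEuclideanLin B x‖ ^ 2) = ‖u‖ ^ 2 + ‖w‖ ^ 2 := by
    rw [hxA, hxB, smul_eq_mul, smul_eq_mul]
    linarith [hpar]
  rw [hmid] at hconc
  have hsub : (‖u‖ ^ 2 + ‖w‖ ^ 2) ^ (q / 2) ≤ (‖u‖ ^ 2) ^ (q / 2) + (‖w‖ ^ 2) ^ (q / 2) :=
    real_rpow_add_le hu0 hw0 hs0.le hs1.le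
  have hcmono : (‖u‖ ^ 2) ^ (q / 2) ≤ (eigDesc hCC ⟨j, by omega⟩) ^ (q / 2) :=
    Real.rpow_le_rpow hu0 hc_le hs0.le
  have hdmono : (‖w‖ ^ 2) ^ (q / 2) ≤ (eigDesc hDD ⟨k, by omega⟩) ^ (q / 2) :=
    Real.rpow_le_rpow hw0 hd_le hs0.le
  have jA := jensenA.trans_eq (by rw [haval])
  have jB := jensenB.trans_eq (by rw [hbval])
  calc eigDesc hM ⟨j + k, by omega⟩
      ≤ 2⁻¹ * ((inner ℂ x (Matrix.toEuclideanLin (Matrix.absRpow A q) x) : ℂ).re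
          + (inner ℂ x (Matrix.toEuclideanLin (Matrix.absRpow B q) x) : ℂ).re) := by
        rw [← hMx]; exact step1
    _ ≤ 2⁻¹ * ((‖Matrix.toEuclideanLin A x‖ ^ 2) ^ (q / 2)
          + (‖Matrix.toEuclideanLin B x‖ ^ 2) ^ (q / 2)) := by
        have := add_le_add jA jB
        linarith
    _ ≤ (‖u‖ ^ 2 + ‖w‖ ^ 2) ^ (q / 2) := by
        have := hconc
        simp only [smul_eq_mul] at this
        linarith
    _ ≤ (‖u‖ ^ 2) ^ (q / 2) + (‖w‖ ^ 2) ^ (q / 2) := hsub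
    _ ≤ (eigDesc hCC ⟨j, by omega⟩) ^ (q / 2) + (eigDesc hDD ⟨k, by omega⟩) ^ (q / 2) :=
        add_le_add hcmono hdmono
    _ ≤ _ := add_le_add hCfinal hDfinal
end

section
/- Let Z be an n-by-n complex matrix with Cartesian decomposition Z = X + iY, where X and Y are Hermitian. Then there exist 2n-by-n isometry matrices U and V such that |Z|^2 ⊕ |Z|^2 = U(X^2 + Y^2)U* + V(X^2 + Y^2)V*. -/
open Matrix
open scoped ComplexOrder

lemma polar_aux {m' n' : Type*} [Fintype m'] [Fintype n'] [DecidableEq m'] [DecidableEq n']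
    (ι₀ : n' → m') (hι : Function.Injective ι₀) (c : Matrix m' n' ℂ) :
    ∃ U : Matrix m' n' ℂ, Uᴴ * U = 1 ∧ c * cᴴ = U * (cᴴ * c) * Uᴴ := by
  classical
  have hpsd : (cᴴ * c).PosSemidef := posSemidef_conjTranspose_mul_self c
  have hH : (cᴴ * c).IsHermitian := hpsd.1
  set V : Matrix n' n' ℂ := (hH.eigenvectorUnitary : Matrix n' n' ℂ) with hVdef
  set d : n' → ℝ := hH.eigenvalues with hddef
  have hd : ∀ j, 0 ≤ d j := fun j => hpsd.eigenvalues_nonneg j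
  have hdiag : star V * (cᴴ * c) * V = diagonal (fun j => ((d j : ℝ) : ℂ)) :=
    by have h := hH.conjStarAlgAut_star_eigenvectorUnitary; rw [Unitary.conjStarAlgAut_apply] at h
       simpa [hVdef, Function.comp_def] using h
  have hVV : V * Vᴴ = 1 := by
    rw [← star_eq_conjTranspose]
    exact Matrix.mem_unitaryGroup_iff.mp hH.eigenvectorUnitary.2
  have hVV' : Vᴴ * V = 1 := by
    rw [← star_eq_conjTranspose]
    exact Matrix.mem_unitaryGroup_iff'.mp hH.eigenvectorUnitary.2
  set B : Matrix m' n' ℂ := c * V with hBdef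
  have hBB : Bᴴ * B = diagonal (fun j => ((d j : ℝ) : ℂ)) := by
    rw [hBdef, conjTranspose_mul, ← star_eq_conjTranspose V]
    simp only [← Matrix.mul_assoc] at hdiag ⊢
    exact hdiag
  set bcol : n' → EuclideanSpace ℂ m' := fun j => WithLp.toLp 2 (fun i => B i j : m' → ℂ) with hbcol
  have hinner : ∀ j k,
      (inner ℂ (bcol j) (bcol k) : ℂ) = diagonal (fun j => ((d j : ℝ) : ℂ)) j k := by
    intro j k
    rw [← hBB]
    simp [PiLp.inner_apply, RCLike.inner_apply, Matrix.mul_apply, conjTranspose_apply,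
      hbcol, mul_comm]
  set u : n' → EuclideanSpace ℂ m' :=
    fun j => (((Real.sqrt (d j) : ℂ))⁻¹ : ℂ) • bcol j with hu
  set s : Set m' := ι₀ '' {j | d j ≠ 0} with hs
  set v : m' → EuclideanSpace ℂ m' := Function.extend ι₀ u (fun _ => 0) with hv
  have hvι : ∀ j, v (ι₀ j) = u j := fun j => hι.extend_apply u _ j
  have hon : Orthonormal ℂ (s.restrict v) := by
    rw [orthonormal_iff_ite]
    rintro ⟨i₁, hi₁⟩ ⟨i₂, hi₂⟩
    obtain ⟨j₁, hdj₁, rfl⟩ := hi₁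
    obtain ⟨j₂, hdj₂, rfl⟩ := hi₂
    show inner ℂ (v (ι₀ j₁)) (v (ι₀ j₂)) = _
    rw [hvι, hvι, hu]
    rw [inner_smul_left, inner_smul_right, hinner]
    have hsub : (⟨ι₀ j₁, ⟨j₁, hdj₁, rfl⟩⟩ : s) = (⟨ι₀ j₂, ⟨j₂, hdj₂, rfl⟩⟩ : s) ↔ j₁ = j₂ := by
      simp [Subtype.ext_iff, hι.eq_iff]
    by_cases hj : j₁ = j₂
    · subst hj
      rw [if_pos (hsub.mpr rfl)]
      have hdj : (0:ℝ) < d j₁ := lt_of_le_of_ne (hd j₁) (Ne.symm hdj₁)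
      have hsq : Real.sqrt (d j₁) * Real.sqrt (d j₁) = d j₁ := Real.mul_self_sqrt (hd j₁)
      have hsq0 : Real.sqrt (d j₁) ≠ 0 := (Real.sqrt_pos.mpr hdj).ne'
      rw [diagonal_apply_eq]
      simp only [map_inv₀, Complex.conj_ofReal]
      norm_cast
      field_simp
      rw [Real.sq_sqrt (hd j₁)]
    · rw [if_neg (fun h => hj (hsub.mp h)), diagonal_apply_ne _ hj]
      ring
  obtain ⟨b, hb⟩ := hon.exists_orthonormalBasis_extension_of_card_eq
    (by simp [finrank_euclideanSpace])
  set U₀ : Matrix m' n' ℂ := Matrix.of (fun i j => b (ι₀ j) i) with hU₀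
  have hbon := b.orthonormal
  rw [orthonormal_iff_ite] at hbon
  have hU₀1 : U₀ᴴ * U₀ = 1 := by
    ext j k
    have h := hbon (ι₀ j) (ι₀ k)
    rw [PiLp.inner_apply] at h
    simp only [RCLike.inner_apply] at h
    simp only [Matrix.mul_apply, conjTranspose_apply, hU₀, Matrix.of_apply, one_apply,
      hι.eq_iff] at h ⊢
    rw [← h]; exact Finset.sum_congr rfl fun x _ => mul_comm _ _
  have hBU : B = U₀ * Matrix.diagonal (fun j => (Real.sqrt (d j) : ℂ)) := by
    ext i j
    rw [Matrix.mul_diagonal]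
    by_cases hdj : d j = 0
    · have hzero : B i j = 0 := by
        have hentry : (Bᴴ * B) j j = 0 := by
          rw [hBB]; simp [diagonal_apply_eq, hdj]
        rw [Matrix.mul_apply] at hentry
        simp only [conjTranspose_apply] at hentry
        have hsum : ∑ i, (Complex.normSq (B i j) : ℂ) = 0 := by
          rw [← hentry]
          congr 1; funext i
          rw [Complex.normSq_eq_conj_mul_self]
          rfl
        have hsumr : ∑ i, Complex.normSq (B i j) = 0 := by
          exact_mod_cast hsum
        have := (Finset.sum_eq_zero_iff_of_nonneg
          (fun i _ => Complex.normSq_nonneg (B i j))).1 hsumr i (Finset.mem_univ i)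
        exact Complex.normSq_eq_zero.mp this
      simp [hzero, hdj]
    · have hmem : ι₀ j ∈ s := ⟨j, hdj, rfl⟩
      have hbj : b (ι₀ j) = u j := by rw [hb _ hmem, hvι]
      have hval : U₀ i j = ((Real.sqrt (d j) : ℂ))⁻¹ * B i j := by
        rw [hU₀]
        simp only [Matrix.of_apply, hbj, hu]
        rfl
      rw [hval]
      have hne : (Real.sqrt (d j) : ℂ) ≠ 0 := by
        have h0 : (0:ℝ) < d j := lt_of_le_of_ne (hd j) (Ne.symm hdj)
        simp [Real.sqrt_ne_zero'.mpr h0]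
      field_simp
  refine ⟨U₀ * Vᴴ, ?_, ?_⟩
  · rw [conjTranspose_mul, conjTranspose_conjTranspose]
    calc V * U₀ᴴ * (U₀ * Vᴴ) = V * (U₀ᴴ * U₀) * Vᴴ := by
          simp only [← Matrix.mul_assoc]
      _ = 1 := by rw [hU₀1, Matrix.mul_one, hVV]
  · have hfun : (fun j => (Real.sqrt (d j) : ℂ) * (Real.sqrt (d j) : ℂ))
        = fun j => ((d j : ℝ) : ℂ) := by
      funext j
      rw [← Complex.ofReal_mul, Real.mul_self_sqrt (hd j)]
    have hstar : (star fun j => ((Real.sqrt (d j) : ℝ) : ℂ))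
        = fun j => ((Real.sqrt (d j) : ℝ) : ℂ) := by
      funext j
      simp [Pi.star_apply, Complex.star_def, Complex.conj_ofReal]
    have hDD : Matrix.diagonal (fun j => (Real.sqrt (d j) : ℂ))
        * (Matrix.diagonal (fun j => (Real.sqrt (d j) : ℂ)))ᴴ
        = diagonal (fun j => ((d j : ℝ) : ℂ)) := by
      rw [diagonal_conjTranspose, hstar, diagonal_mul_diagonal, hfun]
    have h1 : c * cᴴ = B * Bᴴ := by
      rw [hBdef, conjTranspose_mul]
      calc c * cᴴ = c * (V * Vᴴ) * cᴴ := by rw [hVV, Matrix.mul_one]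
        _ = c * V * (Vᴴ * cᴴ) := by simp only [← Matrix.mul_assoc]
    rw [h1, hBU, conjTranspose_mul]
    calc U₀ * diagonal (fun j => (Real.sqrt (d j) : ℂ))
          * ((diagonal fun j => (Real.sqrt (d j) : ℂ))ᴴ * U₀ᴴ)
        = U₀ * (diagonal (fun j => (Real.sqrt (d j) : ℂ))
            * (diagonal fun j => (Real.sqrt (d j) : ℂ))ᴴ) * U₀ᴴ := by
          simp only [← Matrix.mul_assoc]
      _ = U₀ * (star V * (cᴴ * c) * V) * U₀ᴴ := by rw [hDD, hdiag]
      _ = U₀ * Vᴴ * (cᴴ * c) * (U₀ * Vᴴ)ᴴ := by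
          rw [conjTranspose_mul, conjTranspose_conjTranspose, star_eq_conjTranspose]
          simp only [← Matrix.mul_assoc]

/-- **Corollary 3.1.** If `Z = X + iY` is the Cartesian decomposition of an `n`-by-`n`
complex matrix (`X, Y` Hermitian), then `|Z|² ⊕ |Z|² = U(X²+Y²)U* + V(X²+Y²)V*` for some
`2n`-by-`n` isometries `U, V`, where `|Z|² = ZᴴZ`. -/
theorem cartesian_square_isometries {n : ℕ} (Z X Y : Matrix (Fin n) (Fin n) ℂ)
    (hX : X.IsHermitian) (hY : Y.IsHermitian) (hZ : Z = X + Complex.I • Y) :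
    ∃ U V : Matrix (Fin n ⊕ Fin n) (Fin n) ℂ,
      Uᴴ * U = 1 ∧ Vᴴ * V = 1 ∧
      Matrix.fromBlocks (Zᴴ * Z) 0 0 (Zᴴ * Z)
        = U * (X ^ 2 + Y ^ 2) * Uᴴ + V * (X ^ 2 + Y ^ 2) * Vᴴ := by
  classical
  have hZH : Zᴴ = X - Complex.I • Y := by
    rw [hZ, conjTranspose_add, conjTranspose_smul, hX.eq, hY.eq, Complex.star_def,
      Complex.conj_I, neg_smul, ← sub_eq_add_neg]
  have h1 : Zᴴ * Z = X * X + Y * Y + Complex.I • (X * Y - Y * X) := by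
    rw [hZH, hZ]
    simp only [sub_mul, mul_add, Matrix.mul_smul, Matrix.smul_mul, smul_smul,
      Complex.I_mul_I, neg_one_smul, smul_sub]
    abel
  have h2 : Z * Zᴴ = X * X + Y * Y - Complex.I • (X * Y - Y * X) := by
    rw [hZH, hZ]
    simp only [sub_mul, mul_sub, add_mul, Matrix.mul_smul, Matrix.smul_mul, smul_smul,
      Complex.I_mul_I, neg_one_smul, smul_sub]
    abel
  have hsum : Z * Zᴴ + Zᴴ * Z = (2:ℂ) • (X ^ 2 + Y ^ 2) := by
    rw [h1, h2, pow_two, pow_two, two_smul]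
    abel
  obtain ⟨q, hq1, hq2⟩ := polar_aux (id : Fin n → Fin n) Function.injective_id Zᴴ
  rw [conjTranspose_conjTranspose] at hq2
  -- hq2 : Zᴴ * Z = q * (Z * Zᴴ) * qᴴ
  set c₁ : Matrix (Fin n ⊕ Fin n) (Fin n) ℂ := fromRows Zᴴ Z with hc₁def
  set c₂ : Matrix (Fin n ⊕ Fin n) (Fin n) ℂ := fromRows Zᴴ (-Z) with hc₂def
  obtain ⟨U₁, hU₁, hc₁⟩ := polar_aux (Sum.inl : Fin n → Fin n ⊕ Fin n) Sum.inl_injective c₁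
  obtain ⟨U₂, hU₂, hc₂⟩ := polar_aux (Sum.inl : Fin n → Fin n ⊕ Fin n) Sum.inl_injective c₂
  have hc₁S : c₁ᴴ * c₁ = (2:ℂ) • (X ^ 2 + Y ^ 2) := by
    rw [hc₁def, conjTranspose_fromRows_eq_fromCols_conjTranspose,
      fromCols_mul_fromRows, conjTranspose_conjTranspose, hsum]
  have hc₂S : c₂ᴴ * c₂ = (2:ℂ) • (X ^ 2 + Y ^ 2) := by
    rw [hc₂def, conjTranspose_fromRows_eq_fromCols_conjTranspose,
      fromCols_mul_fromRows, conjTranspose_conjTranspose, conjTranspose_neg,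
      neg_mul_neg, hsum]
  have hprod : c₁ * c₁ᴴ + c₂ * c₂ᴴ
      = fromBlocks ((2:ℂ) • (Zᴴ * Z)) 0 0 ((2:ℂ) • (Z * Zᴴ)) := by
    rw [hc₁def, hc₂def, conjTranspose_fromRows_eq_fromCols_conjTranspose,
      conjTranspose_fromRows_eq_fromCols_conjTranspose, conjTranspose_conjTranspose,
      conjTranspose_neg, fromRows_mul_fromCols,
      fromRows_mul_fromCols, fromBlocks_add]
    congr <;> simp [mul_neg, neg_mul, two_smul]
  set P : Matrix (Fin n ⊕ Fin n) (Fin n ⊕ Fin n) ℂ := fromBlocks 1 0 0 q with hPdef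
  have hP : Pᴴ * P = 1 := by
    rw [hPdef, fromBlocks_conjTranspose, fromBlocks_multiply]
    simp [hq1]
  refine ⟨P * U₁, P * U₂, ?_, ?_, ?_⟩
  · rw [conjTranspose_mul]
    calc U₁ᴴ * Pᴴ * (P * U₁) = U₁ᴴ * (Pᴴ * P) * U₁ := by simp only [← Matrix.mul_assoc]
      _ = 1 := by rw [hP, Matrix.mul_one, hU₁]
  · rw [conjTranspose_mul]
    calc U₂ᴴ * Pᴴ * (P * U₂) = U₂ᴴ * (Pᴴ * P) * U₂ := by simp only [← Matrix.mul_assoc]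
      _ = 1 := by rw [hP, Matrix.mul_one, hU₂]
  · apply smul_right_injective (Matrix (Fin n ⊕ Fin n) (Fin n ⊕ Fin n) ℂ)
      (two_ne_zero : (2:ℂ) ≠ 0)
    have hterm : ∀ (c U : Matrix (Fin n ⊕ Fin n) (Fin n) ℂ),
        c * cᴴ = U * (cᴴ * c) * Uᴴ → cᴴ * c = (2:ℂ) • (X ^ 2 + Y ^ 2) →
        (2:ℂ) • (P * U * (X ^ 2 + Y ^ 2) * (P * U)ᴴ) = P * (c * cᴴ) * Pᴴ := by
      intro c U hcU hcS
      rw [hcU, hcS, conjTranspose_mul]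
      simp only [Matrix.mul_smul, Matrix.smul_mul, ← Matrix.mul_assoc]
    have hL : (2:ℂ) • (P * U₁ * (X ^ 2 + Y ^ 2) * (P * U₁)ᴴ
        + P * U₂ * (X ^ 2 + Y ^ 2) * (P * U₂)ᴴ)
        = P * (c₁ * c₁ᴴ + c₂ * c₂ᴴ) * Pᴴ := by
      rw [smul_add, hterm c₁ U₁ hc₁ hc₁S, hterm c₂ U₂ hc₂ hc₂S, Matrix.mul_add,
        Matrix.add_mul]
    show (2:ℂ) • fromBlocks (Zᴴ * Z) 0 0 (Zᴴ * Z)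
      = (2:ℂ) • (P * U₁ * (X ^ 2 + Y ^ 2) * (P * U₁)ᴴ + P * U₂ * (X ^ 2 + Y ^ 2) * (P * U₂)ᴴ)
    rw [hL, hprod, hPdef, fromBlocks_conjTranspose, fromBlocks_multiply, fromBlocks_multiply,
      fromBlocks_smul]
    simp only [Matrix.mul_zero, Matrix.zero_mul, Matrix.one_mul, Matrix.mul_one, add_zero,
      zero_add, conjTranspose_zero, conjTranspose_one, smul_zero]
    congr 1
    rw [Matrix.mul_smul, Matrix.smul_mul, ← hq2]
end

section
/- Let A, B be n-by-n complex matrices and let p > 2. Then for all j ∈ {0, ..., n-1}, the (2j+1)-th largest eigenvalue of the 2n-by-2n matrix |(A+B)/2|^p ⊕ |(A-B)/2|^p is at most the (j+1)-th largest eigenvalue of (|A|^p + |B|^p)/2. -/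
open Matrix
open scoped ComplexOrder

lemma fromBlocks_isHermitian {n : ℕ} {X Y : Matrix (Fin n) (Fin n) ℂ}
    (hX : X.IsHermitian) (hY : Y.IsHermitian) :
    (Matrix.fromBlocks X 0 0 Y).IsHermitian := by
  unfold Matrix.IsHermitian
  rw [Matrix.fromBlocks_conjTranspose, hX.eq, hY.eq, Matrix.conjTranspose_zero]

/-- The `2n`-by-`2n` direct sum `X ⊕ Y`, reindexed over `Fin (n + n)`. -/
def directSum {n : ℕ} (X Y : Matrix (Fin n) (Fin n) ℂ) :
    Matrix (Fin (n + n)) (Fin (n + n)) ℂ :=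
  (Matrix.fromBlocks X 0 0 Y).submatrix finSumFinEquiv.symm finSumFinEquiv.symm

lemma directSum_isHermitian {n : ℕ} {X Y : Matrix (Fin n) (Fin n) ℂ}
    (hX : X.IsHermitian) (hY : Y.IsHermitian) : (directSum X Y).IsHermitian :=
  (fromBlocks_isHermitian hX hY).submatrix _

noncomputable section
namespace CF

variable {N : ℕ}

lemma ofReal_eq : (RCLike.ofReal : ℝ → ℂ) = Complex.ofReal := rfl

/-- quadratic form of a matrix -/
def qf (M : Matrix (Fin N) (Fin N) ℂ) (x : Fin N → ℂ) : ℝ := (star x ⬝ᵥ (M *ᵥ x)).re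

/-- squared norm -/
def nsq (x : Fin N → ℂ) : ℝ := ∑ i, Complex.normSq (x i)

lemma nsq_nonneg (x : Fin N → ℂ) : 0 ≤ nsq x :=
  Finset.sum_nonneg fun i _ => Complex.normSq_nonneg _

lemma nsq_pos {x : Fin N → ℂ} (hx : x ≠ 0) : 0 < nsq x := by
  obtain ⟨i, hi⟩ := Function.ne_iff.mp hx
  exact Finset.sum_pos' (fun j _ => Complex.normSq_nonneg _)
    ⟨i, Finset.mem_univ i, Complex.normSq_pos.mpr hi⟩

lemma qf_add (M M' : Matrix (Fin N) (Fin N) ℂ) (x : Fin N → ℂ) :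
    qf (M + M') x = qf M x + qf M' x := by
  simp [qf, Matrix.add_mulVec, dotProduct_add]

lemma qf_smul_half (M : Matrix (Fin N) (Fin N) ℂ) (x : Fin N → ℂ) :
    qf ((2:ℂ)⁻¹ • M) x = 2⁻¹ * qf M x := by
  simp [qf, Matrix.smul_mulVec, dotProduct_smul]

lemma qf_posSemidef {M : Matrix (Fin N) (Fin N) ℂ} (hM : M.PosSemidef) (x : Fin N → ℂ) :
    0 ≤ qf M x := hM.re_dotProduct_nonneg x


section unitary
variable {U : Matrix (Fin N) (Fin N) ℂ} (hU : U ∈ Matrix.unitaryGroup (Fin N) ℂ)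

lemma star_coord (x : Fin N → ℂ) : star x ᵥ* U = star ((star U) *ᵥ x) := by
  simp [Matrix.star_mulVec, Matrix.star_eq_conjTranspose]

include hU in
lemma nsq_eq_sum_coord (x : Fin N → ℂ) :
    nsq x = ∑ i, Complex.normSq ((star U *ᵥ x) i) := by
  have h1 : star x ⬝ᵥ x = star (star U *ᵥ x) ⬝ᵥ (star U *ᵥ x) := by
    rw [← star_coord, ← Matrix.dotProduct_mulVec, Matrix.mulVec_mulVec,
      (Matrix.mem_unitaryGroup_iff.mp hU : U * star U = 1)]
    simp
  have h2 : nsq x = (star x ⬝ᵥ x).re := by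
    simp [nsq, dotProduct, Complex.normSq_eq_conj_mul_self, Complex.normSq_apply]
  rw [h2, h1]
  simp [dotProduct, Complex.normSq_eq_conj_mul_self, Complex.normSq_apply]

lemma qf_unitary_diag (w : Fin N → ℝ) (x : Fin N → ℂ) :
    qf (U * diagonal (RCLike.ofReal ∘ w) * star U) x
      = ∑ i, w i * Complex.normSq ((star U *ᵥ x) i) := by
  set c := star U *ᵥ x with hc
  have : (U * diagonal (RCLike.ofReal ∘ w) * star U) *ᵥ x
      = U *ᵥ (diagonal (RCLike.ofReal ∘ w) *ᵥ c) := by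
    rw [← Matrix.mulVec_mulVec, ← Matrix.mulVec_mulVec]
  rw [qf, this, Matrix.dotProduct_mulVec, star_coord, ← hc]
  have : star c ⬝ᵥ (diagonal (RCLike.ofReal ∘ w) *ᵥ c)
      = ∑ i, (w i : ℂ) * ((starRingEnd ℂ) (c i) * c i) := by
    simp only [dotProduct, Matrix.mulVec_diagonal, Pi.star_apply, RCLike.star_def,
      Function.comp_apply, ofReal_eq]
    exact Finset.sum_congr rfl fun i _ => by ring
  rw [this]
  push_cast
  simp [← Complex.normSq_eq_conj_mul_self]


include hU in
lemma qf_le_of_coords (w : Fin N → ℝ) (t : ℝ) (B : Finset (Fin N))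
    (hw : ∀ i ∉ B, w i ≤ t) (x : Fin N → ℂ) (hx : ∀ i ∈ B, (star U *ᵥ x) i = 0) :
    qf (U * diagonal (RCLike.ofReal ∘ w) * star U) x ≤ t * nsq x := by
  rw [qf_unitary_diag, nsq_eq_sum_coord hU, Finset.mul_sum]
  refine Finset.sum_le_sum fun i _ => ?_
  by_cases hi : i ∈ B
  · simp [hx i hi]
  · exact mul_le_mul_of_nonneg_right (hw i hi) (Complex.normSq_nonneg _)

include hU in
lemma qf_ge_of_coords (w : Fin N → ℝ) (t : ℝ) (B : Finset (Fin N))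
    (hw : ∀ i ∉ B, t ≤ w i) (x : Fin N → ℂ) (hx : ∀ i ∈ B, (star U *ᵥ x) i = 0) :
    t * nsq x ≤ qf (U * diagonal (RCLike.ofReal ∘ w) * star U) x := by
  rw [qf_unitary_diag, nsq_eq_sum_coord hU, Finset.mul_sum]
  refine Finset.sum_le_sum fun i _ => ?_
  by_cases hi : i ∈ B
  · simp [hx i hi]
  · exact mul_le_mul_of_nonneg_right (hw i hi) (Complex.normSq_nonneg _)

end unitary

lemma exists_ne_zero_ker {W : Type} [AddCommGroup W] [Module ℂ W] [FiniteDimensional ℂ W]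
    (Φ : (Fin N → ℂ) →ₗ[ℂ] W) (h : Module.finrank ℂ W < N) : ∃ x, x ≠ 0 ∧ Φ x = 0 := by
  by_contra h'
  push_neg at h'
  have hinj : Function.Injective Φ := by
    rw [← LinearMap.ker_eq_bot, LinearMap.ker_eq_bot']
    intro m hm
    by_contra hm0
    exact h' m hm0 hm
  have hle := LinearMap.finrank_le_finrank_of_injective hinj
  rw [Module.finrank_pi, Fintype.card_fin] at hle
  omega

/-- the linear map extracting the coordinates (in the `star U` frame) indexed by `B` -/
def coordMap (U : Matrix (Fin N) (Fin N) ℂ) (B : Finset (Fin N)) :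
    (Fin N → ℂ) →ₗ[ℂ] (B → ℂ) where
  toFun x := fun i => (star U *ᵥ x) i.1
  map_add' x y := by ext i; simp [Matrix.mulVec_add]
  map_smul' c x := by ext i; simp [Matrix.mulVec_smul]

lemma coordMap_eq_zero {U : Matrix (Fin N) (Fin N) ℂ} {B : Finset (Fin N)} {x : Fin N → ℂ}
    (h : coordMap U B x = 0) : ∀ i ∈ B, (star U *ᵥ x) i = 0 := by
  intro i hi
  exact congrFun h ⟨i, hi⟩

section herm
variable {M : Matrix (Fin N) (Fin N) ℂ} (hM : M.IsHermitian) (k : Fin N)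

/-- indices where the eigenvalue is among the `N-(k+1)` smallest -/
def topBad : Finset (Fin N) := (Finset.Iio k.rev).image (Tuple.sort hM.eigenvalues)

/-- indices where the eigenvalue is among the `k` largest -/
def botBad : Finset (Fin N) := (Finset.Ioi k.rev).image (Tuple.sort hM.eigenvalues)

lemma card_topBad : (topBad hM k).card = N - (k + 1) := by
  rw [topBad, Finset.card_image_of_injective _ (Tuple.sort hM.eigenvalues).injective,
    Fin.card_Iio, Fin.val_rev]

lemma card_botBad : (botBad hM k).card = k := by
  rw [botBad, Finset.card_image_of_injective _ (Tuple.sort hM.eigenvalues).injective,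
    Fin.card_Ioi, Fin.val_rev]
  omega

lemma eigDesc_def : eigDesc hM k = hM.eigenvalues (Tuple.sort hM.eigenvalues k.rev) := rfl

lemma topBad_spec : ∀ i ∉ topBad hM k, eigDesc hM k ≤ hM.eigenvalues i := by
  intro i hi
  set σ := Tuple.sort hM.eigenvalues
  have h1 : k.rev ≤ σ.symm i := by
    by_contra h
    exact hi (Finset.mem_image.mpr ⟨σ.symm i, Finset.mem_Iio.mpr (not_le.mp h), σ.apply_symm_apply i⟩)
  have := Tuple.monotone_sort hM.eigenvalues h1
  simpa [σ, Function.comp, eigDesc_def] using this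

lemma botBad_spec : ∀ i ∉ botBad hM k, hM.eigenvalues i ≤ eigDesc hM k := by
  intro i hi
  set σ := Tuple.sort hM.eigenvalues
  have h1 : σ.symm i ≤ k.rev := by
    by_contra h
    exact hi (Finset.mem_image.mpr ⟨σ.symm i, Finset.mem_Ioi.mpr (not_le.mp h), σ.apply_symm_apply i⟩)
  have := Tuple.monotone_sort hM.eigenvalues h1
  simpa [σ, Function.comp, eigDesc_def] using this

end herm

end CF

namespace CF
variable {N : ℕ}

lemma nsq_smul (r : ℝ) (x : Fin N → ℂ) : nsq ((r:ℂ) • x) = r^2 * nsq x := by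
  simp [nsq, Complex.normSq_mul, Finset.mul_sum, Complex.normSq_ofReal, pow_two]

lemma qf_smul_vec (M : Matrix (Fin N) (Fin N) ℂ) (r : ℝ) (x : Fin N → ℂ) :
    qf M ((r:ℂ) • x) = r^2 * qf M x := by
  have : star ((r:ℂ) • x) = (r:ℂ) • star x := by
    ext i; simp [Complex.conj_ofReal]
  rw [qf, Matrix.mulVec_smul, this, smul_dotProduct, dotProduct_smul]
  simp [qf, pow_two, mul_assoc]

lemma sandwich {d t s q : ℝ} (hs : 0 < s) (h1 : d * s ≤ q) (h2 : q ≤ t * s) : d ≤ t :=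
  le_of_mul_le_mul_right (h1.trans h2) hs

/-- The key one-sided minimax principle: if the quadratic form of `M` is `≤ t·‖x‖²` on the
kernel of a linear map into a space of dimension `≤ k`, then `λ_k^↓(M) ≤ t`. -/
lemma eigDesc_le_of_subspace {M : Matrix (Fin N) (Fin N) ℂ} (hM : M.IsHermitian) (k : Fin N)
    (t : ℝ) {W : Type} [AddCommGroup W] [Module ℂ W] [FiniteDimensional ℂ W]
    (Φ : (Fin N → ℂ) →ₗ[ℂ] W) (hW : Module.finrank ℂ W ≤ k)
    (hqf : ∀ x, Φ x = 0 → qf M x ≤ t * nsq x) : eigDesc hM k ≤ t := by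
  have hU : (hM.eigenvectorUnitary : Matrix (Fin N) (Fin N) ℂ) ∈ Matrix.unitaryGroup (Fin N) ℂ :=
    SetLike.coe_mem _
  obtain ⟨x, hx0, hker⟩ := exists_ne_zero_ker
      (Φ.prod (coordMap (hM.eigenvectorUnitary : Matrix (Fin N) (Fin N) ℂ) (topBad hM k)))
      (by
        rw [Module.finrank_prod, Module.finrank_pi, Fintype.card_coe, card_topBad]
        have := k.isLt
        omega)
  rw [LinearMap.prod_apply, Prod.mk_eq_zero] at hker
  obtain ⟨hker1, hker2⟩ := hker
  have h2 : eigDesc hM k * nsq x ≤ qf M x := by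
    have := qf_ge_of_coords hU hM.eigenvalues (eigDesc hM k) (topBad hM k)
      (topBad_spec hM k) x (coordMap_eq_zero hker2)
    convert this using 2 <;> exact hM.spectral_theorem
  exact sandwich (nsq_pos hx0) h2 (hqf x hker1)

/-- There is a unit vector witnessing both `λ_k^↓(X) ≤ ⟨x,Xx⟩` and `⟨x,Yx⟩ ≤ λ_k^↓(Y)`. -/
lemma exists_unit_vec {X Y : Matrix (Fin N) (Fin N) ℂ} (hX : X.IsHermitian)
    (hY : Y.IsHermitian) (k : Fin N) :
    ∃ x : Fin N → ℂ, nsq x = 1 ∧ eigDesc hX k ≤ qf X x ∧ qf Y x ≤ eigDesc hY k := by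
  have hUX : (hX.eigenvectorUnitary : Matrix (Fin N) (Fin N) ℂ) ∈ Matrix.unitaryGroup (Fin N) ℂ :=
    SetLike.coe_mem _
  have hUY : (hY.eigenvectorUnitary : Matrix (Fin N) (Fin N) ℂ) ∈ Matrix.unitaryGroup (Fin N) ℂ :=
    SetLike.coe_mem _
  obtain ⟨x, hx0, hker⟩ := exists_ne_zero_ker
      ((coordMap (hX.eigenvectorUnitary : Matrix (Fin N) (Fin N) ℂ) (topBad hX k)).prod
        (coordMap (hY.eigenvectorUnitary : Matrix (Fin N) (Fin N) ℂ) (botBad hY k)))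
      (by
        rw [Module.finrank_prod, Module.finrank_pi, Module.finrank_pi, Fintype.card_coe,
          Fintype.card_coe, card_topBad, card_botBad]
        have := k.isLt
        omega)
  rw [LinearMap.prod_apply, Prod.mk_eq_zero] at hker
  obtain ⟨hker1, hker2⟩ := hker
  have h1 : eigDesc hX k * nsq x ≤ qf X x := by
    have := qf_ge_of_coords hUX hX.eigenvalues (eigDesc hX k) (topBad hX k)
      (topBad_spec hX k) x (coordMap_eq_zero hker1)
    convert this using 2 <;> exact hX.spectral_theorem
  have h2 : qf Y x ≤ eigDesc hY k * nsq x := by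
    have := qf_le_of_coords hUY hY.eigenvalues (eigDesc hY k) (botBad hY k)
      (botBad_spec hY k) x (coordMap_eq_zero hker2)
    convert this using 2 <;> exact hY.spectral_theorem
  -- normalize
  set s := nsq x with hs
  have hspos : 0 < s := nsq_pos hx0
  set r : ℝ := (Real.sqrt s)⁻¹ with hr
  have hr2 : r^2 * s = 1 := by
    rw [hr, ← Real.sqrt_inv, Real.sq_sqrt (inv_nonneg.mpr hspos.le), inv_mul_cancel₀ hspos.ne']
  refine ⟨(r:ℂ) • x, by rw [nsq_smul, ← hs, hr2], ?_, ?_⟩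
  · rw [qf_smul_vec]
    calc eigDesc hX k = eigDesc hX k * (r^2 * s) := by rw [hr2]; ring
    _ = r^2 * (eigDesc hX k * s) := by ring
    _ ≤ r^2 * qf X x := by
        apply mul_le_mul_of_nonneg_left h1 (sq_nonneg r)
  · rw [qf_smul_vec]
    calc r^2 * qf Y x ≤ r^2 * (eigDesc hY k * s) := mul_le_mul_of_nonneg_left h2 (sq_nonneg r)
    _ = eigDesc hY k * (r^2 * s) := by ring
    _ = eigDesc hY k := by rw [hr2]; ring

end CF

namespace CF
variable {N : ℕ}

lemma cfc_form {H : Matrix (Fin N) (Fin N) ℂ} (hH : H.IsHermitian) (g : ℝ → ℝ) :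
    cfc g H = (hH.eigenvectorUnitary : Matrix (Fin N) (Fin N) ℂ)
        * diagonal (RCLike.ofReal ∘ (g ∘ hH.eigenvalues))
        * star (hH.eigenvectorUnitary : Matrix (Fin N) (Fin N) ℂ) := by
  rw [hH.cfc_eq]
  rfl

lemma eigDesc_nonneg {H : Matrix (Fin N) (Fin N) ℂ} (hH : H.PosSemidef) (k : Fin N) :
    0 ≤ eigDesc hH.1 k :=
  hH.eigenvalues_nonneg _

/-- Jensen's inequality for the functional calculus: for a convex `g` and unit `x`,
`g(⟨x, Hx⟩) ≤ ⟨x, g(H) x⟩`. -/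
lemma jensen {H : Matrix (Fin N) (Fin N) ℂ} (hH : H.PosSemidef) {g : ℝ → ℝ}
    (hg : ConvexOn ℝ (Set.Ici 0) g) (x : Fin N → ℂ) (hx : nsq x = 1) :
    g (qf H x) ≤ qf (cfc g H) x := by
  have hU : (hH.1.eigenvectorUnitary : Matrix (Fin N) (Fin N) ℂ) ∈ Matrix.unitaryGroup (Fin N) ℂ :=
    SetLike.coe_mem _
  set c := star (hH.1.eigenvectorUnitary : Matrix (Fin N) (Fin N) ℂ) *ᵥ x with hc
  have hqH : qf H x = ∑ i, hH.1.eigenvalues i * Complex.normSq (c i) := by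
    conv_lhs => rw [hH.1.spectral_theorem]
    exact qf_unitary_diag _ x
  have hqg : qf (cfc g H) x = ∑ i, g (hH.1.eigenvalues i) * Complex.normSq (c i) := by
    conv_lhs => rw [cfc_form hH.1 g]
    exact qf_unitary_diag _ x
  have hsum : ∑ i, Complex.normSq (c i) = 1 := by
    rw [← nsq_eq_sum_coord hU, hx]
  have := hg.map_sum_le (t := Finset.univ) (w := fun i => Complex.normSq (c i))
    (p := hH.1.eigenvalues) (fun i _ => Complex.normSq_nonneg _) hsum
    (fun i _ => hH.eigenvalues_nonneg i)
  rw [hqH, hqg]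
  calc g (∑ i, hH.1.eigenvalues i * Complex.normSq (c i))
      = g (∑ i, Complex.normSq (c i) • hH.1.eigenvalues i) := by
        congr 1; exact Finset.sum_congr rfl fun i _ => by rw [smul_eq_mul]; ring
    _ ≤ ∑ i, Complex.normSq (c i) • g (hH.1.eigenvalues i) := this
    _ = ∑ i, g (hH.1.eigenvalues i) * Complex.normSq (c i) :=
        Finset.sum_congr rfl fun i _ => by rw [smul_eq_mul]; ring

/-- eigenvalue comparison: if `g(⟨x,Xx⟩) ≤ ⟨x,Yx⟩` on unit vectors, with `g` monotone
(on `[0,∞)`), `X` psd, then `λ_k^↓(g(X)) ≤ λ_k^↓(Y)`. -/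
lemma claimC {X Y : Matrix (Fin N) (Fin N) ℂ} (hX : X.PosSemidef) (hY : Y.IsHermitian)
    {g : ℝ → ℝ} (hmono : MonotoneOn g (Set.Ici 0)) (hgX : (cfc g X).IsHermitian) (k : Fin N)
    (hform : ∀ x, nsq x = 1 → g (qf X x) ≤ qf Y x) :
    eigDesc hgX k ≤ eigDesc hY k := by
  have hUX : (hX.1.eigenvectorUnitary : Matrix (Fin N) (Fin N) ℂ) ∈ Matrix.unitaryGroup (Fin N) ℂ :=
    SetLike.coe_mem _
  have hd0 : 0 ≤ eigDesc hX.1 k := eigDesc_nonneg hX k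
  have C1 : eigDesc hgX k ≤ g (eigDesc hX.1 k) := by
    refine eigDesc_le_of_subspace hgX k _
      (coordMap (hX.1.eigenvectorUnitary : Matrix (Fin N) (Fin N) ℂ) (botBad hX.1 k))
      (by rw [Module.finrank_pi, Fintype.card_coe, card_botBad]) ?_
    intro x hker
    have hspec : ∀ i ∉ botBad hX.1 k, (g ∘ hX.1.eigenvalues) i ≤ g (eigDesc hX.1 k) :=
      fun i hi => hmono (hX.eigenvalues_nonneg i) hd0 (botBad_spec hX.1 k i hi)
    have := qf_le_of_coords hUX (g ∘ hX.1.eigenvalues) (g (eigDesc hX.1 k)) (botBad hX.1 k)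
      hspec x (coordMap_eq_zero hker)
    rwa [← cfc_form hX.1 g] at this
  have C2 : g (eigDesc hX.1 k) ≤ eigDesc hY k := by
    obtain ⟨x, hx1, hxX, hxY⟩ := exists_unit_vec hX.1 hY k
    have h1 : g (eigDesc hX.1 k) ≤ g (qf X x) :=
      hmono hd0 (hd0.trans hxX) hxX
    exact h1.trans ((hform x hx1).trans hxY)
  exact C1.trans C2

end CF

namespace CF
variable {n : ℕ}

lemma parallelogram (A B : Matrix (Fin n) (Fin n) ℂ) :
    ((2:ℂ)⁻¹ • (A + B))ᴴ * ((2:ℂ)⁻¹ • (A + B)) + ((2:ℂ)⁻¹ • (A - B))ᴴ * ((2:ℂ)⁻¹ • (A - B))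
      = (2:ℂ)⁻¹ • (Aᴴ * A + Bᴴ * B) := by
  rw [Matrix.conjTranspose_smul, Matrix.conjTranspose_smul]
  simp only [Matrix.conjTranspose_add, Matrix.conjTranspose_sub, Matrix.smul_mul,
    Matrix.mul_smul, Matrix.add_mul, Matrix.sub_mul, Matrix.mul_add, Matrix.mul_sub,
    smul_smul, star_inv₀, RCLike.star_def, map_ofNat]
  module

/-- the per-block eigenvalue bound. -/
lemma block_le (A B C D' : Matrix (Fin n) (Fin n) ℂ)
    (hid : Cᴴ * C + D'ᴴ * D' = (2:ℂ)⁻¹ • (Aᴴ * A + Bᴴ * B)) (p : ℝ) (hp : 2 < p)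
    (hC : (Matrix.absRpow C p).IsHermitian)
    (hN : ((2:ℂ)⁻¹ • (Matrix.absRpow A p + Matrix.absRpow B p)).IsHermitian) (k : Fin n) :
    eigDesc hC k ≤ eigDesc hN k := by
  have hp2 : (1:ℝ) ≤ p / 2 := by linarith
  set g : ℝ → ℝ := fun t => t ^ (p / 2) with hg
  have hgcvx : ConvexOn ℝ (Set.Ici 0) g := convexOn_rpow hp2
  have hmono : MonotoneOn g (Set.Ici 0) := fun a ha b _ hab =>
    Real.rpow_le_rpow ha hab (by linarith)
  have hXC : (Cᴴ * C).PosSemidef := Matrix.posSemidef_conjTranspose_mul_self C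
  have hXA : (Aᴴ * A).PosSemidef := Matrix.posSemidef_conjTranspose_mul_self A
  have hXB : (Bᴴ * B).PosSemidef := Matrix.posSemidef_conjTranspose_mul_self B
  have hXD : (D'ᴴ * D').PosSemidef := Matrix.posSemidef_conjTranspose_mul_self D'
  refine claimC hXC hN hmono hC k ?_
  intro x hx1
  set qX := qf (Cᴴ * C) x with hqX
  set qa := qf (Aᴴ * A) x with hqa
  set qb := qf (Bᴴ * B) x with hqb
  have hkey : qX + qf (D'ᴴ * D') x = 2⁻¹ * (qa + qb) := by
    rw [hqX, ← qf_add, hid, qf_smul_half, qf_add]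
  have hqX_le : qX ≤ 2⁻¹ * (qa + qb) := by
    have := qf_posSemidef hXD x
    linarith
  have h0X : 0 ≤ qX := qf_posSemidef hXC x
  have h0a : 0 ≤ qa := qf_posSemidef hXA x
  have h0b : 0 ≤ qb := qf_posSemidef hXB x
  calc g qX ≤ g (2⁻¹ * (qa + qb)) := hmono h0X (Set.mem_Ici.mpr (by positivity)) hqX_le
    _ = g ((2:ℝ)⁻¹ • qa + (2:ℝ)⁻¹ • qb) := by norm_num; ring_nf
    _ ≤ (2:ℝ)⁻¹ • g qa + (2:ℝ)⁻¹ • g qb :=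
        hgcvx.2 h0a h0b (by norm_num) (by norm_num) (by norm_num)
    _ ≤ (2:ℝ)⁻¹ • qf (Matrix.absRpow A p) x + (2:ℝ)⁻¹ • qf (Matrix.absRpow B p) x := by
        have ja := jensen hXA hgcvx x hx1
        have jb := jensen hXB hgcvx x hx1
        have ea : qf (cfc g (Aᴴ * A)) x = qf (Matrix.absRpow A p) x := rfl
        have eb : qf (cfc g (Bᴴ * B)) x = qf (Matrix.absRpow B p) x := rfl
        rw [ea] at ja; rw [eb] at jb
        simp only [smul_eq_mul]
        have : (0:ℝ) ≤ 2⁻¹ := by norm_num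
        nlinarith
    _ = qf ((2:ℂ)⁻¹ • (Matrix.absRpow A p + Matrix.absRpow B p)) x := by
        rw [qf_smul_half, qf_add]; simp [smul_eq_mul]; ring

end CF

namespace CF
variable {n : ℕ}

lemma qf_directSum (M1 M2 : Matrix (Fin n) (Fin n) ℂ) (x : Fin (n+n) → ℂ) :
    qf (directSum M1 M2) x
      = qf M1 (fun i => x (finSumFinEquiv (Sum.inl i)))
        + qf M2 (fun i => x (finSumFinEquiv (Sum.inr i))) := by
  rw [qf, directSum, Matrix.submatrix_mulVec_equiv, Equiv.symm_symm]
  have hstar : star x ∘ ⇑finSumFinEquiv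
      = Sum.elim (star (fun i => x (finSumFinEquiv (Sum.inl i))))
          (star (fun i => x (finSumFinEquiv (Sum.inr i)))) := by
    ext s; cases s <;> simp
  have hx : x ∘ ⇑finSumFinEquiv
      = Sum.elim (fun i => x (finSumFinEquiv (Sum.inl i)))
          (fun i => x (finSumFinEquiv (Sum.inr i))) := by
    ext s; cases s <;> simp
  rw [dotProduct_comp_equiv_symm, hstar, hx, Matrix.fromBlocks_mulVec]
  simp only [Sum.elim_comp_inl, Sum.elim_comp_inr, Matrix.zero_mulVec, add_zero, zero_add]
  rw [sumElim_dotProduct_sumElim, Complex.add_re, qf, qf]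

lemma nsq_directSum (x : Fin (n+n) → ℂ) :
    nsq x = nsq (fun i => x (finSumFinEquiv (Sum.inl i)))
      + nsq (fun i => x (finSumFinEquiv (Sum.inr i))) := by
  rw [nsq, ← Equiv.sum_comp finSumFinEquiv (fun ℓ => Complex.normSq (x ℓ)), Fintype.sum_sum_type]
  rfl

end CF


open CF

/-- **Corollary 3.5.** For `p > 2` and `0 ≤ j ≤ n-1`,
`λ_{2j+1}^↓(|(A+B)/2|^p ⊕ |(A-B)/2|^p) ≤ λ_{j+1}^↓((|A|^p+|B|^p)/2)`. -/
theorem direct_sum_eigenvalue_estimate {n : ℕ} (A B : Matrix (Fin n) (Fin n) ℂ)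
    (p : ℝ) (hp : 2 < p) (j : ℕ) (hj : j < n) :
    eigDesc (directSum_isHermitian
        (Matrix.absRpow_isHermitian ((2:ℂ)⁻¹ • (A + B)) p)
        (Matrix.absRpow_isHermitian ((2:ℂ)⁻¹ • (A - B)) p)) ⟨2 * j, by omega⟩
    ≤ eigDesc (((Matrix.absRpow_isHermitian A p).add
        (Matrix.absRpow_isHermitian B p)).smul_half) ⟨j, hj⟩ := by
  set C : Matrix (Fin n) (Fin n) ℂ := (2:ℂ)⁻¹ • (A + B) with hC
  set D : Matrix (Fin n) (Fin n) ℂ := (2:ℂ)⁻¹ • (A - B) with hD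
  set M1 := Matrix.absRpow C p with hM1def
  set M2 := Matrix.absRpow D p with hM2def
  have hM1 : M1.IsHermitian := Matrix.absRpow_isHermitian C p
  have hM2 : M2.IsHermitian := Matrix.absRpow_isHermitian D p
  have hN : ((2:ℂ)⁻¹ • (Matrix.absRpow A p + Matrix.absRpow B p)).IsHermitian :=
    ((Matrix.absRpow_isHermitian A p).add (Matrix.absRpow_isHermitian B p)).smul_half
  set k : Fin n := ⟨j, hj⟩ with hk
  -- per-block bounds
  have hpar1 : Cᴴ * C + Dᴴ * D = (2:ℂ)⁻¹ • (Aᴴ * A + Bᴴ * B) := parallelogram A B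
  have hpar2 : Dᴴ * D + Cᴴ * C = (2:ℂ)⁻¹ • (Aᴴ * A + Bᴴ * B) := by
    rw [add_comm]; exact hpar1
  have hd1 : eigDesc hM1 k ≤ eigDesc hN k := block_le A B C D hpar1 p hp hM1 hN k
  have hd2 : eigDesc hM2 k ≤ eigDesc hN k := block_le A B D C hpar2 p hp hM2 hN k
  -- assemble on the direct sum
  have hU1 : (hM1.eigenvectorUnitary : Matrix (Fin n) (Fin n) ℂ) ∈ Matrix.unitaryGroup (Fin n) ℂ :=
    SetLike.coe_mem _
  have hU2 : (hM2.eigenvectorUnitary : Matrix (Fin n) (Fin n) ℂ) ∈ Matrix.unitaryGroup (Fin n) ℂ :=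
    SetLike.coe_mem _
  set π1 : (Fin (n+n) → ℂ) →ₗ[ℂ] (Fin n → ℂ) :=
    LinearMap.funLeft ℂ ℂ (fun i => finSumFinEquiv (Sum.inl i)) with hπ1
  set π2 : (Fin (n+n) → ℂ) →ₗ[ℂ] (Fin n → ℂ) :=
    LinearMap.funLeft ℂ ℂ (fun i => finSumFinEquiv (Sum.inr i)) with hπ2
  refine eigDesc_le_of_subspace (directSum_isHermitian hM1 hM2) ⟨2 * j, by omega⟩
    (eigDesc hN k)
    (((coordMap (hM1.eigenvectorUnitary : Matrix (Fin n) (Fin n) ℂ) (botBad hM1 k)).comp π1).prod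
      ((coordMap (hM2.eigenvectorUnitary : Matrix (Fin n) (Fin n) ℂ) (botBad hM2 k)).comp π2))
    (by
      rw [Module.finrank_prod, Module.finrank_pi, Module.finrank_pi, Fintype.card_coe,
        Fintype.card_coe, card_botBad, card_botBad]
      simp [hk]
      omega) ?_
  intro x hker
  simp only [LinearMap.prod_apply, Pi.prod, Function.prod_apply, Prod.mk_eq_zero, LinearMap.coe_comp,
    Function.comp_apply] at hker
  obtain ⟨hker1, hker2⟩ := hker
  have hq1 : qf M1 (π1 x) ≤ eigDesc hM1 k * nsq (π1 x) := by
    have := qf_le_of_coords hU1 hM1.eigenvalues (eigDesc hM1 k) (botBad hM1 k)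
      (botBad_spec hM1 k) (π1 x) (coordMap_eq_zero hker1)
    convert this using 2 <;> exact hM1.spectral_theorem
  have hq2 : qf M2 (π2 x) ≤ eigDesc hM2 k * nsq (π2 x) := by
    have := qf_le_of_coords hU2 hM2.eigenvalues (eigDesc hM2 k) (botBad hM2 k)
      (botBad_spec hM2 k) (π2 x) (coordMap_eq_zero hker2)
    convert this using 2 <;> exact hM2.spectral_theorem
  have e1 : π1 x = fun i => x (finSumFinEquiv (Sum.inl i)) := rfl
  have e2 : π2 x = fun i => x (finSumFinEquiv (Sum.inr i)) := rfl
  calc qf (directSum M1 M2) x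
      = qf M1 (π1 x) + qf M2 (π2 x) := by rw [qf_directSum M1 M2 x, e1, e2]
    _ ≤ eigDesc hN k * nsq (π1 x) + eigDesc hN k * nsq (π2 x) := by
        exact add_le_add (hq1.trans (mul_le_mul_of_nonneg_right hd1 (nsq_nonneg _)))
          (hq2.trans (mul_le_mul_of_nonneg_right hd2 (nsq_nonneg _)))
    _ = eigDesc hN k * nsq x := by rw [nsq_directSum x, e1, e2]; ring
end
end

section
/- Let X, Y be n-by-n positive semidefinite complex matrices and let g be a monotone (nondecreasing) convex continuous function on [0,∞) with g(0) ≤ 0. Then there exist n-by-n unitary matrices U₀ and V₀ such that g(X + Y) ≥ U₀ g(X) U₀* + V₀ g(Y) V₀* in the Loewner order. -/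
open Matrix
open scoped ComplexOrder
open Polynomial Finset

set_option maxHeartbeats 2000000

namespace SubaddAux

variable {n : ℕ}

/-- real diagonal matrix -/
noncomputable def rdiag (d : Fin n → ℝ) : Matrix (Fin n) (Fin n) ℂ :=
  diagonal (fun i => (d i : ℂ))

/-- sorted (ascending) eigenvalues -/
noncomputable def sEig {A : Matrix (Fin n) (Fin n) ℂ} (hA : A.IsHermitian) : Fin n → ℝ :=
  hA.eigenvalues ∘ Tuple.sort hA.eigenvalues

lemma sEig_mono {A : Matrix (Fin n) (Fin n) ℂ} (hA : A.IsHermitian) : Monotone (sEig hA) :=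
  Tuple.monotone_sort _

noncomputable def sVec {A : Matrix (Fin n) (Fin n) ℂ} (hA : A.IsHermitian) :
    Matrix (Fin n) (Fin n) ℂ :=
  (hA.eigenvectorUnitary : Matrix (Fin n) (Fin n) ℂ).submatrix id (Tuple.sort hA.eigenvalues)

lemma submatrix_unitary {W : Matrix (Fin n) (Fin n) ℂ} (hW : W ∈ Matrix.unitaryGroup (Fin n) ℂ)
    (σ : Equiv.Perm (Fin n)) : W.submatrix id σ ∈ Matrix.unitaryGroup (Fin n) ℂ := by
  rw [Matrix.mem_unitaryGroup_iff]
  have h : (W.submatrix id ⇑σ) * star (W.submatrix id ⇑σ) = (W * Wᴴ).submatrix id id := by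
    rw [Matrix.star_eq_conjTranspose, Matrix.conjTranspose_submatrix]
    exact Matrix.submatrix_mul_equiv W Wᴴ id σ id
  rw [h, Matrix.submatrix_id_id]
  exact Matrix.mem_unitaryGroup_iff.mp hW

lemma sVec_mem {A : Matrix (Fin n) (Fin n) ℂ} (hA : A.IsHermitian) :
    sVec hA ∈ Matrix.unitaryGroup (Fin n) ℂ :=
  submatrix_unitary (hA.eigenvectorUnitary).2 _

lemma conj_diag_perm (W : Matrix (Fin n) (Fin n) ℂ) (d : Fin n → ℝ) (σ : Equiv.Perm (Fin n)) :
    (W.submatrix id σ) * rdiag (d ∘ σ) * (W.submatrix id σ)ᴴ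
      = W * rdiag d * Wᴴ := by
  rw [Matrix.conjTranspose_submatrix]
  have h1 : (W.submatrix id ⇑σ) * rdiag (d ∘ σ) =
      (W * rdiag d).submatrix id σ := by
    ext i j
    simp [rdiag, Matrix.mul_apply, Matrix.diagonal, Matrix.submatrix_apply]
  rw [h1]
  exact Matrix.submatrix_mul_equiv (W * rdiag d) Wᴴ id σ id

/-- sorted spectral theorem -/
lemma spectral' {A : Matrix (Fin n) (Fin n) ℂ} (hA : A.IsHermitian) :
    A = sVec hA * rdiag (sEig hA) * (sVec hA)ᴴ := by
  rw [sVec, sEig, conj_diag_perm _ _ _]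
  have := hA.spectral_theorem
  rw [Unitary.conjStarAlgAut_apply, Matrix.star_eq_conjTranspose] at this
  exact this


open Polynomial in
lemma charpoly_conj_inv {m : Type*} [Fintype m] [DecidableEq m] {P Q A : Matrix m m ℂ}
    (h : P * Q = 1) : (P * A * Q).charpoly = A.charpoly := by
  have hmap : ∀ M N : Matrix m m ℂ,
      (M * N).map (C : ℂ →+* ℂ[X]) = M.map C * N.map C := fun M N => Matrix.map_mul
  have h1C : (1 : Matrix m m ℂ).map (C : ℂ →+* ℂ[X]) = 1 :=
    Matrix.map_one _ (map_zero C) (map_one C)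
  have e1 : P.map (C : ℂ →+* ℂ[X]) * Matrix.scalar m (X : ℂ[X]) * Q.map C
      = Matrix.scalar m (X : ℂ[X]) := by
    rw [(Matrix.scalar_commute (X : ℂ[X]) (Commute.all X) (P.map C)).symm.eq,
      mul_assoc, ← hmap, h, h1C, mul_one]
  have key : P.map (C : ℂ →+* ℂ[X]) * charmatrix A * Q.map C = charmatrix (P * A * Q) := by
    unfold charmatrix
    simp only [RingHom.mapMatrix_apply]
    rw [mul_sub, sub_mul, e1]
    rw [← hmap, ← hmap]
  rw [Matrix.charpoly, Matrix.charpoly, ← key, Matrix.det_mul, Matrix.det_mul, mul_right_comm,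
    ← Matrix.det_mul, ← hmap, h, h1C, Matrix.det_one, one_mul]

open Polynomial in
lemma charpoly_rdiag (d : Fin n → ℝ) :
    (rdiag d).charpoly = ∏ i, (X - C ((d i : ℂ))) := by
  rw [rdiag, Matrix.charpoly_of_upperTriangular _ (Matrix.blockTriangular_diagonal _)]
  simp [Matrix.diagonal_apply_eq]

open Polynomial in
lemma charpoly_conj_rdiag {W : Matrix (Fin n) (Fin n) ℂ}
    (hW : W ∈ Matrix.unitaryGroup (Fin n) ℂ) (d : Fin n → ℝ) :
    (W * rdiag d * Wᴴ).charpoly = ∏ i, (X - C ((d i : ℂ))) := by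
  rw [← Matrix.star_eq_conjTranspose,
    charpoly_conj_inv (Matrix.mem_unitaryGroup_iff.mp hW), charpoly_rdiag]

open Polynomial in
lemma charpoly_eq_prod_sEig {A : Matrix (Fin n) (Fin n) ℂ} (hA : A.IsHermitian) :
    A.charpoly = ∏ i, (X - C ((sEig hA i : ℂ))) := by
  conv_lhs => rw [spectral' hA]
  exact charpoly_conj_rdiag (sVec_mem hA) _

open Polynomial in
lemma multiset_eq_of_prod_eq {a b : Fin n → ℝ}
    (h : (∏ i, (X - C ((a i : ℂ)))) = ∏ i, (X - C ((b i : ℂ)))) :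
    Finset.univ.val.map a = Finset.univ.val.map b := by
  have ha : ∀ (c : Fin n → ℝ), (∏ i, (X - C ((c i : ℂ))))
      = (Multiset.map (fun z : ℂ => X - C z) (Finset.univ.val.map (fun i => (c i : ℂ)))).prod := by
    intro c
    rw [Multiset.map_map]
    rfl
  rw [ha a, ha b] at h
  have h0 := congrArg Polynomial.roots h
  rw [Polynomial.roots_multiset_prod_X_sub_C, Polynomial.roots_multiset_prod_X_sub_C] at h0
  have h2 : Multiset.map (Complex.ofReal) (Finset.univ.val.map a)
      = Multiset.map (Complex.ofReal) (Finset.univ.val.map b) := by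
    rw [Multiset.map_map, Multiset.map_map]
    exact h0
  exact Multiset.map_injective Complex.ofReal_injective h2

lemma sorted_unique {a b : Fin n → ℝ} (ha : Monotone a) (hb : Monotone b)
    (h : Finset.univ.val.map a = Finset.univ.val.map b) : a = b := by
  have hlist : ∀ c : Fin n → ℝ, (Finset.univ.val.map c) = ↑(List.ofFn c) := by
    intro c
    have : (Finset.univ : Finset (Fin n)).val = ↑(List.finRange n) := rfl
    rw [this, List.ofFn_eq_map]
    rfl
  rw [hlist a, hlist b] at h
  have hperm : (List.ofFn a).Perm (List.ofFn b) := Multiset.coe_eq_coe.mp h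
  exact List.ofFn_injective (List.Perm.eq_of_sortedLE
    (List.sortedLE_ofFn_iff.mpr ha) (List.sortedLE_ofFn_iff.mpr hb) hperm)

lemma sEig_eq_of_charpoly_eq {A B : Matrix (Fin n) (Fin n) ℂ} (hA : A.IsHermitian)
    (hB : B.IsHermitian) (h : A.charpoly = B.charpoly) : sEig hA = sEig hB := by
  apply sorted_unique (sEig_mono hA) (sEig_mono hB)
  apply multiset_eq_of_prod_eq
  rw [← charpoly_eq_prod_sEig hA, ← charpoly_eq_prod_sEig hB, h]

lemma charpoly_mul_comm (A B : Matrix (Fin n) (Fin n) ℂ) :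
    (A * B).charpoly = (B * A).charpoly := by
  let M2 : Matrix (Fin n ⊕ Fin n) (Fin n ⊕ Fin n) ℂ := Matrix.fromBlocks 0 0 B (B * A)
  let S : Matrix (Fin n ⊕ Fin n) (Fin n ⊕ Fin n) ℂ := Matrix.fromBlocks 1 A 0 1
  let S' : Matrix (Fin n ⊕ Fin n) (Fin n ⊕ Fin n) ℂ := Matrix.fromBlocks 1 (-A) 0 1
  have hSS' : S * S' = 1 := by
    simp [S, S', Matrix.fromBlocks_multiply, ← Matrix.fromBlocks_one]
  have hM1 : Matrix.fromBlocks (A * B) 0 B 0 = S * M2 * S' := by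
    have hM1S : Matrix.fromBlocks (A * B) 0 B 0 * S = S * M2 := by
      simp [M2, S, Matrix.fromBlocks_multiply, mul_assoc]
    calc Matrix.fromBlocks (A * B) 0 B 0
        = Matrix.fromBlocks (A * B) 0 B 0 * (S * S') := by rw [hSS', mul_one]
      _ = (Matrix.fromBlocks (A * B) 0 B 0 * S) * S' := by rw [mul_assoc]
      _ = S * M2 * S' := by rw [hM1S]
  have hcp : (Matrix.fromBlocks (A * B) 0 B 0).charpoly = M2.charpoly := by
    rw [hM1]
    exact charpoly_conj_inv hSS'
  have h1 : (Matrix.fromBlocks (A * B) 0 B 0).charpoly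
      = (A * B).charpoly * (0 : Matrix (Fin n) (Fin n) ℂ).charpoly :=
    Matrix.charpoly_fromBlocks_zero₁₂ _ _ _
  have h2 : M2.charpoly = (0 : Matrix (Fin n) (Fin n) ℂ).charpoly * (B * A).charpoly :=
    Matrix.charpoly_fromBlocks_zero₁₂ _ _ _
  have hne : (0 : Matrix (Fin n) (Fin n) ℂ).charpoly ≠ 0 :=
    (Matrix.charpoly_monic _).ne_zero
  refine mul_right_cancel₀ hne ?_
  rw [← h1, hcp, h2]
  ring


open scoped ComplexOrder

lemma dot_star_self (x : Fin n → ℂ) :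
    dotProduct (star x) x = ((∑ i, Complex.normSq (x i) : ℝ) : ℂ) := by
  rw [dotProduct]
  push_cast
  refine Finset.sum_congr rfl fun i _ => ?_
  simp [Complex.normSq_eq_conj_mul_self]

lemma rayleigh_decomp {W : Matrix (Fin n) (Fin n) ℂ} (hW : W ∈ Matrix.unitaryGroup (Fin n) ℂ)
    (d : Fin n → ℝ) (x : Fin n → ℂ) :
    dotProduct (star x) ((W * rdiag d * Wᴴ) *ᵥ x)
      = ((∑ i, d i * Complex.normSq ((Wᴴ *ᵥ x) i) : ℝ) : ℂ) := by
  have h1 : (W * rdiag d * Wᴴ) *ᵥ x = W *ᵥ (rdiag d *ᵥ (Wᴴ *ᵥ x)) := by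
    rw [Matrix.mulVec_mulVec, Matrix.mulVec_mulVec]
  rw [h1, Matrix.dotProduct_mulVec]
  have h2 : Matrix.vecMul (star x) W = star (Wᴴ *ᵥ x) := by
    rw [Matrix.star_mulVec, Matrix.conjTranspose_conjTranspose]
  rw [h2]
  set y := Wᴴ *ᵥ x
  rw [dotProduct]
  push_cast
  refine Finset.sum_congr rfl fun i _ => ?_
  simp only [Pi.star_apply, rdiag, Matrix.mulVec_diagonal, RCLike.star_def]
  rw [mul_comm ((d i : ℂ)) (y i), ← mul_assoc, Complex.normSq_eq_conj_mul_self]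
  ring

lemma norm_y {W : Matrix (Fin n) (Fin n) ℂ} (hW : W ∈ Matrix.unitaryGroup (Fin n) ℂ)
    (x : Fin n → ℂ) :
    ∑ i, Complex.normSq ((Wᴴ *ᵥ x) i) = ∑ i, Complex.normSq (x i) := by
  have h2 : Matrix.vecMul (star x) W = star (Wᴴ *ᵥ x) := by
    rw [Matrix.star_mulVec, Matrix.conjTranspose_conjTranspose]
  have h1 : dotProduct (star (Wᴴ *ᵥ x)) (Wᴴ *ᵥ x) = dotProduct (star x) x := by
    rw [← h2, ← Matrix.dotProduct_mulVec, Matrix.mulVec_mulVec, ← Matrix.star_eq_conjTranspose,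
      Matrix.mem_unitaryGroup_iff.mp hW, Matrix.one_mulVec]
  rw [dot_star_self, dot_star_self] at h1
  exact_mod_cast h1

/-- Key min-max comparison: if `N ≥ a•1 + s•M` then sorted eigenvalues satisfy
`sEig N k ≥ a + s * sEig M k`. -/
lemma sEig_le_sEig {M N : Matrix (Fin n) (Fin n) ℂ} (hM : M.IsHermitian) (hN : N.IsHermitian)
    (a s : ℝ) (hs : 0 ≤ s)
    (h : (N - (((a : ℂ) • 1 : Matrix (Fin n) (Fin n) ℂ) + (s : ℂ) • M)).PosSemidef)
    (k : Fin n) : a + s * sEig hM k ≤ sEig hN k := by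
  classical
  -- find a nonzero vector in the intersection of the two coordinate subspaces
  let L1 : (Fin n → ℂ) →ₗ[ℂ] ({i : Fin n // i < k} → ℂ) :=
    (LinearMap.funLeft ℂ ℂ Subtype.val).comp (Matrix.mulVecLin ((sVec hM)ᴴ))
  let L2 : (Fin n → ℂ) →ₗ[ℂ] ({i : Fin n // k < i} → ℂ) :=
    (LinearMap.funLeft ℂ ℂ Subtype.val).comp (Matrix.mulVecLin ((sVec hN)ᴴ))
  let L := L1.prod L2
  have hcard1 : Fintype.card {i : Fin n // i < k} = (k : ℕ) := by
    rw [Fintype.card_subtype]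
    have he : Finset.filter (fun i => i < k) Finset.univ = Finset.Iio k := by
      ext i; simp
    rw [he, Fin.card_Iio]
  have hcard2 : Fintype.card {i : Fin n // k < i} = n - 1 - (k : ℕ) := by
    rw [Fintype.card_subtype]
    have he : Finset.filter (fun i => k < i) Finset.univ = Finset.Ioi k := by
      ext i; simp
    rw [he, Fin.card_Ioi]
  have hnotinj : ¬ Function.Injective L := by
    intro hinj
    have hle := LinearMap.finrank_le_finrank_of_injective hinj
    rw [Module.finrank_prod, Module.finrank_pi, Module.finrank_pi, Module.finrank_pi,
      hcard1, hcard2, Fintype.card_fin] at hle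
    have := k.isLt
    omega
  rw [← LinearMap.ker_eq_bot] at hnotinj
  obtain ⟨x, hxker, hx0⟩ := (Submodule.ne_bot_iff _).mp hnotinj
  have hy0 : ∀ i : Fin n, i < k → ((sVec hM)ᴴ *ᵥ x) i = 0 := by
    intro i hik
    have h1 : L1 x = 0 := by
      have := congrArg Prod.fst (LinearMap.mem_ker.mp hxker)
      simpa [L] using this
    exact congrFun h1 ⟨i, hik⟩
  have hz0 : ∀ i : Fin n, k < i → ((sVec hN)ᴴ *ᵥ x) i = 0 := by
    intro i hik
    have h1 : L2 x = 0 := by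
      have := congrArg Prod.snd (LinearMap.mem_ker.mp hxker)
      simpa [L] using this
    exact congrFun h1 ⟨i, hik⟩
  set ny : Fin n → ℝ := fun i => Complex.normSq (((sVec hM)ᴴ *ᵥ x) i) with hny
  set nz : Fin n → ℝ := fun i => Complex.normSq (((sVec hN)ᴴ *ᵥ x) i) with hnz
  set c : ℝ := ∑ i, Complex.normSq (x i) with hc
  have hcpos : 0 < c := by
    have : ∃ i, x i ≠ 0 := by
      by_contra hcon
      push_neg at hcon
      exact hx0 (funext hcon)
    obtain ⟨i, hi⟩ := this
    refine Finset.sum_pos' (fun j _ => Complex.normSq_nonneg _) ⟨i, Finset.mem_univ i, ?_⟩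
    exact Complex.normSq_pos.mpr hi
  -- quadratic form inequality
  have hquad : a * c + s * (∑ i, sEig hM i * ny i) ≤ ∑ i, sEig hN i * nz i := by
    have hq := h.dotProduct_mulVec_nonneg x
    rw [Matrix.sub_mulVec, Matrix.add_mulVec, dotProduct_sub, dotProduct_add,
      Matrix.smul_mulVec, Matrix.smul_mulVec, Matrix.one_mulVec,
      dotProduct_smul, dotProduct_smul] at hq
    have hN' := rayleigh_decomp (sVec_mem hN) (sEig hN) x
    have hM' := rayleigh_decomp (sVec_mem hM) (sEig hM) x
    rw [← spectral' hN] at hN'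
    rw [← spectral' hM] at hM'
    rw [hN', hM', dot_star_self, ← hc] at hq
    have : (0:ℂ) ≤ ((∑ i, sEig hN i * nz i - (a * c + s * ∑ i, sEig hM i * ny i) : ℝ) : ℂ) := by
      push_cast
      convert hq using 1
      simp only [smul_eq_mul]
      push_cast
      ring
    rw [Complex.zero_le_real] at this
    linarith
  -- lower bound for the M side
  have hMside : sEig hM k * c ≤ ∑ i, sEig hM i * ny i := by
    have h1 : ∀ i ∈ Finset.univ, sEig hM k * ny i ≤ sEig hM i * ny i := by
      intro i _
      by_cases hik : i < k
      · have : ny i = 0 := by rw [hny]; simp [hy0 i hik]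
        simp [this]
      · exact mul_le_mul_of_nonneg_right (sEig_mono hM (not_lt.mp hik))
          (Complex.normSq_nonneg _)
    calc sEig hM k * c = ∑ i, sEig hM k * ny i := by
          rw [← Finset.mul_sum, hny, hc, norm_y (sVec_mem hM)]
      _ ≤ _ := Finset.sum_le_sum h1
  -- upper bound for the N side
  have hNside : ∑ i, sEig hN i * nz i ≤ sEig hN k * c := by
    have h1 : ∀ i ∈ Finset.univ, sEig hN i * nz i ≤ sEig hN k * nz i := by
      intro i _
      by_cases hik : k < i
      · have : nz i = 0 := by rw [hnz]; simp [hz0 i hik]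
        simp [this]
      · exact mul_le_mul_of_nonneg_right (sEig_mono hN (not_lt.mp hik))
          (Complex.normSq_nonneg _)
    calc ∑ i, sEig hN i * nz i ≤ ∑ i, sEig hN k * nz i := Finset.sum_le_sum h1
      _ = sEig hN k * c := by rw [← Finset.mul_sum, hnz, hc, norm_y (sVec_mem hN)]
  have hfinal : (a + s * sEig hM k) * c ≤ sEig hN k * c := by
    have := mul_le_mul_of_nonneg_left hMside hs
    nlinarith
  exact le_of_mul_le_mul_right hfinal hcpos


lemma exists_unitary_conj_le {M N : Matrix (Fin n) (Fin n) ℂ} (hM : M.IsHermitian)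
    (hN : N.IsHermitian) (h : ∀ k, sEig hM k ≤ sEig hN k) :
    ∃ U ∈ Matrix.unitaryGroup (Fin n) ℂ, (N - U * M * Uᴴ).PosSemidef := by
  obtain ⟨WM, dM, hWM, hdecM, hdM⟩ :
      ∃ W d, W ∈ Matrix.unitaryGroup (Fin n) ℂ ∧ M = W * rdiag d * Wᴴ ∧ d = sEig hM :=
    ⟨sVec hM, sEig hM, sVec_mem hM, spectral' hM, rfl⟩
  obtain ⟨WN, dN, hWN, hdecN, hdN⟩ :
      ∃ W d, W ∈ Matrix.unitaryGroup (Fin n) ℂ ∧ N = W * rdiag d * Wᴴ ∧ d = sEig hN :=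
    ⟨sVec hN, sEig hN, sVec_mem hN, spectral' hN, rfl⟩
  have h' : ∀ k, dM k ≤ dN k := by
    intro k
    rw [hdM, hdN]
    exact h k
  have h1 : WMᴴ * WM = 1 := by
    rw [← Matrix.star_eq_conjTranspose]
    exact Matrix.mem_unitaryGroup_iff'.mp hWM
  refine ⟨WN * WMᴴ, ?_, ?_⟩
  · rw [← Matrix.star_eq_conjTranspose]
    exact mul_mem hWN (Unitary.star_mem hWM)
  · have hU : (WN * WMᴴ) * M * (WN * WMᴴ)ᴴ = WN * rdiag dM * WNᴴ := by
      rw [hdecM, Matrix.conjTranspose_mul, Matrix.conjTranspose_conjTranspose]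
      calc (WN * WMᴴ) * (WM * rdiag dM * WMᴴ) * (WM * WNᴴ)
          = WN * ((WMᴴ * WM) * rdiag dM * (WMᴴ * WM)) * WNᴴ := by
            simp only [Matrix.mul_assoc]
        _ = _ := by rw [h1, one_mul, mul_one]
    rw [hU, hdecN]
    have hd2 : rdiag (fun i => dN i - dM i) = rdiag dN - rdiag dM := by
      rw [rdiag, rdiag, rdiag, Matrix.diagonal_sub]
      congr 1
      funext i
      push_cast
      ring
    have hdiff : WN * rdiag dN * WNᴴ - WN * rdiag dM * WNᴴ
        = WN * rdiag (fun i => dN i - dM i) * WNᴴ := by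
      rw [hd2, Matrix.mul_sub, Matrix.sub_mul]
    rw [hdiff]
    refine Matrix.PosSemidef.mul_mul_conjTranspose_same ?_ _
    refine Matrix.posSemidef_diagonal_iff.mpr fun i => ?_
    rw [Complex.zero_le_real]
    simp only []
    linarith [h' i]

/-- `sEig (A * Aᴴ) = sEig (Aᴴ * A)` -/
lemma sEig_flip (A : Matrix (Fin n) (Fin n) ℂ) (h1 : (A * Aᴴ).IsHermitian)
    (h2 : (Aᴴ * A).IsHermitian) : sEig h1 = sEig h2 :=
  sEig_eq_of_charpoly_eq h1 h2 (charpoly_mul_comm A Aᴴ)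

lemma sEig_of_decomp {A W : Matrix (Fin n) (Fin n) ℂ} {d : Fin n → ℝ}
    (hW : W ∈ Matrix.unitaryGroup (Fin n) ℂ) (hdec : A = W * rdiag d * Wᴴ)
    (hA : A.IsHermitian) (hd : Monotone d) : sEig hA = d := by
  apply sorted_unique (sEig_mono hA) hd
  apply multiset_eq_of_prod_eq
  rw [← charpoly_eq_prod_sEig hA]
  conv_lhs => rw [hdec]
  exact charpoly_conj_rdiag hW d

/-! ### diagonal functional calculus -/

noncomputable def fm {A : Matrix (Fin n) (Fin n) ℂ} (hA : A.IsHermitian) (f : ℝ → ℝ) :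
    Matrix (Fin n) (Fin n) ℂ :=
  sVec hA * rdiag (fun i => f (sEig hA i)) * (sVec hA)ᴴ

lemma fm_id {A : Matrix (Fin n) (Fin n) ℂ} (hA : A.IsHermitian) : fm hA (fun t => t) = A := by
  rw [fm]
  exact (spectral' hA).symm

lemma cfc_eq_fm {A : Matrix (Fin n) (Fin n) ℂ} (hA : A.IsHermitian) (f : ℝ → ℝ) :
    cfc f A = fm hA f := by
  rw [hA.cfc_eq f, Matrix.IsHermitian.cfc, Unitary.conjStarAlgAut_apply, Matrix.star_eq_conjTranspose]
  show (hA.eigenvectorUnitary : Matrix (Fin n) (Fin n) ℂ)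
      * rdiag (fun i => f (hA.eigenvalues i))
      * (hA.eigenvectorUnitary : Matrix (Fin n) (Fin n) ℂ)ᴴ = fm hA f
  exact (conj_diag_perm _ (fun i => f (hA.eigenvalues i)) (Tuple.sort hA.eigenvalues)).symm

lemma fm_herm {A : Matrix (Fin n) (Fin n) ℂ} (hA : A.IsHermitian) (f : ℝ → ℝ) :
    (fm hA f).IsHermitian := by
  rw [fm, Matrix.IsHermitian]
  rw [Matrix.conjTranspose_mul, Matrix.conjTranspose_mul, Matrix.conjTranspose_conjTranspose]
  rw [rdiag, Matrix.diagonal_conjTranspose]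
  have : star (fun i => ((f (sEig hA i) : ℝ) : ℂ)) = fun i => ((f (sEig hA i) : ℝ) : ℂ) := by
    funext i
    simp [RCLike.star_def, Complex.conj_ofReal]
  rw [this, Matrix.mul_assoc]

lemma fm_mul {A : Matrix (Fin n) (Fin n) ℂ} (hA : A.IsHermitian) (f g : ℝ → ℝ) :
    fm hA f * fm hA g = fm hA (fun t => f t * g t) := by
  have h1 : (sVec hA)ᴴ * sVec hA = 1 := by
    rw [← Matrix.star_eq_conjTranspose]
    exact Matrix.mem_unitaryGroup_iff'.mp (sVec_mem hA)
  rw [fm, fm, fm]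
  calc (sVec hA * rdiag (fun i => f (sEig hA i)) * (sVec hA)ᴴ)
        * (sVec hA * rdiag (fun i => g (sEig hA i)) * (sVec hA)ᴴ)
      = sVec hA * (rdiag (fun i => f (sEig hA i)) * ((sVec hA)ᴴ * sVec hA)
          * rdiag (fun i => g (sEig hA i))) * (sVec hA)ᴴ := by simp only [Matrix.mul_assoc]
    _ = sVec hA * (rdiag (fun i => f (sEig hA i)) * rdiag (fun i => g (sEig hA i)))
          * (sVec hA)ᴴ := by rw [h1, mul_one]
    _ = _ := by
          rw [rdiag, rdiag, rdiag, Matrix.diagonal_mul_diagonal]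
          congr 2
          funext i
          push_cast
          ring

lemma fm_add {A : Matrix (Fin n) (Fin n) ℂ} (hA : A.IsHermitian) (f g : ℝ → ℝ) :
    fm hA f + fm hA g = fm hA (fun t => f t + g t) := by
  rw [fm, fm, fm]
  rw [← Matrix.add_mul, ← Matrix.mul_add, rdiag, rdiag, rdiag, Matrix.diagonal_add]
  congr 2
  funext i
  push_cast
  ring

lemma fm_sub {A : Matrix (Fin n) (Fin n) ℂ} (hA : A.IsHermitian) (f g : ℝ → ℝ) :
    fm hA f - fm hA g = fm hA (fun t => f t - g t) := by
  rw [fm, fm, fm]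
  rw [← Matrix.sub_mul, ← Matrix.mul_sub, rdiag, rdiag, rdiag, Matrix.diagonal_sub]
  congr 2
  funext i
  push_cast
  ring

lemma fm_smul {A : Matrix (Fin n) (Fin n) ℂ} (hA : A.IsHermitian) (s : ℝ) (f : ℝ → ℝ) :
    ((s : ℂ) • (1 : Matrix (Fin n) (Fin n) ℂ)) * fm hA f = fm hA (fun t => s * f t) := by
  rw [smul_mul_assoc, one_mul, fm, fm, ← smul_mul_assoc, ← mul_smul_comm]
  congr 2
  rw [rdiag, rdiag]
  have : ((s:ℂ) • diagonal (fun i => ((f (sEig hA i) : ℝ) : ℂ)))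
      = diagonal ((s:ℂ) • (fun i => ((f (sEig hA i) : ℝ) : ℂ))) := (Matrix.diagonal_smul _ _).symm
  have hfun : ((s:ℂ) • fun i => ((f (sEig hA i) : ℝ) : ℂ))
      = fun i => (((s * f (sEig hA i) : ℝ)) : ℂ) := by
    funext i
    rw [Pi.smul_apply, smul_eq_mul]
    push_cast
    ring
  rw [this, hfun]

lemma fm_one {A : Matrix (Fin n) (Fin n) ℂ} (hA : A.IsHermitian) :
    fm hA (fun _ => 1) = 1 := by
  have h2 : sVec hA * (sVec hA)ᴴ = 1 := by
    rw [← Matrix.star_eq_conjTranspose]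
    exact Matrix.mem_unitaryGroup_iff.mp (sVec_mem hA)
  rw [fm]
  have : rdiag (fun _ : Fin n => (1 : ℝ)) = 1 := by
    rw [rdiag]
    simp
  rw [this, mul_one, h2]

lemma fm_congr {A : Matrix (Fin n) (Fin n) ℂ} (hA : A.IsHermitian) {f g : ℝ → ℝ}
    (h : ∀ i, f (sEig hA i) = g (sEig hA i)) : fm hA f = fm hA g := by
  have he : (fun i => ((f (sEig hA i) : ℝ) : ℂ)) = fun i => ((g (sEig hA i) : ℝ) : ℂ) := by
    funext i
    rw [h i]
  rw [fm, fm, rdiag, rdiag, he]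

lemma fm_zero {A : Matrix (Fin n) (Fin n) ℂ} (hA : A.IsHermitian) :
    fm hA (fun _ => 0) = 0 := by
  rw [fm]
  have : rdiag (fun _ : Fin n => (0 : ℝ)) = 0 := by
    rw [rdiag]
    simp
  rw [this, mul_zero, zero_mul]

lemma fm_psd {A : Matrix (Fin n) (Fin n) ℂ} (hA : A.IsHermitian) {f : ℝ → ℝ}
    (h : ∀ i, 0 ≤ f (sEig hA i)) : (fm hA f).PosSemidef := by
  rw [fm]
  refine Matrix.PosSemidef.mul_mul_conjTranspose_same ?_ _
  refine Matrix.posSemidef_diagonal_iff.mpr fun i => ?_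
  rw [Complex.zero_le_real]
  exact h i

lemma sEig_fm {A : Matrix (Fin n) (Fin n) ℂ} (hA : A.IsHermitian) (f : ℝ → ℝ)
    (hmono : Monotone (fun i => f (sEig hA i))) :
    sEig (fm_herm hA f) = fun i => f (sEig hA i) :=
  sEig_of_decomp (sVec_mem hA) rfl (fm_herm hA f) hmono

/-! ### scalar subgradient -/

lemma subgrad {f : ℝ → ℝ} (hmono : MonotoneOn f (Set.Ici 0)) (hconv : ConvexOn ℝ (Set.Ici 0) f)
    (hf0 : f 0 = 0) {m : ℝ} (hm : 0 ≤ m) :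
    ∃ s : ℝ, 0 ≤ s ∧ f m - s * m ≤ 0 ∧ ∀ t, 0 ≤ t → f m + s * (t - m) ≤ f t := by
  rcases eq_or_lt_of_le hm with heq | hm0
  · refine ⟨0, le_refl 0, by simp [← heq, hf0], fun t ht => ?_⟩
    simp only [zero_mul, add_zero, ← heq, hf0]
    calc (0:ℝ) = f 0 := hf0.symm
      _ ≤ f t := hmono (Set.mem_Ici.mpr (le_refl 0)) (Set.mem_Ici.mpr ht) ht
  · set S : Set ℝ := (fun d => (f d - f m) / (d - m)) '' Set.Ioi m with hS
    have hSne : S.Nonempty := ⟨_, ⟨m + 1, by simp, rfl⟩⟩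
    have hSlb : ∀ y ∈ S, 0 ≤ y := by
      rintro y ⟨d, hd, rfl⟩
      rw [Set.mem_Ioi] at hd
      apply div_nonneg _ (by linarith)
      have := hmono (Set.mem_Ici.mpr hm) (Set.mem_Ici.mpr (by linarith : (0:ℝ) ≤ d)) hd.le
      linarith
    have hbdd : BddBelow S := ⟨0, hSlb⟩
    set s : ℝ := sInf S with hs
    have hs0 : 0 ≤ s := le_csInf hSne hSlb
    have hkey : ∀ t, 0 ≤ t → f m + s * (t - m) ≤ f t := by
      intro t ht
      rcases lt_trichotomy t m with hlt | heq2 | hgt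
      · -- t < m : chord slope (f m - f t)/(m - t) is a lower bound of S
        have hlb : ∀ y ∈ S, (f m - f t) / (m - t) ≤ y := by
          rintro y ⟨d, hd, rfl⟩
          rw [Set.mem_Ioi] at hd
          exact hconv.slope_mono_adjacent (Set.mem_Ici.mpr ht)
            (Set.mem_Ici.mpr (by linarith : (0:ℝ) ≤ d)) hlt hd
        have h1 : (f m - f t) / (m - t) ≤ s := le_csInf hSne hlb
        have h2 : f m - f t ≤ s * (m - t) := by
          have := mul_le_mul_of_nonneg_right h1 (by linarith : (0:ℝ) ≤ m - t)
          rwa [div_mul_cancel₀] at this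
          linarith
        linarith
      · subst heq2; simp
      · have h1 : s ≤ (f t - f m) / (t - m) := csInf_le hbdd ⟨t, Set.mem_Ioi.mpr hgt, rfl⟩
        have h2 : s * (t - m) ≤ f t - f m := by
          have := mul_le_mul_of_nonneg_right h1 (by linarith : (0:ℝ) ≤ t - m)
          rwa [div_mul_cancel₀] at this
          linarith
        linarith
    refine ⟨s, hs0, ?_, hkey⟩
    have := hkey 0 (le_refl 0)
    rw [hf0] at this
    linarith


lemma sEig_congr {A B : Matrix (Fin n) (Fin n) ℂ} (hA : A.IsHermitian) (hB : B.IsHermitian)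
    (h : A = B) : sEig hA = sEig hB := by
  subst h
  rfl

lemma fm_const {A : Matrix (Fin n) (Fin n) ℂ} (hA : A.IsHermitian) (c : ℝ) :
    fm hA (fun _ => c) = (c : ℂ) • 1 := by
  have h1 := fm_smul hA c (fun _ => 1)
  rw [fm_one hA, mul_one] at h1
  rw [h1]
  exact fm_congr hA fun i => by ring

lemma psd_smul {M : Matrix (Fin n) (Fin n) ℂ} (hM : M.PosSemidef) {c : ℝ} (hc : 0 ≤ c) :
    (((c : ℝ) : ℂ) • M).PosSemidef := by
  refine Matrix.PosSemidef.of_dotProduct_mulVec_nonneg ?_ ?_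
  · rw [Matrix.IsHermitian, Matrix.conjTranspose_smul, hM.1.eq]
    congr 1
    simp [RCLike.star_def, Complex.conj_ofReal]
  · intro x
    rw [Matrix.smul_mulVec, dotProduct_smul, smul_eq_mul]
    exact mul_nonneg (Complex.zero_le_real.mpr hc) (hM.dotProduct_mulVec_nonneg x)

lemma herm_zero {M : Matrix (Fin n) (Fin n) ℂ} (hM : M.IsHermitian)
    (h : ∀ x : Fin n → ℂ, dotProduct (star x) (M *ᵥ x) = 0) : M = 0 := by
  have hev : ∀ i, hM.eigenvalues i = 0 := by
    intro i
    rw [hM.eigenvalues_eq, h _]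
    simp
  have hd : diagonal (RCLike.ofReal ∘ hM.eigenvalues) = (0 : Matrix (Fin n) (Fin n) ℂ) := by
    ext i j
    by_cases hij : i = j
    · subst hij
      simp [hev]
    · simp [Matrix.diagonal_apply_ne _ hij]
  have := hM.spectral_theorem
  rw [hd, map_zero] at this
  exact this


lemma chi_cases (t : ℝ) (ht : 0 ≤ t) :
    (t = 0 ∧ Real.sqrt t * (Real.sqrt t)⁻¹ = 0) ∨ (0 < t ∧ Real.sqrt t * (Real.sqrt t)⁻¹ = 1) := by
  rcases eq_or_lt_of_le ht with h0 | hpos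
  · left
    refine ⟨h0.symm, ?_⟩
    rw [← h0]
    simp
  · right
    refine ⟨hpos, ?_⟩
    have hs : Real.sqrt t ≠ 0 := ne_of_gt (Real.sqrt_pos.mpr hpos)
    field_simp

lemma q_cases (t : ℝ) (ht : 0 ≤ t) :
    (t = 0 ∧ ((Real.sqrt t)⁻¹ * t) * (Real.sqrt t)⁻¹ = 0)
      ∨ (0 < t ∧ ((Real.sqrt t)⁻¹ * t) * (Real.sqrt t)⁻¹ = 1) := by
  rcases eq_or_lt_of_le ht with h0 | hpos
  · left
    refine ⟨h0.symm, ?_⟩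
    rw [← h0]
    simp
  · right
    refine ⟨hpos, ?_⟩
    have hs : Real.sqrt t ≠ 0 := ne_of_gt (Real.sqrt_pos.mpr hpos)
    rw [← Real.mul_self_sqrt ht]
    field_simp
    rw [Real.sqrt_sq (Real.sqrt_nonneg t)]

/-- The key one-sided estimate: if `T = Z + O` with everything PSD, then with
`w = T^{-1/2}` (pseudo-inverse), `r = f(T)^{1/2}`, there is a unitary `U` with
`U f(Z) Uᴴ ≤ r (w Z w) r`. -/
lemma side_step {T Z O : Matrix (Fin n) (Fin n) ℂ} (hT : T.PosSemidef) (hZ : Z.PosSemidef)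
    (hO : O.PosSemidef) (hsum : T = Z + O) {f : ℝ → ℝ}
    (hfmono : MonotoneOn f (Set.Ici 0)) (hfconv : ConvexOn ℝ (Set.Ici 0) f) (hf0 : f 0 = 0) :
    ∃ U ∈ Matrix.unitaryGroup (Fin n) ℂ,
      (fm hT.isHermitian (fun t => Real.sqrt (f t))
          * (fm hT.isHermitian (fun t => (Real.sqrt t)⁻¹) * Z
              * fm hT.isHermitian (fun t => (Real.sqrt t)⁻¹))
          * fm hT.isHermitian (fun t => Real.sqrt (f t))
        - U * fm hZ.isHermitian f * Uᴴ).PosSemidef := by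
  classical
  have hTh : T.IsHermitian := hT.isHermitian
  have hZh : Z.IsHermitian := hZ.isHermitian
  set w : Matrix (Fin n) (Fin n) ℂ := fm hTh (fun t => (Real.sqrt t)⁻¹) with hw
  set st : Matrix (Fin n) (Fin n) ℂ := fm hTh (fun t => Real.sqrt t) with hst
  set r : Matrix (Fin n) (Fin n) ℂ := fm hTh (fun t => Real.sqrt (f t)) with hr
  have hTev : ∀ i, 0 ≤ sEig hTh i := fun i => hT.eigenvalues_nonneg _
  have hZev : ∀ i, 0 ≤ sEig hZh i := fun i => hZ.eigenvalues_nonneg _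
  have hfnn : ∀ t : ℝ, 0 ≤ t → 0 ≤ f t := fun t ht => by
    rw [← hf0]
    exact hfmono (Set.mem_Ici.mpr le_rfl) (Set.mem_Ici.mpr ht) ht
  have hwh : w.IsHermitian := fm_herm hTh _
  have hsth : st.IsHermitian := fm_herm hTh _
  have hrh : r.IsHermitian := fm_herm hTh _
  set C : Matrix (Fin n) (Fin n) ℂ := w * Z * w with hC
  have hCpsd : C.PosSemidef := by
    have := hZ.conjTranspose_mul_mul_same w
    rwa [hwh.eq] at this
  have hstst : st * st = T := by
    rw [hst, fm_mul]
    have h2 : fm hTh (fun t => Real.sqrt t * Real.sqrt t) = fm hTh (fun t => t) :=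
      fm_congr hTh fun i => Real.mul_self_sqrt (hTev i)
    rw [h2, fm_id]
  have hrr : r * r = fm hTh f := by
    rw [hr, fm_mul]
    exact fm_congr hTh fun i => Real.mul_self_sqrt (hfnn _ (hTev i))
  have hstw : st * w = fm hTh (fun t => Real.sqrt t * (Real.sqrt t)⁻¹) := by
    rw [hst, hw, fm_mul]
  have hwst : w * st = fm hTh (fun t => Real.sqrt t * (Real.sqrt t)⁻¹) := by
    rw [hw, hst, fm_mul]
    exact fm_congr hTh fun i => mul_comm _ _
  set K : Matrix (Fin n) (Fin n) ℂ :=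
    fm hTh (fun t => 1 - Real.sqrt t * (Real.sqrt t)⁻¹) with hK
  have hKh : K.IsHermitian := fm_herm hTh _
  have hKeq : K = 1 - fm hTh (fun t => Real.sqrt t * (Real.sqrt t)⁻¹) := by
    rw [hK, ← fm_one hTh, fm_sub]
  have hKTK : K * T * K = 0 := by
    have h1 : K * T * K = fm hTh
        (fun t => ((1 - Real.sqrt t * (Real.sqrt t)⁻¹) * t)
          * (1 - Real.sqrt t * (Real.sqrt t)⁻¹)) := by
      have e : K * fm hTh (fun t => t) * K = fm hTh
          (fun t => ((1 - Real.sqrt t * (Real.sqrt t)⁻¹) * t)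
            * (1 - Real.sqrt t * (Real.sqrt t)⁻¹)) := by
        rw [hK, fm_mul, fm_mul]
      rw [fm_id] at e
      exact e
    rw [h1]
    have h2 : fm hTh
        (fun t => ((1 - Real.sqrt t * (Real.sqrt t)⁻¹) * t)
          * (1 - Real.sqrt t * (Real.sqrt t)⁻¹)) = fm hTh (fun _ => 0) := by
      refine fm_congr hTh fun i => ?_
      rcases chi_cases _ (hTev i) with ⟨h0, _⟩ | ⟨_, h1'⟩
      · rw [h0]; ring
      · rw [h1']; ring
    rw [h2, fm_zero]
  have hKZKpsd : (K * Z * K).PosSemidef := by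
    have := hZ.conjTranspose_mul_mul_same K
    rwa [hKh.eq] at this
  have hKOKpsd : (K * O * K).PosSemidef := by
    have := hO.conjTranspose_mul_mul_same K
    rwa [hKh.eq] at this
  have hKZK : K * Z * K = 0 := by
    apply herm_zero hKZKpsd.1
    intro x
    have hsplit : K * Z * K + K * O * K = 0 := by
      rw [← hKTK, hsum]
      rw [Matrix.mul_add, Matrix.add_mul]
    have h1 : dotProduct (star x) ((K * Z * K) *ᵥ x)
        + dotProduct (star x) ((K * O * K) *ᵥ x) = 0 := by
      rw [← dotProduct_add, ← Matrix.add_mulVec, hsplit, Matrix.zero_mulVec,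
        dotProduct_zero]
    have h2 := hKZKpsd.dotProduct_mulVec_nonneg x
    have h3 := hKOKpsd.dotProduct_mulVec_nonneg x
    have hb : dotProduct (star x) ((K * Z * K) *ᵥ x)
        = - dotProduct (star x) ((K * O * K) *ᵥ x) :=
      eq_neg_of_add_eq_zero_left h1
    have hle : dotProduct (star x) ((K * Z * K) *ᵥ x) ≤ 0 := by
      rw [hb]
      exact neg_nonpos_of_nonneg h3
    exact le_antisymm hle h2
  obtain ⟨sZ, hsZh, hsZsZ⟩ : ∃ S : Matrix (Fin n) (Fin n) ℂ, S.IsHermitian ∧ S * S = Z :=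
    ⟨fm hZh (fun t => Real.sqrt t), fm_herm hZh _, by
      rw [fm_mul]
      exact (fm_congr hZh fun i => Real.mul_self_sqrt (hZev i)).trans (fm_id hZh)⟩
  have hZK : Z * K = 0 := by
    have e : K * Z * K = (sZ * K)ᴴ * (sZ * K) := by
      rw [Matrix.conjTranspose_mul, hsZh.eq, hKh.eq]
      calc K * Z * K = K * (sZ * sZ) * K := by rw [hsZsZ]
        _ = (K * sZ) * (sZ * K) := by simp only [Matrix.mul_assoc]
    have h0 : sZ * K = 0 := by
      rw [← Matrix.conjTranspose_mul_self_eq_zero, ← e, hKZK]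
    calc Z * K = sZ * (sZ * K) := by rw [← Matrix.mul_assoc, hsZsZ]
      _ = 0 := by rw [h0, mul_zero]
  have hKZ : K * Z = 0 := by
    have h4 : (K * Z)ᴴ = 0 := by
      rw [Matrix.conjTranspose_mul, hKh.eq, hZh.eq, hZK]
    calc K * Z = ((K * Z)ᴴ)ᴴ := by rw [Matrix.conjTranspose_conjTranspose]
      _ = 0 := by rw [h4, Matrix.conjTranspose_zero]
  have hchiZ : fm hTh (fun t => Real.sqrt t * (Real.sqrt t)⁻¹) * Z
      * fm hTh (fun t => Real.sqrt t * (Real.sqrt t)⁻¹) = Z := by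
    have h1 : fm hTh (fun t => Real.sqrt t * (Real.sqrt t)⁻¹) = 1 - K := by
      rw [hKeq]
      exact (sub_sub_cancel 1 _).symm
    rw [h1]
    have e1 : ((1 : Matrix (Fin n) (Fin n) ℂ) - K) * Z = Z := by
      rw [Matrix.sub_mul, one_mul, hKZ, sub_zero]
    rw [e1, Matrix.mul_sub, mul_one, hZK, sub_zero]
  have hstCst : st * C * st = Z := by
    have h5 : st * C * st = (st * w) * Z * (w * st) := by
      rw [hC]
      simp only [Matrix.mul_assoc]
    rw [h5, hstw, hwst, hchiZ]
  -- square root of C, taken opaque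
  obtain ⟨sC, hsCh, hsCsC⟩ : ∃ S : Matrix (Fin n) (Fin n) ℂ, S.IsHermitian ∧ S * S = C :=
    ⟨fm hCpsd.isHermitian (fun t => Real.sqrt t), fm_herm hCpsd.isHermitian _, by
      rw [fm_mul]
      exact (fm_congr hCpsd.isHermitian fun i =>
        Real.mul_self_sqrt (hCpsd.eigenvalues_nonneg _)).trans (fm_id hCpsd.isHermitian)⟩
  set M' : Matrix (Fin n) (Fin n) ℂ := sC * T * sC with hM'
  set N' : Matrix (Fin n) (Fin n) ℂ := sC * fm hTh f * sC with hN'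
  set B : Matrix (Fin n) (Fin n) ℂ := r * C * r with hB
  have e1 : (sC * st) * (sC * st)ᴴ = M' := by
    rw [Matrix.conjTranspose_mul, hsCh.eq, hsth.eq, hM']
    calc sC * st * (st * sC) = sC * (st * st) * sC := by simp only [Matrix.mul_assoc]
      _ = sC * T * sC := by rw [hstst]
  have e2 : (sC * st)ᴴ * (sC * st) = Z := by
    rw [Matrix.conjTranspose_mul, hsCh.eq, hsth.eq]
    calc st * sC * (sC * st) = st * (sC * sC) * st := by simp only [Matrix.mul_assoc]
      _ = st * C * st := by rw [hsCsC]
      _ = Z := hstCst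
  have hM'h : M'.IsHermitian := by
    rw [← e1]
    exact Matrix.isHermitian_mul_conjTranspose_self _
  have e3 : (sC * r) * (sC * r)ᴴ = N' := by
    rw [Matrix.conjTranspose_mul, hsCh.eq, hrh.eq, hN']
    calc sC * r * (r * sC) = sC * (r * r) * sC := by simp only [Matrix.mul_assoc]
      _ = sC * fm hTh f * sC := by rw [hrr]
  have e4 : (sC * r)ᴴ * (sC * r) = B := by
    rw [Matrix.conjTranspose_mul, hsCh.eq, hrh.eq, hB]
    calc r * sC * (sC * r) = r * (sC * sC) * r := by simp only [Matrix.mul_assoc]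
      _ = r * C * r := by rw [hsCsC]
  have hN'h : N'.IsHermitian := by
    rw [← e3]
    exact Matrix.isHermitian_mul_conjTranspose_self _
  have hBh : B.IsHermitian := by
    rw [← e4]
    exact Matrix.isHermitian_conjTranspose_mul_self _
  have hsEigM' : sEig hM'h = sEig hZh := by
    calc sEig hM'h
        = sEig (Matrix.isHermitian_mul_conjTranspose_self (sC * st)) :=
          sEig_congr _ _ e1.symm
      _ = sEig (Matrix.isHermitian_conjTranspose_mul_self (sC * st)) :=
          sEig_flip (sC * st) _ _
      _ = sEig hZh := sEig_congr _ _ e2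
  have hsEigN' : sEig hN'h = sEig hBh := by
    calc sEig hN'h
        = sEig (Matrix.isHermitian_mul_conjTranspose_self (sC * r)) :=
          sEig_congr _ _ e3.symm
      _ = sEig (Matrix.isHermitian_conjTranspose_mul_self (sC * r)) :=
          sEig_flip (sC * r) _ _
      _ = sEig hBh := sEig_congr _ _ e4
  -- 1 - C is PSD
  have hwTw : w * T * w = fm hTh (fun t => ((Real.sqrt t)⁻¹ * t) * (Real.sqrt t)⁻¹) := by
    have e : w * fm hTh (fun t => t) * w
        = fm hTh (fun t => ((Real.sqrt t)⁻¹ * t) * (Real.sqrt t)⁻¹) := by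
      rw [hw, fm_mul, fm_mul]
    rw [fm_id] at e
    exact e
  have honeC : (1 : Matrix (Fin n) (Fin n) ℂ) - C
      = fm hTh (fun t => 1 - ((Real.sqrt t)⁻¹ * t) * (Real.sqrt t)⁻¹) + w * O * w := by
    have hq : w * T * w = C + w * O * w := by
      rw [hsum, hC, Matrix.mul_add, Matrix.add_mul]
    have h2 : fm hTh (fun t => 1 - ((Real.sqrt t)⁻¹ * t) * (Real.sqrt t)⁻¹)
        = 1 - w * T * w := by
      rw [hwTw, ← fm_one hTh, fm_sub]
    rw [h2, hq]
    abel
  have h1Cpsd : ((1 : Matrix (Fin n) (Fin n) ℂ) - C).PosSemidef := by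
    rw [honeC]
    refine Matrix.PosSemidef.add ?_ ?_
    · refine fm_psd hTh fun i => ?_
      rcases q_cases _ (hTev i) with ⟨_, h0⟩ | ⟨_, h1'⟩
      · rw [h0]; norm_num
      · rw [h1']; norm_num
    · have := hO.conjTranspose_mul_mul_same w
      rwa [hwh.eq] at this
  -- the eigenvalue comparison
  have hcomp : ∀ k, sEig (fm_herm hZh f) k ≤ sEig hBh k := by
    intro k
    have hm0 : 0 ≤ sEig hZh k := hZev k
    obtain ⟨s, hs0, ha0, hineq⟩ := subgrad hfmono hfconv hf0 hm0
    set m : ℝ := sEig hZh k with hm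
    set a : ℝ := f m - s * m with haeq
    have hD : (fm hTh (fun t => f t - (a + s * t))).PosSemidef := by
      refine fm_psd hTh fun i => ?_
      have := hineq (sEig hTh i) (hTev i)
      rw [haeq]
      linarith
    have hNM : (N' - (((a : ℝ) : ℂ) • (1 : Matrix (Fin n) (Fin n) ℂ)
        + ((s : ℝ) : ℂ) • M')).PosSemidef := by
      have hid : fm hTh (fun t => f t - (a + s * t))
          = fm hTh f - (((a : ℝ) : ℂ) • 1 + ((s : ℝ) : ℂ) • T) := by
        have ha1 : (((a : ℝ) : ℂ) • (1 : Matrix (Fin n) (Fin n) ℂ)) = fm hTh (fun _ => a) :=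
          (fm_const hTh a).symm
        have hsT : (((s : ℝ) : ℂ) • T) = fm hTh (fun t => s * t) := by
          have h2 := fm_smul hTh s (fun t => t)
          rw [fm_id] at h2
          rw [← h2, smul_mul_assoc, one_mul]
        rw [ha1, hsT, fm_add, fm_sub]
      have hconj : (sC * (fm hTh f - (((a : ℝ) : ℂ) • 1 + ((s : ℝ) : ℂ) • T)) * sC).PosSemidef := by
        rw [← hid]
        have := hD.conjTranspose_mul_mul_same sC
        rwa [hsCh.eq] at this
      have hexp : sC * (fm hTh f - (((a : ℝ) : ℂ) • 1 + ((s : ℝ) : ℂ) • T)) * sC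
          = N' - (((a : ℝ) : ℂ) • C + ((s : ℝ) : ℂ) • M') := by
        rw [Matrix.mul_sub, Matrix.sub_mul, Matrix.mul_add, Matrix.add_mul, hN', hM']
        congr 2
        · rw [mul_smul_comm, smul_mul_assoc, mul_one, hsCsC]
        · rw [mul_smul_comm, smul_mul_assoc]
      have hfinal : N' - (((a : ℝ) : ℂ) • 1 + ((s : ℝ) : ℂ) • M')
          = (N' - (((a : ℝ) : ℂ) • C + ((s : ℝ) : ℂ) • M'))
            + (((-a : ℝ) : ℂ) • ((1 : Matrix (Fin n) (Fin n) ℂ) - C)) := by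
        rw [Complex.ofReal_neg, neg_smul, smul_sub]
        abel
      rw [hfinal]
      refine Matrix.PosSemidef.add ?_ (psd_smul h1Cpsd (by linarith))
      rw [← hexp]
      exact hconj
    have hkey := sEig_le_sEig hM'h hN'h a s hs0 hNM k
    have hfm : sEig (fm_herm hZh f) k = f m := by
      have hmono2 : Monotone (fun i => f (sEig hZh i)) := by
        intro i j hij
        exact hfmono (Set.mem_Ici.mpr (hZev i)) (Set.mem_Ici.mpr (hZev j))
          (sEig_mono hZh hij)
      rw [sEig_fm hZh f hmono2]
    rw [hfm]
    rw [hsEigM'] at hkey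
    rw [← hsEigN']
    have h6 : a + s * m = f m := by rw [haeq]; ring
    rw [← hm, h6] at hkey
    exact hkey
  obtain ⟨U, hU, hpsd⟩ := exists_unitary_conj_le (fm_herm hZh f) hBh hcomp
  refine ⟨U, hU, ?_⟩
  rw [hB, hC] at hpsd
  exact hpsd

end SubaddAux

open SubaddAux in
/-- **[BL, Corollary 3.2].** If `X, Y` are positive semidefinite `n`-by-`n` matrices and `g`
is a nondecreasing convex continuous function on `[0,∞)` with `g(0) ≤ 0`, then
`g(X+Y) ≥ U₀ g(X) U₀* + V₀ g(Y) V₀*` for some unitaries `U₀, V₀`. Here `g` is applied to a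
positive semidefinite matrix via the (continuous) functional calculus `cfc`. -/
theorem subadditivity_unitary_orbits_convex {n : ℕ} (X Y : Matrix (Fin n) (Fin n) ℂ)
    (hX : X.PosSemidef) (hY : Y.PosSemidef) (g : ℝ → ℝ)
    (hg_cont : ContinuousOn g (Set.Ici 0)) (hg_mono : MonotoneOn g (Set.Ici 0))
    (hg_conv : ConvexOn ℝ (Set.Ici 0) g) (hg0 : g 0 ≤ 0) :
    ∃ U₀ V₀ : Matrix (Fin n) (Fin n) ℂ,
      U₀ ∈ Matrix.unitaryGroup (Fin n) ℂ ∧ V₀ ∈ Matrix.unitaryGroup (Fin n) ℂ ∧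
      (cfc g (X + Y) - (U₀ * cfc g X * U₀ᴴ + V₀ * cfc g Y * V₀ᴴ)).PosSemidef := by
  classical
  have hT : (X + Y).PosSemidef := hX.add hY
  have hTh : (X + Y).IsHermitian := hT.isHermitian
  set a₀ : ℝ := g 0 with ha₀def
  set f : ℝ → ℝ := fun t => g t - a₀ with hfdef
  have hf0 : f 0 = 0 := by simp [hfdef, ha₀def]
  have hfmono : MonotoneOn f (Set.Ici 0) := by
    intro x hx y hy hxy
    simp only [hfdef]
    have := hg_mono hx hy hxy
    linarith
  have hfconv : ConvexOn ℝ (Set.Ici 0) f := by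
    refine ⟨hg_conv.1, ?_⟩
    intro x hx y hy p q hp hq hpq
    simp only [hfdef, smul_eq_mul]
    have h2 := hg_conv.2 hx hy hp hq hpq
    simp only [smul_eq_mul] at h2
    have h3 : p * a₀ + q * a₀ = a₀ := by rw [← add_mul, hpq, one_mul]
    linarith
  obtain ⟨U, hU, hUpsd⟩ := side_step hT hX hY rfl hfmono hfconv hf0
  obtain ⟨V, hV, hVpsd⟩ := side_step hT hY hX (add_comm X Y) hfmono hfconv hf0
  refine ⟨U, V, hU, hV, ?_⟩
  set w : Matrix (Fin n) (Fin n) ℂ := fm hTh (fun t => (Real.sqrt t)⁻¹) with hw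
  set r : Matrix (Fin n) (Fin n) ℂ := fm hTh (fun t => Real.sqrt (f t)) with hr
  set BX : Matrix (Fin n) (Fin n) ℂ := r * (w * X * w) * r with hBX
  set BY : Matrix (Fin n) (Fin n) ℂ := r * (w * Y * w) * r with hBY
  have hfnn : ∀ t : ℝ, 0 ≤ t → 0 ≤ f t := fun t ht => by
    rw [← hf0]
    exact hfmono (Set.mem_Ici.mpr le_rfl) (Set.mem_Ici.mpr ht) ht
  have hTev : ∀ i, 0 ≤ sEig hTh i := fun i => hT.eigenvalues_nonneg _
  -- fm g = fm f + a₀ • 1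
  have hgf : ∀ (A : Matrix (Fin n) (Fin n) ℂ) (hA : A.IsHermitian),
      fm hA g = fm hA f + ((a₀ : ℝ) : ℂ) • 1 := by
    intro A hA
    have h1 : fm hA f + fm hA (fun _ => a₀) = fm hA (fun t => f t + a₀) := fm_add hA _ _
    have h2 : fm hA (fun t => f t + a₀) = fm hA g :=
      fm_congr hA fun i => by simp [hfdef]
    rw [← fm_const hA a₀, h1, h2]
  -- the sum bound
  have hsumB : (fm hTh f - (BX + BY)).PosSemidef := by
    have hdist : BX + BY = r * (w * (X + Y) * w) * r := by
      simp only [hBX, hBY, Matrix.mul_add, Matrix.add_mul]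
    have hq : w * (X + Y) * w = fm hTh (fun t => ((Real.sqrt t)⁻¹ * t) * (Real.sqrt t)⁻¹) := by
      have e : w * fm hTh (fun t => t) * w
          = fm hTh (fun t => ((Real.sqrt t)⁻¹ * t) * (Real.sqrt t)⁻¹) := by
        rw [hw, fm_mul, fm_mul]
      rw [fm_id] at e
      exact e
    have hrqr : r * fm hTh (fun t => ((Real.sqrt t)⁻¹ * t) * (Real.sqrt t)⁻¹) * r
        = fm hTh (fun t => (Real.sqrt (f t) * (((Real.sqrt t)⁻¹ * t) * (Real.sqrt t)⁻¹))
            * Real.sqrt (f t)) := by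
      rw [hr, fm_mul, fm_mul]
    rw [hdist, hq, hrqr, fm_sub]
    refine fm_psd hTh fun i => ?_
    rcases q_cases _ (hTev i) with ⟨h0, hq0⟩ | ⟨hpos, hq1⟩
    · rw [hq0, h0, hf0]
      norm_num
    · rw [hq1]
      have : Real.sqrt (f (sEig hTh i)) * 1 * Real.sqrt (f (sEig hTh i)) = f (sEig hTh i) := by
        rw [mul_one]
        exact Real.mul_self_sqrt (hfnn _ (hTev i))
      rw [this]
      norm_num
  -- unitary conjugation of scalar matrices
  have hconjscal : ∀ W : Matrix (Fin n) (Fin n) ℂ, W ∈ Matrix.unitaryGroup (Fin n) ℂ →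
      W * (((a₀ : ℝ) : ℂ) • (1 : Matrix (Fin n) (Fin n) ℂ)) * Wᴴ = ((a₀ : ℝ) : ℂ) • 1 := by
    intro W hW
    rw [mul_smul_comm, mul_one, smul_mul_assoc]
    congr 1
    rw [← Matrix.star_eq_conjTranspose]
    exact Matrix.mem_unitaryGroup_iff.mp hW
  -- put everything together
  have hcfcT : cfc g (X + Y) = fm hTh g := cfc_eq_fm hTh g
  have hcfcX : cfc g X = fm hX.isHermitian g := cfc_eq_fm hX.isHermitian g
  have hcfcY : cfc g Y = fm hY.isHermitian g := cfc_eq_fm hY.isHermitian g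
  have hfinal : cfc g (X + Y) - (U * cfc g X * Uᴴ + V * cfc g Y * Vᴴ)
      = (fm hTh f - (BX + BY))
        + ((BX - U * fm hX.isHermitian f * Uᴴ) + (BY - V * fm hY.isHermitian f * Vᴴ))
        + ((-a₀ : ℝ) : ℂ) • (1 : Matrix (Fin n) (Fin n) ℂ) := by
    rw [hcfcT, hcfcX, hcfcY, hgf _ hTh, hgf _ hX.isHermitian, hgf _ hY.isHermitian]
    rw [Matrix.mul_add, Matrix.add_mul, hconjscal U hU, Matrix.mul_add, Matrix.add_mul,
      hconjscal V hV]
    rw [Complex.ofReal_neg, neg_smul]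
    abel
  rw [hfinal]
  refine Matrix.PosSemidef.add (Matrix.PosSemidef.add hsumB ?_) ?_
  · exact Matrix.PosSemidef.add hUpsd hVpsd
  · exact psd_smul Matrix.PosSemidef.one (by linarith)
end
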